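/- arXiv:2604.21818 — 9 statements merged into one kernel-verified Lean document; each statement's English description precedes it below -/
import Mathlib

section
/- Suppose S*A^π is t-nilpotent, i.e. (S*A^π)^t = 0, and that S*A^π*Y*A^e = 0. Then S has a Drazin inverse, given by S^D = −Σ_{i=0}^{t−2} (X^{i+2} − A^π*Y*X^{i+3})*Y*A^π*S^i + X − A^π*Y*X^2. -/
open Matrix Finset

/-- `X` is a Drazin inverse of the square matrix `M`: `X*M*X = X`, `M*X = X*M`,
and `M^(l+1)*X = M^l` for some natural number `l`. -/
def IsDrazinInverse {n : Type*} [Fintype n] [DecidableEq n]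
    (M X : Matrix n n ℂ) : Prop :=
  X * M * X = X ∧ M * X = X * M ∧ ∃ l : ℕ, M ^ (l + 1) * X = M ^ l

section Aux
variable {n : Type*} [Fintype n] [DecidableEq n]

private lemma drazin_transpose {M X : Matrix n n ℂ} (h : IsDrazinInverse M X) :
    IsDrazinInverse Mᵀ Xᵀ := by
  obtain ⟨h1, h2, l, h3⟩ := h
  refine ⟨?_, ?_, l, ?_⟩
  · rw [← transpose_mul, ← transpose_mul, ← mul_assoc, h1]
  · rw [← transpose_mul, ← transpose_mul, h2]
  · have hc : Commute M X := h2
    have := (hc.pow_left (l+1)).eq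
    rw [← transpose_pow, ← transpose_pow, ← transpose_mul, ← this, h3]

private lemma drazin_add (P Q W : Matrix n n ℂ) (hW : IsDrazinInverse P W)
    (hQP : Q * P = 0) (t : ℕ) (hQt : Q ^ t = 0) :
    IsDrazinInverse (P + Q) (∑ i ∈ range t, W ^ (i + 1) * Q ^ i) := by
  obtain ⟨h1, h2, l, h3⟩ := hW
  cases t with
  | zero =>
      have h0 : (0 : Matrix n n ℂ) = 1 := by simpa using hQt.symm
      haveI : Subsingleton (Matrix n n ℂ) := subsingleton_of_zero_eq_one h0
      exact ⟨Subsingleton.elim _ _, Subsingleton.elim _ _, 0, Subsingleton.elim _ _⟩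
  | succ s =>
    set Z := ∑ i ∈ range (s+1), W ^ (i+1) * Q ^ i with hZ
    have hPWW : P * W * W = W := by rw [h2, h1]
    have hQW : Q * W = 0 := by
      have h' : Q * (P * W * W) = 0 := by
        rw [← mul_assoc, ← mul_assoc, hQP, zero_mul, zero_mul]
      rwa [hPWW] at h'
    have hQsW : ∀ i, Q ^ (i+1) * W = 0 := fun i => by
      rw [pow_succ, mul_assoc, hQW, mul_zero]
    have hQsP : ∀ i, Q ^ (i+1) * P = 0 := fun i => by
      rw [pow_succ, mul_assoc, hQP, mul_zero]
    have hPW2 : ∀ i, P * W ^ (i+2) = W ^ (i+1) := fun i => by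
      have e1 : W ^ (i+2) = W * W * W ^ i := by
        rw [pow_succ' W, pow_succ' W, mul_assoc]
      rw [e1, ← mul_assoc, ← mul_assoc, hPWW, ← pow_succ' W]
    have hZP : Z * P = W * P := by
      rw [hZ, Finset.sum_mul, Finset.sum_range_succ']
      have h' : ∀ i, W ^ (i+1+1) * Q ^ (i+1) * P = 0 := fun i => by
        rw [mul_assoc, hQsP, mul_zero]
      simp [h']
    set T := ∑ i ∈ range s, W ^ (i+1) * Q ^ (i+1) with hT
    have hZQ : Z * Q = T := by
      rw [hZ, Finset.sum_mul, Finset.sum_range_succ]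
      simp only [mul_assoc, ← pow_succ]
      rw [hQt, mul_zero, add_zero, hT]
    have hPZ : P * Z = P * W + T := by
      rw [hZ, Finset.mul_sum, Finset.sum_range_succ']
      have h' : ∀ i, P * (W ^ (i+1+1) * Q ^ (i+1)) = W ^ (i+1) * Q ^ (i+1) := fun i => by
        rw [← mul_assoc, hPW2]
      simp only [h']
      rw [hT]
      simp [add_comm]
    have hQZ : Q * Z = 0 := by
      rw [hZ, Finset.mul_sum]
      refine Finset.sum_eq_zero fun i _ => ?_
      have h' : Q * W ^ (i+1) = 0 := by
        rw [pow_succ' W, ← mul_assoc, hQW, zero_mul]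
      rw [← mul_assoc, h', zero_mul]
    have hNZ : (P + Q) * Z = P * W + T := by rw [add_mul, hPZ, hQZ, add_zero]
    have hZN : Z * (P + Q) = P * W + T := by rw [mul_add, hZP, hZQ, h2]
    have hQpZ : ∀ i, Q ^ (i+1) * Z = 0 := fun i => by
      rw [pow_succ, mul_assoc, hQZ, mul_zero]
    have hTZ : T * Z = 0 := by
      rw [hT, Finset.sum_mul]
      exact Finset.sum_eq_zero fun i _ => by rw [mul_assoc, hQpZ, mul_zero]
    have hZdecomp : W + W * T = Z := by
      rw [hZ, hT, Finset.mul_sum, Finset.sum_range_succ']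
      have h' : ∀ i, W * (W ^ (i+1) * Q ^ (i+1)) = W ^ (i+1+1) * Q ^ (i+1) := fun i => by
        rw [← mul_assoc, ← pow_succ' W]
      simp only [h']
      simp [add_comm]
    have hax1 : Z * (P + Q) * Z = Z := by
      rw [hZN, add_mul, hTZ, add_zero, h2, mul_assoc, hPZ, mul_add, ← mul_assoc, h1, hZdecomp]
    have hax2 : (P + Q) * Z = Z * (P + Q) := by rw [hNZ, hZN]
    have hQPW : ∀ k, Q * (P ^ k * W) = 0 := by
      intro k; cases k with
      | zero => simpa using hQW
      | succ j => rw [pow_succ' P, mul_assoc, ← mul_assoc Q, hQP, zero_mul]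
    have hNW : ∀ k, (P + Q) ^ k * W = P ^ k * W := by
      intro k; induction k with
      | zero => simp
      | succ j ih =>
          rw [pow_succ' (P+Q), mul_assoc, ih, add_mul, hQPW, add_zero, ← mul_assoc,
            ← pow_succ' P]
    have hPaW : ∀ a, P ^ (l + a + 1) * W = P ^ (l + a) := by
      intro a
      rw [show l + a + 1 = a + (l+1) from by omega, pow_add, mul_assoc, h3, ← pow_add,
        show a + l = l + a from by omega]
    have hPWj : ∀ j a, P ^ (l + a + j) * W ^ j = P ^ (l + a) := by
      intro j
      induction j with
      | zero => intro a; simp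
      | succ i ih =>
        intro a
        rw [pow_succ' W, ← mul_assoc, show l + a + (i+1) = l + (a + i) + 1 from by omega,
          hPaW (a+i), show l + (a + i) = l + a + i from by omega, ih a]
    have hbinom : ∀ k, (P + Q) ^ k = ∑ j ∈ range (k+1), P ^ (k - j) * Q ^ j := by
      intro k; induction k with
      | zero => simp
      | succ m ih =>
        rw [pow_succ, ih, Finset.sum_mul]
        have h' : ∀ j, (P ^ (m - j) * Q ^ j) * (P + Q)
            = P ^ (m - j) * (Q ^ j * P) + P ^ (m - j) * (Q ^ (j+1)) := by
          intro j; rw [mul_add, mul_assoc, mul_assoc, ← pow_succ]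
        simp only [h']
        rw [Finset.sum_add_distrib]
        have h1' : ∑ j ∈ range (m+1), P ^ (m - j) * (Q ^ j * P) = P ^ (m+1) := by
          rw [Finset.sum_range_succ']
          have h'' : ∀ i, P ^ (m - (i+1)) * (Q ^ (i+1) * P) = 0 := fun i => by
            rw [hQsP, mul_zero]
          simp [h'', ← pow_succ]
        rw [h1']
        conv_rhs => rw [Finset.sum_range_succ']
        have h2' : ∀ i, P ^ (m + 1 - (i+1)) * Q ^ (i+1) = P ^ (m - i) * Q ^ (i+1) := by
          intro i; congr 2; omega
        simp only [h2']
        simp [add_comm]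
    have hQbig : ∀ j, s + 1 ≤ j → Q ^ j = 0 := by
      intro j hj
      obtain ⟨d, rfl⟩ := Nat.exists_eq_add_of_le hj
      rw [pow_add, hQt, zero_mul]
    refine ⟨hax1, hax2, l + s + 1, ?_⟩
    have hNm : (P + Q) ^ (l + s + 1)
        = ∑ j ∈ range s, P ^ (l + s - j) * Q ^ (j+1) + P ^ (l + s + 1) := by
      rw [hbinom]
      rw [← Finset.sum_subset (Finset.range_subset_range.mpr (show s + 1 ≤ l + s + 1 + 1 by omega))
        (fun x _ hnx => by
          rw [hQbig x (by simpa using hnx), mul_zero])]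
      rw [Finset.sum_range_succ']
      have h' : ∀ j, P ^ (l + s + 1 - (j+1)) * Q ^ (j+1) = P ^ (l + s - j) * Q ^ (j+1) := by
        intro j; congr 2; omega
      simp only [h']
      simp
    rw [pow_succ, mul_assoc, hNZ, mul_add]
    have hA : (P+Q) ^ (l+s+1) * (P * W) = P ^ (l+s+1) := by
      rw [h2, ← mul_assoc, hNW, mul_assoc, ← h2, ← mul_assoc, ← pow_succ,
        show l + s + 1 + 1 = l + (s+1) + 1 from by omega, hPaW (s+1),
        show l + (s+1) = l + s + 1 from by omega]
    have hB : (P+Q) ^ (l+s+1) * T = ∑ j ∈ range s, P ^ (l + s - j) * Q ^ (j+1) := by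
      rw [hT, Finset.mul_sum]
      refine Finset.sum_congr rfl fun j hj => ?_
      have hj' : j < s := Finset.mem_range.mp hj
      rw [← mul_assoc]
      have h' : (P+Q) ^ (l+s+1) * W ^ (j+1) = P ^ (l + s - j) := by
        rw [pow_succ' W, ← mul_assoc, hNW, mul_assoc, ← pow_succ' W,
          show l + s + 1 = l + (s - j) + (j+1) from by omega, hPWj (j+1) (s-j),
          show l + (s - j) = l + s - j from by omega]
      rw [h']
    rw [hA, hB, hNm, add_comm]

end Aux

theorem stmt0
    {p q : Type*} [Fintype p] [DecidableEq p] [Fintype q] [DecidableEq q]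
    (A AD : Matrix p p ℂ) (D DD : Matrix q q ℂ)
    (B : Matrix q p ℂ) (C : Matrix p q ℂ)
    (hA : IsDrazinInverse A AD) (hD : IsDrazinInverse D DD)
    (Y S Ae Aπ SAe : Matrix p p ℂ)
    (hY : Y = C * DD * B) (hS : S = A - Y)
    (hAe : Ae = A * AD) (hAπ : Aπ = 1 - A * AD)
    (hSAe : SAe = Ae * S * Ae)
    (X : Matrix p p ℂ) (hX : IsDrazinInverse SAe X)
    (t : ℕ) (hnil : (S * Aπ) ^ t = 0)
    (hcond : S * Aπ * Y * Ae = 0) :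
    IsDrazinInverse S
      (-(∑ i ∈ Finset.range (t - 1),
          (X ^ (i + 2) - Aπ * Y * X ^ (i + 3)) * Y * Aπ * S ^ i)
        + X - Aπ * Y * X ^ 2) := by
  obtain ⟨hA1, hA2, -⟩ := id hA
  obtain ⟨hX1, hX2, -⟩ := id hX
  -- basic idempotent identities
  have hπ : Aπ = 1 - Ae := by rw [hAπ, hAe]
  have heA : Ae * A = A * Ae := by rw [hAe, mul_assoc, ← hA2, ← mul_assoc]
  have hee : Ae * Ae = Ae := by rw [hAe, mul_assoc, ← mul_assoc AD A AD, hA1]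
  have hfe : Aπ * Ae = 0 := by rw [hπ, sub_mul, one_mul, hee, sub_self]
  have hef : Ae * Aπ = 0 := by rw [hπ, mul_sub, mul_one, hee, sub_self]
  have hsum : Ae + Aπ = 1 := by rw [hπ]; abel
  have hfAe : Aπ * A * Ae = 0 := by
    have h' : Aπ * A = A * Aπ := by
      rw [hπ, sub_mul, one_mul, heA, mul_sub, mul_one]
    rw [h', mul_assoc, hfe, mul_zero]
  have heAf : Ae * A * Aπ = 0 := by rw [heA, mul_assoc, hef, mul_zero]
  have hYAS : Y = A - S := by rw [hS]; abel
  have hYe : Aπ * Y * Ae = -(Aπ * S * Ae) := by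
    rw [hYAS, mul_sub, sub_mul, hfAe, zero_sub]
  have heYf : Ae * Y * Aπ = -(Ae * S * Aπ) := by
    rw [hYAS, mul_sub, sub_mul, heAf, zero_sub]
  -- X identities
  have hMe : SAe * Ae = SAe := by rw [hSAe, mul_assoc, hee]
  have heM : Ae * SAe = SAe := by rw [hSAe, ← mul_assoc, ← mul_assoc, hee]
  have hXXM : X * X * SAe = X := by rw [mul_assoc, ← hX2, ← mul_assoc, hX1]
  have hMXX : SAe * X * X = X := by rw [hX2]; exact hX1
  have hXe : X * Ae = X := by
    calc X * Ae = (X * X * SAe) * Ae := by rw [hXXM]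
    _ = X * X * (SAe * Ae) := by rw [mul_assoc]
    _ = X := by rw [hMe, hXXM]
  have heX : Ae * X = X := by
    calc Ae * X = Ae * (SAe * X * X) := by rw [hMXX]
    _ = Ae * SAe * X * X := by rw [← mul_assoc, ← mul_assoc]
    _ = X := by rw [heM, hMXX]
  have hXf : X * Aπ = 0 := by rw [hπ, mul_sub, mul_one, hXe, sub_self]
  have hfX : Aπ * X = 0 := by rw [hπ, sub_mul, one_mul, heX, sub_self]
  -- powers of X
  have hXke : ∀ k, 1 ≤ k → X ^ k * Ae = X ^ k := by
    intro k hk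
    cases k with
    | zero => omega
    | succ j => rw [pow_succ, mul_assoc, hXe]
  have heXk : ∀ k, 1 ≤ k → Ae * X ^ k = X ^ k := by
    intro k hk
    cases k with
    | zero => omega
    | succ j => rw [pow_succ' X, ← mul_assoc, heX]
  have hXkf : ∀ k, 1 ≤ k → X ^ k * Aπ = 0 := by
    intro k hk
    cases k with
    | zero => omega
    | succ j => rw [pow_succ, mul_assoc, hXf, mul_zero]
  -- Y elimination lemmas
  have hfYX : ∀ k, 1 ≤ k → Aπ * Y * X ^ k = -(Aπ * S * X ^ k) := by
    intro k hk
    calc Aπ * Y * X ^ k = Aπ * Y * Ae * X ^ k := by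
          rw [mul_assoc (Aπ * Y) Ae (X ^ k), heXk k hk]
    _ = -(Aπ * S * Ae) * X ^ k := by rw [hYe]
    _ = -(Aπ * S * (Ae * X ^ k)) := by rw [neg_mul, mul_assoc]
    _ = -(Aπ * S * X ^ k) := by rw [heXk k hk]
  have hXYf : ∀ k, 1 ≤ k → X ^ k * (Y * Aπ) = -(X ^ k * (S * Aπ)) := by
    intro k hk
    calc X ^ k * (Y * Aπ) = (X ^ k * Ae) * (Y * Aπ) := by rw [hXke k hk]
    _ = X ^ k * (Ae * Y * Aπ) := by rw [mul_assoc, ← mul_assoc Ae Y Aπ]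
    _ = X ^ k * (-(Ae * S * Aπ)) := by rw [heYf]
    _ = -(X ^ k * Ae * (S * Aπ)) := by rw [mul_neg, mul_assoc (X ^ k) Ae (S * Aπ),
          ← mul_assoc Ae S Aπ, ← mul_assoc]
    _ = -(X ^ k * (S * Aπ)) := by rw [hXke k hk]
  -- nilpotent-part structure
  have hSfSe : S * Aπ * S * Ae = 0 := by
    have hfSe : Aπ * S * Ae = -(Aπ * Y * Ae) := by rw [hYe, neg_neg]
    have h1' : S * Aπ * S * Ae = S * (Aπ * S * Ae) := by simp only [mul_assoc]
    rw [h1', hfSe, mul_neg, ← mul_assoc, ← mul_assoc, hcond, neg_zero]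
  have hkey : S * Aπ * S = (S * Aπ) * (S * Aπ) := by
    conv_lhs => rw [← mul_one (S * Aπ * S), ← hsum]
    rw [mul_add, hSfSe, zero_add, mul_assoc]
  have hSfS : ∀ i, (S * Aπ) * S ^ i = (S * Aπ) ^ (i+1) := by
    intro i; induction i with
    | zero => simp
    | succ j ih =>
      rw [pow_succ' S, ← mul_assoc, hkey, mul_assoc, ih, ← pow_succ']
  -- Step 1: Drazin inverse of S * Ae
  have hMR : SAe * (Aπ * S * Ae) = 0 := by
    have h' : SAe * (Aπ * S * Ae) = Ae * (S * ((Ae * Aπ) * (S * Ae))) := by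
      rw [hSAe]; simp only [mul_assoc]
    rw [h', hef, zero_mul, mul_zero, mul_zero]
  have hRR : (Aπ * S * Ae) * (Aπ * S * Ae) = 0 := by
    have h' : (Aπ * S * Ae) * (Aπ * S * Ae) = Aπ * (S * ((Ae * Aπ) * (S * Ae))) := by
      simp only [mul_assoc]
    rw [h', hef, zero_mul, mul_zero, mul_zero]
  have hVD : IsDrazinInverse (S * Ae) (X + Aπ * S * X ^ 2) := by
    have ht := drazin_transpose hX
    have h2' := drazin_add SAeᵀ (Aπ * S * Ae)ᵀ Xᵀ ht
      (by rw [← transpose_mul, hMR, transpose_zero]) 2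
      (by rw [pow_two, ← transpose_mul, hRR, transpose_zero])
    have h3' := drazin_transpose h2'
    have he1 : (SAeᵀ + (Aπ * S * Ae)ᵀ)ᵀ = S * Ae := by
      rw [transpose_add, transpose_transpose, transpose_transpose, hSAe,
        ← add_mul, ← add_mul, hsum, one_mul]
    have he2 : (∑ i ∈ range 2, (Xᵀ) ^ (i+1) * ((Aπ * S * Ae)ᵀ) ^ i)ᵀ
        = X + Aπ * S * X ^ 2 := by
      rw [Finset.sum_range_succ, Finset.sum_range_succ, Finset.sum_range_zero]
      simp only [pow_zero, mul_one, pow_one, zero_add, transpose_add, transpose_mul,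
        transpose_transpose, ← transpose_pow]
      rw [show (1+1 : ℕ) = 2 from rfl, mul_assoc (Aπ * S) Ae, heXk 2 (by omega)]
    rw [he1, he2] at h3'
    exact h3'
  -- Step 2: Drazin inverse of S
  set V := X + Aπ * S * X ^ 2 with hV
  have hQP2 : (S * Aπ) * (S * Ae) = 0 := by rw [← mul_assoc]; exact hSfSe
  have hmain := drazin_add (S * Ae) (S * Aπ) V hVD hQP2 t hnil
  have hSsum : S * Ae + S * Aπ = S := by rw [← mul_add, hsum, mul_one]
  rw [hSsum] at hmain
  -- t = 0 edge case
  cases t with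
  | zero =>
      have h0 : (0 : Matrix p p ℂ) = 1 := by simpa using hnil.symm
      haveI : Subsingleton (Matrix p p ℂ) := subsingleton_of_zero_eq_one h0
      exact ⟨Subsingleton.elim _ _, Subsingleton.elim _ _, 0, Subsingleton.elim _ _⟩
  | succ s =>
    -- powers of V
    have hVk : ∀ k, V ^ (k+1) = X ^ (k+1) + Aπ * S * X ^ (k+2) := by
      intro k; induction k with
      | zero => rw [pow_one, pow_one, hV]
      | succ j ih =>
        rw [pow_succ, ih, hV, add_mul, mul_add, mul_add]
        have e1 : X ^ (j+1) * X = X ^ (j+2) := by rw [← pow_succ]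
        have e2 : X ^ (j+1) * (Aπ * S * X ^ 2) = 0 := by
          rw [← mul_assoc, ← mul_assoc, hXkf (j+1) (by omega), zero_mul, zero_mul]
        have e3 : Aπ * S * X ^ (j+2) * X = Aπ * S * X ^ (j+3) := by
          rw [mul_assoc (Aπ * S), ← pow_succ]
        have e4 : Aπ * S * X ^ (j+2) * (Aπ * S * X ^ 2) = 0 := by
          have e4' : X ^ (j+2) * (Aπ * S * X ^ 2) = 0 := by
            rw [← mul_assoc, ← mul_assoc, hXkf (j+2) (by omega), zero_mul, zero_mul]
          rw [mul_assoc (Aπ * S) (X ^ (j+2)), e4', mul_zero]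
        rw [e1, e2, e3, e4, add_zero, add_zero]
    -- the per-term identity
    have hA1g : ∀ i k, 1 ≤ k → X ^ k * ((Y * Aπ) * S ^ i) = -(X ^ k * (S * Aπ) ^ (i+1)) := by
      intro i k hk
      rw [← mul_assoc, hXYf k hk, neg_mul, mul_assoc, hSfS i]
    have hterm : ∀ i, (X ^ (i + 2) - Aπ * Y * X ^ (i + 3)) * Y * Aπ * S ^ i
        = -(V ^ (i+2) * (S * Aπ) ^ (i+1)) := by
      intro i
      have h0 : (X ^ (i + 2) - Aπ * Y * X ^ (i + 3)) * Y * Aπ * S ^ i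
          = X ^ (i+2) * ((Y * Aπ) * S ^ i) - (Aπ * Y * X ^ (i+3)) * ((Y * Aπ) * S ^ i) := by
        rw [sub_mul, sub_mul, sub_mul]
        simp only [mul_assoc]
      have hA2g : (Aπ * Y * X ^ (i+3)) * ((Y * Aπ) * S ^ i)
          = Aπ * S * (X ^ (i+3) * (S * Aπ) ^ (i+1)) := by
        rw [hfYX (i+3) (by omega), neg_mul, mul_assoc (Aπ * S),
          hA1g i (i+3) (by omega), mul_neg, neg_neg]
      rw [h0, hA1g i (i+2) (by omega), hA2g, hVk (i+1),
        show i+1+1 = i+2 from rfl, show i+1+2 = i+3 from rfl,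
        add_mul, neg_add, mul_assoc (Aπ * S), ← sub_eq_add_neg]
    -- assemble the sum
    have hGZ : (-(∑ i ∈ Finset.range (s + 1 - 1),
          (X ^ (i + 2) - Aπ * Y * X ^ (i + 3)) * Y * Aπ * S ^ i)
        + X - Aπ * Y * X ^ 2)
        = ∑ i ∈ range (s+1), V ^ (i+1) * (S * Aπ) ^ i := by
      rw [show s + 1 - 1 = s from rfl]
      rw [Finset.sum_congr rfl (fun i _ => hterm i)]
      rw [Finset.sum_neg_distrib, neg_neg]
      conv_rhs => rw [Finset.sum_range_succ']
      simp only [pow_zero, mul_one, zero_add]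
      rw [pow_one, hV, hfYX 2 (by omega), sub_neg_eq_add]
      simp only [show ∀ i:ℕ, i+1+1 = i+2 from fun i => rfl]
      abel
    rw [hGZ]
    exact hmain
end

section
/- Suppose S*A^π is t-nilpotent, i.e. (S*A^π)^t = 0, and that S*A^e*Y*A^π = 0. Then S has a Drazin inverse, given by S^D = −Σ_{i=0}^{t−1} S^i*A^π*Y*X^{i+2} + X. -/
open Matrix Finset

theorem lemA {R : Type*} [Ring R] (s u n z : R)
    (hs : s = u + n) (hun : u * n = 0)
    (hcm : u * z = z * u) (hzuz : z * u * z = z)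
    (l : ℕ) (hz3 : ∀ d : ℕ, u ^ (l + 2 + d) * z = u ^ (l + 1 + d))
    (t' : ℕ) (hnil : n ^ (t' + 1) = 0) :
    (∑ i ∈ Finset.range (t' + 1), n ^ i * z ^ (i + 1)) * s *
        (∑ i ∈ Finset.range (t' + 1), n ^ i * z ^ (i + 1)) =
      (∑ i ∈ Finset.range (t' + 1), n ^ i * z ^ (i + 1)) ∧
    s * (∑ i ∈ Finset.range (t' + 1), n ^ i * z ^ (i + 1)) =
      (∑ i ∈ Finset.range (t' + 1), n ^ i * z ^ (i + 1)) * s ∧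
    s ^ (l + t' + 2) * (∑ i ∈ Finset.range (t' + 1), n ^ i * z ^ (i + 1)) = s ^ (l + t' + 1) := by
  set W := ∑ i ∈ Finset.range (t' + 1), n ^ i * z ^ (i + 1) with hW
  have hC : Commute u z := hcm
  have hcmp : ∀ k : ℕ, u * z ^ k = z ^ k * u := fun k => (hC.pow_right k).eq
  have hzzu : z * (z * u) = z := by rw [← hcm, ← mul_assoc, hzuz]
  have hzn : z * n = 0 := by
    calc z * n = z * (z * u) * n := by rw [hzzu]
    _ = z * (z * (u * n)) := by rw [mul_assoc, mul_assoc]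
    _ = 0 := by rw [hun, mul_zero, mul_zero]
  have huz2 : u * (z * z) = z := by rw [← mul_assoc, hcm, hzuz]
  have hz5 : ∀ j : ℕ, u * z ^ (j + 2) = z ^ (j + 1) := by
    intro j
    rw [show j + 2 = 2 + j from by omega, pow_add, ← mul_assoc, pow_two, huz2,
      ← pow_succ']
  have hun' : ∀ i : ℕ, u * n ^ (i + 1) = 0 := fun i => by
    rw [pow_succ', ← mul_assoc, hun, zero_mul]
  have hue_n : ∀ e i : ℕ, u ^ (e + 1) * n ^ (i + 1) = 0 := fun e i => by
    rw [pow_succ, mul_assoc, hun' i, mul_zero]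
  have hnt : ∀ j : ℕ, t' + 1 ≤ j → n ^ j = 0 := by
    intro j hj
    obtain ⟨d, rfl⟩ : ∃ d, j = (t' + 1) + d := ⟨j - (t' + 1), by omega⟩
    rw [pow_add, hnil, zero_mul]
  have hzn' : ∀ i : ℕ, z ^ (i + 1) * n = 0 := fun i => by
    rw [pow_succ, mul_assoc, hzn, mul_zero]
  have hWn : W * n = 0 := by
    rw [hW, Finset.sum_mul]
    refine Finset.sum_eq_zero fun i _ => ?_
    rw [mul_assoc, hzn' i, mul_zero]
  have powS : ∀ k : ℕ, s ^ k = ∑ j ∈ Finset.range (k + 1), n ^ j * u ^ (k - j) := by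
    intro k
    induction k with
    | zero => simp
    | succ k ih =>
      rw [pow_succ, ih, Finset.sum_mul]
      have step : ∀ j ∈ Finset.range (k + 1),
          n ^ j * u ^ (k - j) * s = n ^ j * u ^ (k + 1 - j) + n ^ j * (u ^ (k - j) * n) := by
        intro j hj
        rw [Finset.mem_range] at hj
        have h1 : u ^ (k - j) * u = u ^ (k + 1 - j) := by
          rw [← pow_succ, show k - j + 1 = k + 1 - j from by omega]
        rw [hs, mul_add, mul_assoc, h1, mul_assoc]
      rw [Finset.sum_congr rfl step, Finset.sum_add_distrib]
      have h2 : ∑ j ∈ Finset.range (k + 1), n ^ j * (u ^ (k - j) * n) =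
          n ^ (k + 1) * u ^ (k + 1 - (k + 1)) := by
        rw [Finset.sum_range_succ]
        have h3 : ∀ j ∈ Finset.range k, n ^ j * (u ^ (k - j) * n) = 0 := by
          intro j hj
          rw [Finset.mem_range] at hj
          rw [show k - j = (k - j - 1) + 1 from by omega, pow_succ, mul_assoc, hun,
            mul_zero, mul_zero]
        rw [Finset.sum_eq_zero h3, zero_add, Nat.sub_self, Nat.sub_self, pow_zero,
          one_mul, mul_one, ← pow_succ]
      rw [h2, ← Finset.sum_range_succ]
  -- s * W = W * s, both equal E
  have hsW : s * W = u * z + ∑ i ∈ Finset.range t', n ^ (i + 1) * z ^ (i + 1) := by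
    rw [hW, Finset.mul_sum]
    have step : ∀ i ∈ Finset.range (t' + 1),
        s * (n ^ i * z ^ (i + 1)) = u * (n ^ i * z ^ (i + 1)) + n ^ (i + 1) * z ^ (i + 1) := by
      intro i _
      rw [hs, add_mul, pow_succ' n i, mul_assoc]
    rw [Finset.sum_congr rfl step, Finset.sum_add_distrib]
    have h1 : ∑ i ∈ Finset.range (t' + 1), u * (n ^ i * z ^ (i + 1)) = u * z := by
      rw [Finset.sum_range_succ']
      have h2 : ∀ i ∈ Finset.range t', u * (n ^ (i + 1) * z ^ (i + 1 + 1)) = 0 := by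
        intro i _
        rw [← mul_assoc, hun' i, zero_mul]
      rw [Finset.sum_eq_zero h2, zero_add, pow_zero, one_mul, pow_one]
    have h3 : ∑ i ∈ Finset.range (t' + 1), n ^ (i + 1) * z ^ (i + 1) =
        ∑ i ∈ Finset.range t', n ^ (i + 1) * z ^ (i + 1) := by
      rw [Finset.sum_range_succ, hnil, zero_mul, add_zero]
    rw [h1, h3]
  have hWs : W * s = u * z + ∑ i ∈ Finset.range t', n ^ (i + 1) * z ^ (i + 1) := by
    rw [hW, Finset.sum_mul]
    have step : ∀ i ∈ Finset.range (t' + 1),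
        n ^ i * z ^ (i + 1) * s = n ^ i * (u * z ^ (i + 1)) := by
      intro i _
      rw [hs, mul_add, mul_assoc, mul_assoc, hzn' i, mul_zero, add_zero, hcmp]
    rw [Finset.sum_congr rfl step, Finset.sum_range_succ']
    have h2 : ∀ i ∈ Finset.range t',
        n ^ (i + 1) * (u * z ^ (i + 1 + 1)) = n ^ (i + 1) * z ^ (i + 1) := by
      intro i _
      rw [hz5 i]
    rw [Finset.sum_congr rfl h2, pow_zero, one_mul, pow_one, add_comm]
  have cond2 : s * W = W * s := hsW.trans hWs.symm
  have h1 : W * (u * z) = W := by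
    conv_lhs => rw [hW, Finset.sum_mul]
    conv_rhs => rw [hW]
    refine Finset.sum_congr rfl fun i _ => ?_
    rw [mul_assoc, ← mul_assoc (z ^ (i + 1)) u z, ← hcmp (i + 1), mul_assoc,
      ← pow_succ z (i + 1), show i + 1 + 1 = i + 2 from rfl, hz5 i]
  have cond1 : W * s * W = W := by
    rw [mul_assoc, hsW, mul_add, Finset.mul_sum]
    have h2 : ∀ i ∈ Finset.range t', W * (n ^ (i + 1) * z ^ (i + 1)) = 0 := by
      intro i _
      rw [pow_succ' n i, mul_assoc, ← mul_assoc W n, hWn, zero_mul]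
    rw [Finset.sum_eq_zero h2, add_zero, h1]
  have hUW : ∀ e : ℕ, u ^ (e + 1) * W = u ^ (e + 1) * z := by
    intro e
    rw [hW, Finset.mul_sum, Finset.sum_range_succ']
    have h2 : ∀ i ∈ Finset.range t', u ^ (e + 1) * (n ^ (i + 1) * z ^ (i + 1 + 1)) = 0 := by
      intro i _
      rw [← mul_assoc, hue_n e i, zero_mul]
    rw [Finset.sum_eq_zero h2, zero_add, pow_zero, one_mul, pow_one]
  have cond3 : s ^ (l + t' + 2) * W = s ^ (l + t' + 1) := by
    set K := l + t' + 1 with hK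
    have hKt : t' + 1 ≤ K + 1 := by omega
    rw [show l + t' + 2 = K + 1 from by omega, powS (K + 1), Finset.sum_mul]
    have step : ∀ j ∈ Finset.range (K + 2),
        n ^ j * u ^ (K + 1 - j) * W = n ^ j * u ^ (K - j) := by
      intro j hj
      rw [Finset.mem_range] at hj
      by_cases hjt : j ≤ t'
      · have e1 : K + 1 - j = (l + 1 + (t' - j)) + 1 := by omega
        have e2 : K - j = l + 1 + (t' - j) := by omega
        rw [e1, mul_assoc, hUW (l + 1 + (t' - j)),
          show l + 1 + (t' - j) + 1 = l + 2 + (t' - j) from by omega,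
          hz3 (t' - j), e2]
      · rw [hnt j (by omega), zero_mul, zero_mul, zero_mul]
    rw [Finset.sum_congr rfl step, Finset.sum_range_succ, hnt (K + 1) hKt, zero_mul,
      add_zero, ← powS K]
  exact ⟨cond1, cond2, cond3⟩

theorem lemB {R : Type*} [Ring R] (s p x : R) (hp : p * p = p)
    (hx1 : x * (p * s * p) * x = x)
    (hx2 : (p * s * p) * x = x * (p * s * p))
    (l : ℕ) (hx3 : (p * s * p) ^ (l + 1) * x = (p * s * p) ^ l)
    (hcond : s * p * s * (1 - p) = 0)
    (t' : ℕ) (hnil : (s * (1 - p)) ^ (t' + 1) = 0) :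
    ((∑ i ∈ Finset.range (t' + 1), s ^ i * (1 - p) * s * x ^ (i + 2)) + x) * s *
        ((∑ i ∈ Finset.range (t' + 1), s ^ i * (1 - p) * s * x ^ (i + 2)) + x) =
      (∑ i ∈ Finset.range (t' + 1), s ^ i * (1 - p) * s * x ^ (i + 2)) + x ∧
    s * ((∑ i ∈ Finset.range (t' + 1), s ^ i * (1 - p) * s * x ^ (i + 2)) + x) =
      ((∑ i ∈ Finset.range (t' + 1), s ^ i * (1 - p) * s * x ^ (i + 2)) + x) * s ∧
    ∃ k : ℕ, s ^ (k + 1) * ((∑ i ∈ Finset.range (t' + 1), s ^ i * (1 - p) * s * x ^ (i + 2)) + x)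
      = s ^ k := by
  have hpq : p * (1 - p) = 0 := by rw [mul_sub, mul_one, hp, sub_self]
  have hqp : (1 - p) * p = 0 := by rw [sub_mul, one_mul, hp, sub_self]
  have e1 : (p * s * p) * (x * x) = x := by
    calc (p * s * p) * (x * x) = (p * s * p) * x * x := by noncomm_ring
    _ = x * (p * s * p) * x := by rw [hx2]
    _ = x := hx1
  have hpm : p * (p * s * p) = p * s * p := by
    calc p * (p * s * p) = (p * p) * (s * p) := by noncomm_ring
    _ = p * (s * p) := by rw [hp]
    _ = p * s * p := by noncomm_ring
  have hpx : p * x = x := by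
    calc p * x = p * ((p * s * p) * (x * x)) := by rw [e1]
    _ = (p * (p * s * p)) * (x * x) := by noncomm_ring
    _ = (p * s * p) * (x * x) := by rw [hpm]
    _ = x := e1
  have e2 : (x * x) * (p * s * p) = x := by
    calc (x * x) * (p * s * p) = x * (x * (p * s * p)) := by noncomm_ring
    _ = x * ((p * s * p) * x) := by rw [← hx2]
    _ = x := by rw [← mul_assoc, hx1]
  have hmp : (p * s * p) * p = p * s * p := by
    calc (p * s * p) * p = (p * s) * (p * p) := by noncomm_ring
    _ = (p * s) * p := by rw [hp]
    _ = p * s * p := by noncomm_ring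
  have hxp : x * p = x := by
    calc x * p = ((x * x) * (p * s * p)) * p := by rw [e2]
    _ = (x * x) * ((p * s * p) * p) := by noncomm_ring
    _ = (x * x) * (p * s * p) := by rw [hmp]
    _ = x := e2
  have hqx : (1 - p) * x = 0 := by rw [sub_mul, one_mul, hpx, sub_self]
  have hxq : x * (1 - p) = 0 := by rw [mul_sub, mul_one, hxp, sub_self]
  have hmv : (p * s * p) * ((1 - p) * s * p) = 0 := by
    calc (p * s * p) * ((1 - p) * s * p) = (p * s) * ((p * (1 - p)) * (s * p)) := by noncomm_ring
    _ = 0 := by rw [hpq, zero_mul, mul_zero]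
  have hvv : ((1 - p) * s * p) * ((1 - p) * s * p) = 0 := by
    calc ((1 - p) * s * p) * ((1 - p) * s * p)
        = ((1 - p) * s) * ((p * (1 - p)) * (s * p)) := by noncomm_ring
    _ = 0 := by rw [hpq, zero_mul, mul_zero]
  have hxv : x * ((1 - p) * s * p) = 0 := by
    calc x * ((1 - p) * s * p) = (x * (1 - p)) * (s * p) := by noncomm_ring
    _ = 0 := by rw [hxq, zero_mul]
  have hxxv : (x * x) * ((1 - p) * s * p) = 0 := by
    calc (x * x) * ((1 - p) * s * p) = x * (x * ((1 - p) * s * p)) := by noncomm_ring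
    _ = 0 := by rw [hxv, mul_zero]
  have hun : (s * p) * (s * (1 - p)) = 0 := by
    calc (s * p) * (s * (1 - p)) = s * p * s * (1 - p) := by noncomm_ring
    _ = 0 := hcond
  have hnx : (s * (1 - p)) * x = 0 := by
    calc (s * (1 - p)) * x = s * ((1 - p) * x) := by noncomm_ring
    _ = 0 := by rw [hqx, mul_zero]
  have huz : (s * p) * (x + (1 - p) * s * p * (x * x)) = (p * s * p) * x + ((1 - p) * s * p) * x := by
    calc (s * p) * (x + (1 - p) * s * p * (x * x))
        = (p * s * p) * x + ((1 - p) * s * p) * x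
          + ((p * s * p) * ((1 - p) * s * p)) * (x * x)
          + (((1 - p) * s * p) * ((1 - p) * s * p)) * (x * x) := by noncomm_ring
    _ = (p * s * p) * x + ((1 - p) * s * p) * x := by rw [hmv, hvv, zero_mul, add_zero, add_zero]
  have hzu : (x + (1 - p) * s * p * (x * x)) * (s * p) = (p * s * p) * x + ((1 - p) * s * p) * x := by
    calc (x + (1 - p) * s * p * (x * x)) * (s * p)
        = x * (p * s * p) + x * ((1 - p) * s * p)
          + ((1 - p) * s * p) * ((x * x) * (p * s * p))
          + ((1 - p) * s * p) * ((x * x) * ((1 - p) * s * p)) := by noncomm_ring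
    _ = (p * s * p) * x + ((1 - p) * s * p) * x := by
        rw [← hx2, hxv, e2, hxxv, mul_zero, add_zero, add_zero]
  have hzuz : (x + (1 - p) * s * p * (x * x)) * (s * p) * (x + (1 - p) * s * p * (x * x))
      = x + (1 - p) * s * p * (x * x) := by
    rw [hzu]
    calc ((p * s * p) * x + ((1 - p) * s * p) * x) * (x + (1 - p) * s * p * (x * x))
        = (p * s * p) * (x * x) + ((1 - p) * s * p) * (x * x)
          + (p * s * p) * ((x * ((1 - p) * s * p)) * (x * x))
          + ((1 - p) * s * p) * ((x * ((1 - p) * s * p)) * (x * x)) := by noncomm_ring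
    _ = (p * s * p) * (x * x) + ((1 - p) * s * p) * (x * x) := by rw [hxv, zero_mul, mul_zero, mul_zero, add_zero, add_zero]
    _ = x + (1 - p) * s * p * (x * x) := by rw [e1]
  have hcm : (s * p) * (x + (1 - p) * s * p * (x * x))
      = (x + (1 - p) * s * p * (x * x)) * (s * p) := huz.trans hzu.symm
  have hsun : s = s * p + s * (1 - p) := by noncomm_ring
  -- power lemmas for z3
  have hmkv : ∀ k : ℕ, (p * s * p) ^ (k + 1) * ((1 - p) * s * p) = 0 := fun k => by
    rw [pow_succ, mul_assoc, hmv, mul_zero]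
  have hvmv : ∀ k : ℕ, ((1 - p) * s * p) * ((p * s * p) ^ k * ((1 - p) * s * p)) = 0 := by
    intro k
    cases k with
    | zero => rw [pow_zero, one_mul, hvv]
    | succ k => rw [hmkv k, mul_zero]
  have hPu : ∀ k : ℕ, (s * p) ^ (k + 1)
      = (p * s * p) ^ (k + 1) + ((1 - p) * s * p) * (p * s * p) ^ k := by
    intro k
    induction k with
    | zero => rw [pow_one, pow_one, pow_zero, mul_one]; noncomm_ring
    | succ k ih =>
      calc (s * p) ^ (k + 1 + 1) = (s * p) ^ (k + 1) * (s * p) := by rw [pow_succ]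
      _ = ((p * s * p) ^ (k + 1) + ((1 - p) * s * p) * (p * s * p) ^ k) * (s * p) := by
          rw [ih]
      _ = (p * s * p) ^ (k + 1) * (p * s * p) + (p * s * p) ^ (k + 1) * ((1 - p) * s * p)
          + ((1 - p) * s * p) * ((p * s * p) ^ k * (p * s * p))
          + ((1 - p) * s * p) * ((p * s * p) ^ k * ((1 - p) * s * p)) := by noncomm_ring
      _ = (p * s * p) ^ (k + 1 + 1) + ((1 - p) * s * p) * (p * s * p) ^ (k + 1) := by
          rw [hmkv k, hvmv k, ← pow_succ, ← pow_succ, add_zero, add_zero]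
  have M3 : ∀ d : ℕ, (p * s * p) ^ (l + 1 + d) * x = (p * s * p) ^ (l + d) := by
    intro d
    rw [show l + 1 + d = d + (l + 1) from by omega, pow_add, mul_assoc, hx3, ← pow_add,
      show d + l = l + d from by omega]
  have z3 : ∀ d : ℕ, (s * p) ^ (l + 2 + d) * (x + (1 - p) * s * p * (x * x))
      = (s * p) ^ (l + 1 + d) := by
    intro d
    rw [show l + 2 + d = (l + 1 + d) + 1 from by omega, hPu (l + 1 + d),
      show l + 1 + d = (l + d) + 1 from by omega, hPu (l + d)]
    calc ((p * s * p) ^ (l + d + 1 + 1) + ((1 - p) * s * p) * (p * s * p) ^ (l + d + 1)) *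
          (x + (1 - p) * s * p * (x * x))
        = (p * s * p) ^ (l + d + 1 + 1) * x
          + ((p * s * p) ^ (l + d + 1 + 1) * ((1 - p) * s * p)) * (x * x)
          + ((1 - p) * s * p) * ((p * s * p) ^ (l + d + 1) * x)
          + ((1 - p) * s * p) * (((p * s * p) ^ (l + d + 1) * ((1 - p) * s * p)) * (x * x)) := by
          noncomm_ring
    _ = (p * s * p) ^ (l + d + 1) + ((1 - p) * s * p) * (p * s * p) ^ (l + d) := by
        rw [hmkv (l + d + 1), hmkv (l + d),
          show l + d + 1 + 1 = l + 1 + (d + 1) from by omega, M3 (d + 1),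
          show l + (d + 1) = l + d + 1 from by omega,
          show l + d + 1 = l + 1 + d from by omega, M3 d,
          zero_mul, add_zero, mul_zero, add_zero]
  -- conversion of the sum
  have hq2 : (1 - p) * (1 - p) = 1 - p := by
    rw [mul_sub, mul_one, sub_mul, one_mul, hp]; abel
  have hSN : ∀ i : ℕ, s ^ i * (s * (1 - p)) = (s * (1 - p)) ^ (i + 1) := by
    intro i
    induction i with
    | zero => rw [pow_zero, one_mul, pow_one]
    | succ i ih =>
      rw [pow_succ' s i, mul_assoc, ih]
      calc s * (s * (1 - p)) ^ (i + 1)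
          = (s * p) * (s * (1 - p)) ^ (i + 1) + (s * (1 - p)) * (s * (1 - p)) ^ (i + 1) := by
            noncomm_ring
      _ = (s * (1 - p)) ^ (i + 1 + 1) := by
          rw [pow_succ' (s * (1 - p)) i, ← mul_assoc, hun, zero_mul, zero_add,
            ← pow_succ', ← pow_succ']
  have hSQ : ∀ i : ℕ, s ^ i * (1 - p) = (s * (1 - p)) ^ i * (1 - p) := by
    intro i
    cases i with
    | zero => rw [pow_zero, pow_zero]
    | succ i =>
      have h1 : s ^ (i + 1) * (1 - p) = s ^ i * (s * (1 - p)) := by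
        rw [pow_succ, mul_assoc]
      have h2 : (s * (1 - p)) ^ (i + 1) * (1 - p) = (s * (1 - p)) ^ i * (s * (1 - p)) := by
        rw [pow_succ, mul_assoc, mul_assoc, hq2]
      rw [h1, h2, hSN i, pow_succ]
  have TERM : ∀ i : ℕ, s ^ i * (1 - p) * s * x ^ (i + 2)
      = (s * (1 - p)) ^ i * (((1 - p) * s * p) * x ^ (i + 2)) := by
    intro i
    have h3 : ((1 - p) * s) * x ^ (i + 2) = ((1 - p) * s * p) * x ^ (i + 2) := by
      rw [show i + 2 = i + 1 + 1 from rfl, pow_succ' x (i + 1), ← mul_assoc, ← mul_assoc,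
        show (1 - p) * s * x = (1 - p) * s * (p * x) from by rw [hpx]]
      noncomm_ring
    calc s ^ i * (1 - p) * s * x ^ (i + 2)
        = (s ^ i * (1 - p)) * (s * x ^ (i + 2)) := by noncomm_ring
    _ = ((s * (1 - p)) ^ i * (1 - p)) * (s * x ^ (i + 2)) := by rw [hSQ i]
    _ = (s * (1 - p)) ^ i * (((1 - p) * s) * x ^ (i + 2)) := by noncomm_ring
    _ = (s * (1 - p)) ^ i * (((1 - p) * s * p) * x ^ (i + 2)) := by rw [h3]
  have hxkv : ∀ k : ℕ, x ^ (k + 1) * ((1 - p) * s * p) = 0 := fun k => by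
    rw [pow_succ, mul_assoc, hxv, mul_zero]
  have hPz : ∀ k : ℕ, (x + (1 - p) * s * p * (x * x)) ^ (k + 1)
      = x ^ (k + 1) + ((1 - p) * s * p) * x ^ (k + 2) := by
    intro k
    induction k with
    | zero =>
      rw [pow_one, pow_one, show (x : R) ^ 2 = x * x from by rw [pow_two]]
    | succ k ih =>
      calc (x + (1 - p) * s * p * (x * x)) ^ (k + 1 + 1)
          = (x ^ (k + 1) + ((1 - p) * s * p) * x ^ (k + 2)) *
            (x + (1 - p) * s * p * (x * x)) := by rw [pow_succ, ih]
      _ = x ^ (k + 1) * x + (x ^ (k + 1) * ((1 - p) * s * p)) * (x * x)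
          + ((1 - p) * s * p) * (x ^ (k + 2) * x)
          + ((1 - p) * s * p) * ((x ^ (k + 2) * ((1 - p) * s * p)) * (x * x)) := by
          noncomm_ring
      _ = x ^ (k + 1 + 1) + ((1 - p) * s * p) * x ^ (k + 1 + 2) := by
          rw [hxkv k, hxkv (k + 1), ← pow_succ, ← pow_succ, zero_mul, mul_zero,
            add_zero, add_zero, show k + 1 + 2 = k + 2 + 1 from by omega]
  have hnx1 : ∀ i : ℕ, (s * (1 - p)) ^ (i + 1) * x ^ (i + 2) = 0 := by
    intro i
    rw [pow_succ, show i + 2 = i + 1 + 1 from rfl, pow_succ' x (i + 1), mul_assoc,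
      ← mul_assoc (s * (1 - p)) x, hnx, zero_mul, mul_zero]
  have EqW : (∑ i ∈ Finset.range (t' + 1), s ^ i * (1 - p) * s * x ^ (i + 2)) + x
      = ∑ i ∈ Finset.range (t' + 1),
          (s * (1 - p)) ^ i * (x + (1 - p) * s * p * (x * x)) ^ (i + 1) := by
    have step : ∀ i ∈ Finset.range (t' + 1),
        (s * (1 - p)) ^ i * (x + (1 - p) * s * p * (x * x)) ^ (i + 1)
        = (s * (1 - p)) ^ i * x ^ (i + 1)
          + (s * (1 - p)) ^ i * (((1 - p) * s * p) * x ^ (i + 2)) := by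
      intro i _
      rw [hPz i, mul_add]
    rw [Finset.sum_congr rfl step, Finset.sum_add_distrib]
    have h1 : ∑ i ∈ Finset.range (t' + 1), (s * (1 - p)) ^ i * x ^ (i + 1) = x := by
      rw [Finset.sum_range_succ']
      have h2 : ∀ i ∈ Finset.range t',
          (s * (1 - p)) ^ (i + 1) * x ^ (i + 1 + 1) = 0 := fun i _ => hnx1 i
      rw [Finset.sum_eq_zero h2, zero_add, pow_zero, one_mul, pow_one]
    have h3 : ∀ i ∈ Finset.range (t' + 1),
        s ^ i * (1 - p) * s * x ^ (i + 2)
        = (s * (1 - p)) ^ i * (((1 - p) * s * p) * x ^ (i + 2)) := fun i _ => TERM i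
    rw [h1, Finset.sum_congr rfl h3, add_comm]
  rw [EqW]
  obtain ⟨c1, c2, c3⟩ := lemA s (s * p) (s * (1 - p)) (x + (1 - p) * s * p * (x * x))
    hsun hun hcm hzuz l z3 t' hnil
  exact ⟨c1, c2, ⟨l + t' + 1, c3⟩⟩

theorem lemC {R : Type*} [Ring R] (s p x : R) (hp : p * p = p)
    (hx1 : x * (p * s * p) * x = x)
    (hx2 : (p * s * p) * x = x * (p * s * p)) : (1 - p) * x = 0 := by
  have e1 : (p * s * p) * (x * x) = x := by
    calc (p * s * p) * (x * x) = (p * s * p) * x * x := by noncomm_ring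
    _ = x * (p * s * p) * x := by rw [hx2]
    _ = x := hx1
  have hpm : p * (p * s * p) = p * s * p := by
    calc p * (p * s * p) = (p * p) * (s * p) := by noncomm_ring
    _ = p * (s * p) := by rw [hp]
    _ = p * s * p := by noncomm_ring
  have hpx : p * x = x := by
    calc p * x = p * ((p * s * p) * (x * x)) := by rw [e1]
    _ = (p * (p * s * p)) * (x * x) := by noncomm_ring
    _ = (p * s * p) * (x * x) := by rw [hpm]
    _ = x := e1
  rw [sub_mul, one_mul, hpx, sub_self]

theorem stmt1
    {p q : Type*} [Fintype p] [DecidableEq p] [Fintype q] [DecidableEq q]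
    (A AD : Matrix p p ℂ) (D DD : Matrix q q ℂ)
    (B : Matrix q p ℂ) (C : Matrix p q ℂ)
    (hA : IsDrazinInverse A AD) (hD : IsDrazinInverse D DD)
    (Y S Ae Aπ SAe : Matrix p p ℂ)
    (hY : Y = C * DD * B) (hS : S = A - Y)
    (hAe : Ae = A * AD) (hAπ : Aπ = 1 - A * AD)
    (hSAe : SAe = Ae * S * Ae)
    (X : Matrix p p ℂ) (hX : IsDrazinInverse SAe X)
    (t : ℕ) (hnil : (S * Aπ) ^ t = 0)
    (hcond : S * Ae * Y * Aπ = 0) :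
    IsDrazinInverse S
      (-(∑ i ∈ Finset.range t, S ^ i * Aπ * Y * X ^ (i + 2)) + X) := by
  rcases t with _ | t'
  · have h10 : (1 : Matrix p p ℂ) = 0 := by rw [← pow_zero (S * Aπ)]; exact hnil
    haveI : Subsingleton (Matrix p p ℂ) := subsingleton_of_zero_eq_one h10.symm
    exact ⟨Subsingleton.elim _ _, Subsingleton.elim _ _, 0, Subsingleton.elim _ _⟩
  · rw [hSAe, hAe] at hX
    obtain ⟨hx1, hx2, l, hx3⟩ := hX
    rw [hAπ] at hnil hcond ⊢
    rw [hAe] at hcond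
    have hpp : (A * AD) * (A * AD) = A * AD := by
      calc (A * AD) * (A * AD) = A * (AD * A * AD) := by noncomm_ring
      _ = A * AD := by rw [hA.1]
    have hPA : (A * AD) * A = A * (A * AD) := by
      calc (A * AD) * A = A * (AD * A) := by noncomm_ring
      _ = A * (A * AD) := by rw [← hA.2.1]
    have hPAQ : (A * AD) * A * (1 - A * AD) = 0 := by
      rw [hPA, mul_assoc, mul_sub, mul_one, hpp, sub_self, mul_zero]
    have hY2 : Y = A - S := by rw [hS, sub_sub_cancel]
    have hcond' : S * (A * AD) * S * (1 - A * AD) = 0 := by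
      have step : S * (A * AD) * S * (1 - A * AD)
          = S * ((A * AD) * A * (1 - A * AD)) - S * (A * AD) * Y * (1 - A * AD) := by
        conv_lhs => rw [hS]
        rw [hS]
        noncomm_ring
      rw [step, hPAQ, mul_zero, hcond, sub_zero]
    have hqX : (1 - A * AD) * X = 0 := lemC S (A * AD) X hpp hx1 hx2
    have hAq : (1 - A * AD) * A = A * (1 - A * AD) := by
      rw [sub_mul, one_mul, mul_sub, mul_one, hPA]
    have key : ∀ i : ℕ, (A * (1 - A * AD)) * X ^ (i + 2) = 0 := by
      intro i
      rw [show i + 2 = i + 1 + 1 from rfl, pow_succ' X (i + 1), ← mul_assoc,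
        mul_assoc A, hqX, mul_zero, zero_mul]
    have hsum : -(∑ i ∈ Finset.range (t' + 1), S ^ i * (1 - A * AD) * Y * X ^ (i + 2)) + X
        = (∑ i ∈ Finset.range (t' + 1), S ^ i * (1 - A * AD) * S * X ^ (i + 2)) + X := by
      have hterm : ∀ i ∈ Finset.range (t' + 1),
          S ^ i * (1 - A * AD) * Y * X ^ (i + 2)
          = -(S ^ i * (1 - A * AD) * S * X ^ (i + 2)) := by
        intro i _
        calc S ^ i * (1 - A * AD) * Y * X ^ (i + 2)
            = S ^ i * (((1 - A * AD) * A) * X ^ (i + 2))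
              - S ^ i * (1 - A * AD) * S * X ^ (i + 2) := by rw [hY2]; noncomm_ring
        _ = -(S ^ i * (1 - A * AD) * S * X ^ (i + 2)) := by
            rw [hAq, key i, mul_zero, zero_sub]
      rw [Finset.sum_congr rfl hterm, Finset.sum_neg_distrib, neg_neg]
    rw [hsum]
    obtain ⟨c1, c2, c3⟩ := lemB S (A * AD) X hpp hx1 hx2 l hx3 hcond' t' hnil
    exact ⟨c1, c2, c3⟩
end

section
/- Suppose A^π*S is r-nilpotent, i.e. (A^π*S)^r = 0, and that A^π*Y*A^e*S = 0. Then S has a Drazin inverse, given by S^D = −Σ_{i=0}^{r−1} X^{i+2}*Y*A^π*S^i + X. -/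
open Matrix Finset

section core
variable {R : Type*} [Ring R]

theorem drazin_core (Ae S X : R) (k r : ℕ)
    (hAe : Ae * Ae = Ae)
    (hX1 : X * (Ae * (S * Ae)) * X = X)
    (hX2 : Ae * (S * Ae) * X = X * (Ae * (S * Ae)))
    (hX3 : (Ae * (S * Ae)) ^ (k + 1) * X = (Ae * (S * Ae)) ^ k)
    (hr : ((1 - Ae) * S) ^ r = 0)
    (hc : (1 - Ae) * (S * (Ae * S)) = 0) :
    ((X + ∑ i ∈ Finset.range r, X ^ (i + 2) * (S * ((1 - Ae) * S ^ i))) * S *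
        (X + ∑ i ∈ Finset.range r, X ^ (i + 2) * (S * ((1 - Ae) * S ^ i))) =
        X + ∑ i ∈ Finset.range r, X ^ (i + 2) * (S * ((1 - Ae) * S ^ i))) ∧
      (S * (X + ∑ i ∈ Finset.range r, X ^ (i + 2) * (S * ((1 - Ae) * S ^ i))) =
        (X + ∑ i ∈ Finset.range r, X ^ (i + 2) * (S * ((1 - Ae) * S ^ i))) * S) ∧
      ∃ l : ℕ, S ^ (l + 1) *
          (X + ∑ i ∈ Finset.range r, X ^ (i + 2) * (S * ((1 - Ae) * S ^ i))) = S ^ l := by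
  -- tail-extension helper
  have tail : ∀ a b : R, a = b → ∀ t : R, a * t = b * t := fun a b h t => by rw [h]
  -- basic idempotent rules
  have hae' : ∀ t : R, Ae * (Ae * t) = Ae * t := fun t => by rw [← mul_assoc, hAe]
  have pae' : ∀ t : R, (1 - Ae) * (Ae * t) = 0 := fun t => by
    rw [sub_mul, one_mul, hae', sub_self]
  have aep' : ∀ t : R, Ae * ((1 - Ae) * t) = 0 := fun t => by
    rw [sub_mul, one_mul, mul_sub, hae', sub_self]
  -- normalize hX hypotheses
  have hx1 : X * (Ae * (S * (Ae * X))) = X := by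
    calc X * (Ae * (S * (Ae * X))) = X * (Ae * (S * Ae)) * X := by
          simp only [mul_assoc]
      _ = X := hX1
  have hx2 : ∀ t : R, Ae * (S * (Ae * (X * t))) = X * (Ae * (S * (Ae * t))) := fun t => by
    have := tail _ _ hX2 t
    simp only [mul_assoc] at this
    simpa [mul_assoc] using this
  have hc' : ∀ t : R, (1 - Ae) * (S * (Ae * (S * t))) = 0 := fun t => by
    have := tail _ _ hc t
    simp only [mul_assoc, zero_mul] at this
    simpa [mul_assoc] using this
  -- X = X*(X*M) and X = M*(X*X)
  have xxm : X * (X * (Ae * (S * Ae))) = X := by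
    conv_lhs => rw [show X * (Ae * (S * Ae)) = Ae * (S * (Ae * X)) from by
      rw [← hX2]; simp only [mul_assoc]]
    exact hx1
  have mxx : Ae * (S * (Ae * (X * X))) = X := by rw [hx2, hx1]
  have xae : X * Ae = X := by
    conv_lhs => rw [← xxm]
    simp only [mul_assoc, hAe]
    simpa [mul_assoc] using xxm
  have xae' : ∀ t : R, X * (Ae * t) = X * t := fun t => by
    conv_rhs => rw [← xae]
    rw [mul_assoc]
  have aex : Ae * X = X := by
    conv_lhs => rw [← mxx, hae']
    exact mxx
  have px : (1 - Ae) * X = 0 := by rw [← mxx, pae']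
  have px' : ∀ t : R, (1 - Ae) * (X * t) = 0 := fun t => by
    have := tail _ _ px t
    simpa [mul_assoc] using this
  have xp : X * (1 - Ae) = 0 := by rw [mul_sub, mul_one, xae, sub_self]
  have xp' : ∀ t : R, X * ((1 - Ae) * t) = 0 := fun t => by
    have := tail _ _ xp t
    simpa [mul_assoc] using this
  -- N-facts
  have nx : (1 - Ae) * (S * X) = 0 := by
    conv_lhs => rw [← mxx]
    exact hc' _
  have nx' : ∀ t : R, (1 - Ae) * (S * (X * t)) = 0 := fun t => by
    have := tail _ _ nx t
    simpa [mul_assoc] using this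
  -- decomposition S = Ae*S + (1-Ae)*S
  have sdec : ∀ w : R, S * w = Ae * (S * w) + (1 - Ae) * (S * w) := fun w => by
    noncomm_ring
  have sdec2 : ∀ u w : R, u * (S * w) = u * (S * (Ae * w)) + u * (S * ((1 - Ae) * w)) :=
    fun u w => by noncomm_ring
  -- N * S = N * N  (right-assoc inner form)
  have nns : (1 - Ae) * (S * S) = (1 - Ae) * (S * ((1 - Ae) * S)) := by
    rw [sdec2 (1 - Ae) S, hc, zero_add]
  -- N^(a+1) * S = N^(a+2)
  have nSpow : ∀ a : ℕ, ((1 - Ae) * S) ^ (a + 1) * S = ((1 - Ae) * S) ^ (a + 2) := fun a => by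
    rw [pow_succ, pow_succ, pow_succ]
    simp only [mul_assoc]
    rw [nns]
  -- (1-Ae) * S^(t+1) = N^(t+1)
  have nS : ∀ t : ℕ, (1 - Ae) * S ^ (t + 1) = ((1 - Ae) * S) ^ (t + 1) := by
    intro t
    induction t with
    | zero => simp
    | succ t ih =>
      rw [pow_succ, ← mul_assoc, ih, nSpow]
  -- N^a = 0 for r ≤ a
  have npow0 : ∀ a : ℕ, r ≤ a → ((1 - Ae) * S) ^ a = 0 := fun a ha => by
    rw [show a = r + (a - r) from by omega, pow_add, hr, zero_mul]
  -- S * X = M * X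
  have sx : S * X = (Ae * (S * Ae)) * X := by
    rw [sdec X, nx, add_zero]
    rw [mul_assoc, mul_assoc, aex]
  -- commute
  have cMX : Commute (Ae * (S * Ae)) X := hX2
  -- S^j * X = M^j * X
  have sxP : ∀ j : ℕ, S ^ j * X = (Ae * (S * Ae)) ^ j * X := fun j => by
    induction j with
    | zero => simp
    | succ j ih =>
      rw [pow_succ, mul_assoc, sx, cMX.eq, ← mul_assoc, ih, mul_assoc, ← cMX.eq,
        ← mul_assoc, ← pow_succ]
  -- S^a * X^(b+1) = M^a * X^(b+1)
  have saxb : ∀ a b : ℕ, S ^ a * X ^ (b + 1) = (Ae * (S * Ae)) ^ a * X ^ (b + 1) :=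
    fun a b => by
    rw [pow_succ', ← mul_assoc, sxP, mul_assoc, ← pow_succ']
  -- M^(m+1) * X = M^m for k ≤ m
  have mk1 : ∀ m : ℕ, k ≤ m → (Ae * (S * Ae)) ^ (m + 1) * X = (Ae * (S * Ae)) ^ m := by
    intro m hm
    induction m, hm using Nat.le_induction with
    | base => exact hX3
    | succ m hm ih =>
      rw [pow_succ', mul_assoc, ih, ← pow_succ']
  -- M^(m+j) * X^j = M^m for k ≤ m
  have mkj : ∀ j m : ℕ, k ≤ m → (Ae * (S * Ae)) ^ (m + j) * X ^ j = (Ae * (S * Ae)) ^ m := by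
    intro j
    induction j with
    | zero => intro m _; simp
    | succ j ih =>
      intro m hm
      rw [pow_succ', show m + (j+1) = (m+j) + 1 from by omega, ← mul_assoc,
        mk1 (m+j) (by omega)]
      exact ih m hm
  -- E*E = M*E
  have ee : (Ae * S) * (Ae * S) = (Ae * (S * Ae)) * (Ae * S) := by
    simp only [mul_assoc, hae']
  -- E^(t+1) = M^t * E
  have eP : ∀ t : ℕ, (Ae * S) ^ (t + 1) = (Ae * (S * Ae)) ^ t * (Ae * S) := fun t => by
    induction t with
    | zero => simp
    | succ t ih =>
      rw [pow_succ, ih, mul_assoc, ee, ← mul_assoc, ← pow_succ]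
  -- M * ((1-Ae) * t) = 0
  have mn : ∀ t : R, (Ae * (S * Ae)) * ((1 - Ae) * t) = 0 := fun t => by
    simp only [mul_assoc, aep', mul_zero]
  -- M * S = M * (Ae * S)
  have ms : (Ae * (S * Ae)) * S = (Ae * (S * Ae)) * (Ae * S) := by
    conv_lhs => rw [show (Ae * (S * Ae)) * S = (Ae * (S * Ae)) * (1 * S) from by rw [one_mul],
      show (1 : R) = Ae + (1 - Ae) from by abel]
    rw [add_mul, mul_add, mn, add_zero]
  -- M * (S * Ae) = M * M
  have msae : (Ae * (S * Ae)) * (S * Ae) = (Ae * (S * Ae)) * (Ae * (S * Ae)) := by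
    have := tail _ _ ms Ae
    simp only [mul_assoc] at this ⊢
    rw [this]
  -- S^m = ∑ i in range (m+1), E^i * N^(m-i)
  have spow : ∀ m : ℕ, S ^ m =
      ∑ i ∈ Finset.range (m + 1), (Ae * S) ^ i * ((1 - Ae) * S) ^ (m - i) := by
    intro m
    induction m with
    | zero => simp
    | succ m ih =>
      rw [pow_succ, ih, Finset.sum_mul]
      rw [Finset.sum_range_succ]
      conv_rhs => rw [Finset.sum_range_succ, Finset.sum_range_succ]
      have hmid : ∀ i ∈ Finset.range m,
          (Ae * S) ^ i * ((1 - Ae) * S) ^ (m - i) * S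
            = (Ae * S) ^ i * ((1 - Ae) * S) ^ (m + 1 - i) := by
        intro i hi
        have hi' : i < m := Finset.mem_range.mp hi
        rw [show m - i = (m - i - 1) + 1 from by omega, mul_assoc, nSpow,
          show m - i - 1 + 2 = m + 1 - i from by omega]
      rw [Finset.sum_congr rfl hmid]
      have hlast : (Ae * S) ^ m * ((1 - Ae) * S) ^ (m - m) * S
          = (Ae * S) ^ (m + 1) * ((1 - Ae) * S) ^ (m + 1 - (m + 1))
            + (Ae * S) ^ m * ((1 - Ae) * S) ^ (m + 1 - m) := by
        simp only [Nat.sub_self, pow_zero, mul_one, Nat.add_sub_cancel_left, pow_one]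
        rw [pow_succ]
        calc (Ae * S) ^ m * S = (Ae * S) ^ m * (Ae * S + (1 - Ae) * S) := by
              congr 1; noncomm_ring
          _ = (Ae * S) ^ m * (Ae * S) + (Ae * S) ^ m * ((1 - Ae) * S) := by rw [mul_add]
      rw [hlast]
      abel
  -- more power facts
  have xxm2 : ∀ i : ℕ, X ^ (i + 2) * (Ae * (S * Ae)) = X ^ (i + 1) := fun i => by
    rw [pow_succ, pow_succ]
    simp only [mul_assoc]
    rw [xxm, ← pow_succ]
  have sxp2 : ∀ i : ℕ, S * X ^ (i + 2) = X ^ (i + 1) := fun i => by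
    rw [pow_succ', ← mul_assoc, sx, mul_assoc, ← pow_succ', (cMX.pow_right (i+2)).eq, xxm2]
  have pix : ∀ i : ℕ, (1 - Ae) * (S ^ i * X) = 0 := by
    intro i
    match i with
    | 0 => simpa using px
    | (t+1) =>
      rw [← mul_assoc, nS t, pow_succ, mul_assoc, mul_assoc, nx, mul_zero]
  -- now split on r
  cases r with
  | zero =>
    have h1 : (0 : R) = 1 := by simpa using hr.symm
    have : Subsingleton R := subsingleton_of_zero_eq_one h1
    exact ⟨Subsingleton.elim _ _, Subsingleton.elim _ _, 0, Subsingleton.elim _ _⟩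
  | succ r' =>
    have hSZ : S * (X + ∑ i ∈ Finset.range (r'+1), X ^ (i + 2) * (S * ((1 - Ae) * S ^ i))) =
        (Ae * (S * Ae)) * X +
          ∑ i ∈ Finset.range (r'+1), X ^ (i + 1) * (S * ((1 - Ae) * S ^ i)) := by
      rw [mul_add, Finset.mul_sum, sx]
      congr 1
      refine Finset.sum_congr rfl fun i _ => ?_
      rw [← mul_assoc, sxp2]
    have hXS : X * S = (Ae * (S * Ae)) * X +
        (fun j => X ^ (j + 1) * (S * ((1 - Ae) * S ^ j))) 0 := by
      simp only [pow_zero, mul_one, zero_add, pow_one]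
      rw [cMX.eq, xae' (S * Ae)]
      have e1 : S * (1 - Ae) = S - S * Ae := by noncomm_ring
      rw [e1, mul_sub]
      abel
    have hfr : X ^ (r' + 1 + 1) * (S * ((1 - Ae) * S ^ (r' + 1))) = 0 := by
      rw [nS r', hr, mul_zero, mul_zero]
    have hZS : (X + ∑ i ∈ Finset.range (r'+1), X ^ (i + 2) * (S * ((1 - Ae) * S ^ i))) * S =
        (Ae * (S * Ae)) * X +
          ∑ i ∈ Finset.range (r'+1), X ^ (i + 1) * (S * ((1 - Ae) * S ^ i)) := by
      rw [add_mul, Finset.sum_mul]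
      have hterm : ∀ i ∈ Finset.range (r'+1),
          (X ^ (i + 2) * (S * ((1 - Ae) * S ^ i))) * S
            = (fun j => X ^ (j + 1) * (S * ((1 - Ae) * S ^ j))) (i + 1) := by
        intro i _
        simp only [mul_assoc, ← pow_succ]
      have hsum : (∑ i ∈ Finset.range (r'+1),
            (fun j => X ^ (j + 1) * (S * ((1 - Ae) * S ^ j))) (i + 1))
            + (fun j => X ^ (j + 1) * (S * ((1 - Ae) * S ^ j))) 0
          = ∑ i ∈ Finset.range (r'+1), X ^ (i + 1) * (S * ((1 - Ae) * S ^ i)) := by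
        rw [← Finset.sum_range_succ' (fun j => X ^ (j + 1) * (S * ((1 - Ae) * S ^ j))) (r'+1),
          Finset.sum_range_succ, hfr, add_zero]
      rw [Finset.sum_congr rfl hterm, hXS, add_assoc]
      congr 1
      rw [add_comm]
      exact hsum
    have comm : S * (X + ∑ i ∈ Finset.range (r'+1), X ^ (i + 2) * (S * ((1 - Ae) * S ^ i))) =
        (X + ∑ i ∈ Finset.range (r'+1), X ^ (i + 2) * (S * ((1 - Ae) * S ^ i))) * S := by
      rw [hSZ, hZS]
    have hTX : (∑ i ∈ Finset.range (r'+1), X ^ (i + 2) * (S * ((1 - Ae) * S ^ i))) * X = 0 := by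
      rw [Finset.sum_mul]
      refine Finset.sum_eq_zero fun i _ => ?_
      simp only [mul_assoc]
      rw [pix i, mul_zero, mul_zero]
    have hZX : (X + ∑ i ∈ Finset.range (r'+1), X ^ (i + 2) * (S * ((1 - Ae) * S ^ i))) * X
        = X * X := by
      rw [add_mul, hTX, add_zero]
    refine ⟨?_, comm, ?_⟩
    · rw [mul_assoc, hSZ, mul_add, Finset.mul_sum]
      have h1 : (X + ∑ i ∈ Finset.range (r'+1), X ^ (i + 2) * (S * ((1 - Ae) * S ^ i)))
          * ((Ae * (S * Ae)) * X) = X := by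
        rw [cMX.eq, ← mul_assoc, hZX, mul_assoc]
        exact xxm
      have h2 : ∀ i ∈ Finset.range (r'+1),
          (X + ∑ j ∈ Finset.range (r'+1), X ^ (j + 2) * (S * ((1 - Ae) * S ^ j)))
            * (X ^ (i + 1) * (S * ((1 - Ae) * S ^ i)))
          = X ^ (i + 2) * (S * ((1 - Ae) * S ^ i)) := by
        intro i _
        rw [pow_succ', mul_assoc X (X ^ i), ← mul_assoc _ X _, hZX]
        rw [show X ^ (i + 2) = X * (X * X ^ i) from by rw [pow_succ', pow_succ']]
        simp only [mul_assoc]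
      rw [h1, Finset.sum_congr rfl h2]
    · refine ⟨k + r' + 3, ?_⟩
      rw [mul_add, Finset.mul_sum]
      have h1 : S ^ (k + r' + 3 + 1) * X = (Ae * (S * Ae)) ^ (k + r' + 3) := by
        rw [sxP]; exact mk1 _ (by omega)
      have h2 : ∀ i ∈ Finset.range (r'+1),
          S ^ (k + r' + 3 + 1) * (X ^ (i + 2) * (S * ((1 - Ae) * S ^ i)))
            = (Ae * (S * Ae)) ^ (k + r' + 3 - i - 1) * (S * ((1 - Ae) * S ^ i)) := by
        intro i hi
        have hi' := Finset.mem_range.mp hi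
        rw [← mul_assoc]
        congr 1
        have e1 : S ^ (k + r' + 3 + 1) * X ^ (i + 2)
            = (Ae * (S * Ae)) ^ (k + r' + 3 + 1) * X ^ (i + 2) := saxb (k + r' + 3 + 1) (i + 1)
        rw [e1, show k + r' + 3 + 1 = (k + r' + 3 - i - 1) + (i + 2) from by omega]
        exact mkj (i + 2) (k + r' + 3 - i - 1) (by omega)
      rw [h1, Finset.sum_congr rfl h2]
      -- now express S^l
      have hs1 : S ^ (k + r' + 3) = ∑ j ∈ Finset.range (k + r' + 3 + 1),
          (Ae * S) ^ (k + r' + 3 - j) * ((1 - Ae) * S) ^ j := by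
        rw [spow (k + r' + 3),
          ← Finset.sum_range_reflect
            (fun j => (Ae * S) ^ (k + r' + 3 - j) * ((1 - Ae) * S) ^ j) (k + r' + 3 + 1)]
        refine Finset.sum_congr rfl fun i hi => ?_
        have hi' := Finset.mem_range.mp hi
        rw [show k + r' + 3 + 1 - 1 - i = k + r' + 3 - i from by omega,
          show k + r' + 3 - (k + r' + 3 - i) = i from by omega]
      have hs2 : S ^ (k + r' + 3) = ∑ j ∈ Finset.range (r' + 1),
          (Ae * S) ^ (k + r' + 3 - j) * ((1 - Ae) * S) ^ j := by
        rw [hs1]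
        refine (Finset.sum_subset (Finset.range_subset_range.mpr (by omega)) fun x _ hx => ?_).symm
        rw [npow0 x (by simpa using hx), mul_zero]
      have hs3 : S ^ (k + r' + 3) = ∑ j ∈ Finset.range (r' + 1),
          (Ae * (S * Ae)) ^ (k + r' + 3 - j - 1) * ((Ae * S) * ((1 - Ae) * S) ^ j) := by
        rw [hs2]
        refine Finset.sum_congr rfl fun j hj => ?_
        have hj' := Finset.mem_range.mp hj
        conv_lhs => rw [show k + r' + 3 - j = (k + r' + 3 - j - 1) + 1 from by omega, eP,
          mul_assoc]
      rw [hs3]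
      rw [Finset.sum_range_succ' (fun i => (Ae * (S * Ae)) ^ (k + r' + 3 - i - 1)
            * (S * ((1 - Ae) * S ^ i))) r',
        Finset.sum_range_succ' (fun j => (Ae * (S * Ae)) ^ (k + r' + 3 - j - 1)
            * ((Ae * S) * ((1 - Ae) * S) ^ j)) r']
      have hterm2 : ∀ i ∈ Finset.range r',
          (Ae * (S * Ae)) ^ (k + r' + 3 - (i + 1) - 1) * (S * ((1 - Ae) * S ^ (i + 1)))
            = (Ae * (S * Ae)) ^ (k + r' + 3 - (i + 1) - 1)
                * ((Ae * S) * ((1 - Ae) * S) ^ (i + 1)) := by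
        intro i hi
        have hi' := Finset.mem_range.mp hi
        rw [nS i]
        have hzero : (Ae * (S * Ae)) ^ (k + r' + 3 - (i + 1) - 1)
            * ((1 - Ae) * (S * ((1 - Ae) * S) ^ (i + 1))) = 0 := by
          rw [show k + r' + 3 - (i + 1) - 1 = (k + r' + 3 - i - 3) + 1 from by omega,
            pow_succ, mul_assoc, mn, mul_zero]
        calc (Ae * (S * Ae)) ^ (k + r' + 3 - (i + 1) - 1) * (S * ((1 - Ae) * S) ^ (i + 1))
            = (Ae * (S * Ae)) ^ (k + r' + 3 - (i + 1) - 1)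
                * (Ae * (S * ((1 - Ae) * S) ^ (i + 1)))
              + (Ae * (S * Ae)) ^ (k + r' + 3 - (i + 1) - 1)
                * ((1 - Ae) * (S * ((1 - Ae) * S) ^ (i + 1))) := by noncomm_ring
          _ = (Ae * (S * Ae)) ^ (k + r' + 3 - (i + 1) - 1)
                * ((Ae * S) * ((1 - Ae) * S) ^ (i + 1)) := by
              rw [hzero, add_zero, ← mul_assoc Ae S (((1 - Ae) * S) ^ (i + 1))]
      have hterm0 : (Ae * (S * Ae)) ^ (k + r' + 3)
          + (Ae * (S * Ae)) ^ (k + r' + 3 - 0 - 1) * (S * ((1 - Ae) * S ^ 0))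
          = (Ae * (S * Ae)) ^ (k + r' + 3 - 0 - 1) * ((Ae * S) * ((1 - Ae) * S) ^ 0) := by
        simp only [pow_zero, mul_one]
        have e2 : (Ae * (S * Ae)) ^ (k + r' + 3 - 0 - 1) * (S * (1 - Ae))
            = (Ae * (S * Ae)) ^ (k + r' + 3 - 0 - 1) * S
              - (Ae * (S * Ae)) ^ (k + r' + 3 - 0 - 1) * (S * Ae) := by noncomm_ring
        have e3 : (Ae * (S * Ae)) ^ (k + r' + 3 - 0 - 1) * S
            = (Ae * (S * Ae)) ^ (k + r' + 3 - 0 - 1) * (Ae * S) := by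
          rw [show k + r' + 3 - 0 - 1 = (k + r' + 1) + 1 from by omega, pow_succ,
            mul_assoc, ms, ← mul_assoc, ← pow_succ]
        have e4 : (Ae * (S * Ae)) ^ (k + r' + 3 - 0 - 1) * (S * Ae)
            = (Ae * (S * Ae)) ^ (k + r' + 3) := by
          rw [show k + r' + 3 - 0 - 1 = (k + r' + 1) + 1 from by omega, pow_succ,
            mul_assoc, msae, ← mul_assoc, ← pow_succ, ← pow_succ,
            show k + r' + 1 + 1 + 1 = k + r' + 3 from by omega]
        rw [e2, e3, e4]
        abel
      rw [Finset.sum_congr rfl hterm2, ← hterm0]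
      abel

end core


private lemma drazin_xae {R : Type*} [Ring R] (Ae S X : R) (hAe : Ae * Ae = Ae)
    (hX1 : X * (Ae * (S * Ae)) * X = X)
    (hX2 : Ae * (S * Ae) * X = X * (Ae * (S * Ae))) :
    X * Ae = X := by
  have xxm : X * (X * (Ae * (S * Ae))) = X := by
    conv_lhs => rw [show X * (Ae * (S * Ae)) = Ae * (S * (Ae * X)) from by
      rw [← hX2]; simp only [mul_assoc]]
    calc X * (Ae * (S * (Ae * X))) = X * (Ae * (S * Ae)) * X := by simp only [mul_assoc]
      _ = X := hX1
  have hae' : ∀ t : R, Ae * (Ae * t) = Ae * t := fun t => by rw [← mul_assoc, hAe]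
  conv_lhs => rw [← xxm]
  simp only [mul_assoc, hAe]
  simpa [mul_assoc] using xxm

open Finset in
theorem stmt3'
    {p q : Type*} [Fintype p] [DecidableEq p] [Fintype q] [DecidableEq q]
    (A AD : Matrix p p ℂ) (D DD : Matrix q q ℂ)
    (B : Matrix q p ℂ) (C : Matrix p q ℂ)
    (hA : (AD * A * AD = AD ∧ A * AD = AD * A ∧ ∃ l : ℕ, A ^ (l + 1) * AD = A ^ l))
    (Y S Ae Aπ SAe : Matrix p p ℂ)
    (hS : S = A - Y)
    (hAe : Ae = A * AD) (hAπ : Aπ = 1 - A * AD)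
    (hSAe : SAe = Ae * S * Ae)
    (X : Matrix p p ℂ)
    (hX : (X * SAe * X = X ∧ SAe * X = X * SAe ∧ ∃ l : ℕ, SAe ^ (l + 1) * X = SAe ^ l))
    (r : ℕ) (hnil : (Aπ * S) ^ r = 0)
    (hcond : Aπ * Y * Ae * S = 0) :
    ((-(∑ i ∈ Finset.range r, X ^ (i + 2) * Y * Aπ * S ^ i) + X) * S *
        (-(∑ i ∈ Finset.range r, X ^ (i + 2) * Y * Aπ * S ^ i) + X) =
      -(∑ i ∈ Finset.range r, X ^ (i + 2) * Y * Aπ * S ^ i) + X) ∧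
    (S * (-(∑ i ∈ Finset.range r, X ^ (i + 2) * Y * Aπ * S ^ i) + X) =
      (-(∑ i ∈ Finset.range r, X ^ (i + 2) * Y * Aπ * S ^ i) + X) * S) ∧
    ∃ l : ℕ, S ^ (l + 1) * (-(∑ i ∈ Finset.range r, X ^ (i + 2) * Y * Aπ * S ^ i) + X)
      = S ^ l := by
  obtain ⟨hA1, hA2, -⟩ := hA
  obtain ⟨hX1, hX2, l, hX3⟩ := hX
  subst hSAe hAe hAπ
  rw [mul_assoc (A * AD) S (A * AD)] at hX1 hX2 hX3
  have hY2 : Y = A - S := by rw [hS]; abel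
  have hAeI : (A * AD) * (A * AD) = A * AD := by
    have h1 : AD * (A * AD) = AD := by simpa [mul_assoc] using hA1
    calc (A * AD) * (A * AD) = A * (AD * (A * AD)) := by simp only [mul_assoc]
      _ = A * AD := by rw [h1]
  have hA2' : ∀ t : Matrix p p ℂ, A * (AD * t) = AD * (A * t) := fun t => by
    calc A * (AD * t) = (A * AD) * t := by rw [mul_assoc]
      _ = (AD * A) * t := by rw [hA2]
      _ = AD * (A * t) := by rw [mul_assoc]
  have had : ∀ t : Matrix p p ℂ, AD * (A * (AD * t)) = AD * t := fun t => by
    calc AD * (A * (AD * t)) = ((AD * A) * AD) * t := by simp only [mul_assoc]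
      _ = AD * t := by rw [hA1]
  -- (1 - Ae) * A * Ae = 0
  have hz : ∀ t : Matrix p p ℂ, (1 - A * AD) * (A * ((A * AD) * t)) = 0 := by
    intro t
    have key : (A * AD) * (A * ((A * AD) * t)) = A * ((A * AD) * t) := by
      simp only [mul_assoc]
      rw [hA2' t, had (A * t), ← hA2' t]
    rw [sub_mul, one_mul, key, sub_self]
  have hc : (1 - A * AD) * (S * ((A * AD) * S)) = 0 := by
    have expand : (1 - A * AD) * Y * (A * AD) * S
        = (1 - A * AD) * (A * ((A * AD) * S)) - (1 - A * AD) * (S * ((A * AD) * S)) := by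
      rw [hY2]; noncomm_ring
    rw [expand, hz S, zero_sub, neg_eq_zero] at hcond
    exact hcond
  -- X * Ae = X and consequences
  have xae : X * (A * AD) = X := drazin_xae (A * AD) S X hAeI hX1 hX2
  have haeπ : ∀ t : Matrix p p ℂ, (A * AD) * ((1 - A * AD) * t) = 0 := fun t => by
    simp only [mul_sub, sub_mul, one_mul]
    rw [← mul_assoc, hAeI, sub_self]
  have haea : ∀ t : Matrix p p ℂ, (A * AD) * (A * ((1 - A * AD) * t)) = 0 := fun t => by
    calc (A * AD) * (A * ((1 - A * AD) * t))
        = A * (AD * (A * ((1 - A * AD) * t))) := by rw [mul_assoc]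
      _ = A * ((AD * A) * ((1 - A * AD) * t)) := by rw [← mul_assoc AD A ((1 - A * AD) * t)]
      _ = A * ((A * AD) * ((1 - A * AD) * t)) := by rw [← hA2]
      _ = 0 := by rw [haeπ, mul_zero]
  have hxa : ∀ t : Matrix p p ℂ, X * (A * ((1 - A * AD) * t)) = 0 := fun t => by
    conv_lhs => rw [← xae]
    rw [mul_assoc, haea, mul_zero]
  -- convert Z
  have hZeq : -(∑ i ∈ Finset.range r, X ^ (i + 2) * Y * (1 - A * AD) * S ^ i) + X
      = X + ∑ i ∈ Finset.range r, X ^ (i + 2) * (S * ((1 - A * AD) * S ^ i)) := by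
    rw [add_comm]
    congr 1
    rw [neg_eq_iff_eq_neg, ← Finset.sum_neg_distrib]
    refine Finset.sum_congr rfl fun i _ => ?_
    have hterm : X ^ (i + 2) * Y * (1 - A * AD) * S ^ i
        = X ^ (i + 1) * (X * (A * ((1 - A * AD) * S ^ i)))
          - X ^ (i + 2) * (S * ((1 - A * AD) * S ^ i)) := by
      rw [hY2, pow_succ]; noncomm_ring
    rw [hterm, hxa, mul_zero, zero_sub]
  rw [hZeq]
  exact drazin_core (A * AD) S X l r hAeI hX1 hX2 hX3 hnil hc


theorem stmt3
    {p q : Type*} [Fintype p] [DecidableEq p] [Fintype q] [DecidableEq q]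
    (A AD : Matrix p p ℂ) (D DD : Matrix q q ℂ)
    (B : Matrix q p ℂ) (C : Matrix p q ℂ)
    (hA : IsDrazinInverse A AD) (hD : IsDrazinInverse D DD)
    (Y S Ae Aπ SAe : Matrix p p ℂ)
    (hY : Y = C * DD * B) (hS : S = A - Y)
    (hAe : Ae = A * AD) (hAπ : Aπ = 1 - A * AD)
    (hSAe : SAe = Ae * S * Ae)
    (X : Matrix p p ℂ) (hX : IsDrazinInverse SAe X)
    (r : ℕ) (hnil : (Aπ * S) ^ r = 0)
    (hcond : Aπ * Y * Ae * S = 0) :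
    IsDrazinInverse S
      (-(∑ i ∈ Finset.range r, X ^ (i + 2) * Y * Aπ * S ^ i) + X) := by
  exact stmt3' A AD D DD B C hA Y S Ae Aπ SAe hS hAe hAπ hSAe X hX r hnil hcond
end

section
/- Suppose S*A^π*Y = 0 and let k be a natural number with A^(k+1)*A^D = A^k (so k is at least the index of A). Then S has a Drazin inverse, given by S^D = −Σ_{i=0}^{k−1} (X^{i+2} − A^π*Y*X^{i+3})*Y*A^π*A^i + X − A^π*Y*X^2. -/
open Matrix Finset

section Generic
variable {R : Type*} [Ring R]

def isD (M X : R) : Prop :=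
  X * M * X = X ∧ M * X = X * M ∧ ∃ l : ℕ, M ^ (l + 1) * X = M ^ l

lemma bump {M X : R} {l : ℕ} (h : M ^ (l + 1) * X = M ^ l) (j : ℕ) :
    M ^ (l + j + 1) * X = M ^ (l + j) := by
  induction j with
  | zero => exact h
  | succ j ih =>
      show M ^ (l + j + 1 + 1) * X = M ^ (l + j + 1)
      rw [pow_succ' M (l + j + 1), mul_assoc, ih, ← pow_succ']

lemma drz_pow_left {M X : R} (hc : M * X = X * M) (h1 : X * M * X = X) (n : ℕ) :
    X ^ (n + 1) * M ^ n = X := by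
  induction n with
  | zero => simp
  | succ n ih =>
      calc X ^ (n + 1 + 1) * M ^ (n + 1)
          = X * X ^ (n + 1) * (M ^ n * M) := by rw [pow_succ' X, pow_succ M]
        _ = X * (X ^ (n + 1) * M ^ n) * M := by simp only [mul_assoc]
        _ = X * X * M := by rw [ih]
        _ = X * (X * M) := by rw [mul_assoc]
        _ = X * (M * X) := by rw [← hc]
        _ = X * M * X := by rw [← mul_assoc]
        _ = X := h1

lemma drz_pow_right {M X : R} (hc : M * X = X * M) (h1 : X * M * X = X) (n : ℕ) :
    M ^ n * X ^ (n + 1) = X := by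
  have hcom : Commute M X := hc
  rw [(hcom.pow_pow n (n + 1)).eq]
  exact drz_pow_left hc h1 n

lemma idem_pow {e : R} (he : e * e = e) (n : ℕ) : e ^ (n + 1) = e := by
  induction n with
  | zero => exact pow_one e
  | succ n ih => rw [pow_succ, ih, he]

lemma isD_unique {M X1 X2 : R} (h1 : isD M X1) (h2 : isD M X2) : X1 = X2 := by
  obtain ⟨a1, c1, l1, p1⟩ := h1
  obtain ⟨a2, c2, l2, p2⟩ := h2
  have e1 : M ^ (l1 + l2 + 1) * X1 = M ^ (l1 + l2) := bump p1 l2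
  have e2 : M ^ (l1 + l2 + 1) * X2 = M ^ (l1 + l2) := by
    have := bump p2 l1
    rwa [show l2 + l1 = l1 + l2 from by omega] at this
  have idem1 : (X1 * M) * (X1 * M) = X1 * M := by
    calc (X1 * M) * (X1 * M) = X1 * M * X1 * M := by simp only [mul_assoc]
      _ = X1 * M := by rw [a1]
  have idem2 : (M * X2) * (M * X2) = M * X2 := by
    calc (M * X2) * (M * X2) = M * (X2 * M * X2) := by simp only [mul_assoc]
      _ = M * X2 := by rw [a2]
  have k1 : X1 = X1 * M * X2 := by
    calc X1 = X1 ^ (l1 + l2 + 1) * M ^ (l1 + l2) := (drz_pow_left c1 a1 _).symm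
      _ = X1 ^ (l1 + l2 + 1) * (M ^ (l1 + l2 + 1) * X2) := by rw [e2]
      _ = (X1 ^ (l1 + l2 + 1) * M ^ (l1 + l2 + 1)) * X2 := by rw [mul_assoc]
      _ = (X1 * M) ^ (l1 + l2 + 1) * X2 := by
            rw [Commute.mul_pow (c1.symm : Commute X1 M)]
      _ = (X1 * M) * X2 := by rw [idem_pow idem1]
      _ = X1 * M * X2 := rfl
  have k2 : X2 = X1 * M * X2 := by
    calc X2 = M ^ (l1 + l2) * X2 ^ (l1 + l2 + 1) := (drz_pow_right c2 a2 _).symm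
      _ = (M ^ (l1 + l2 + 1) * X1) * X2 ^ (l1 + l2 + 1) := by rw [e1]
      _ = (X1 * M ^ (l1 + l2 + 1)) * X2 ^ (l1 + l2 + 1) := by
            have hcm : Commute (M ^ (l1 + l2 + 1)) X1 := Commute.pow_left c1 (l1 + l2 + 1)
            rw [hcm.eq]
      _ = X1 * (M ^ (l1 + l2 + 1) * X2 ^ (l1 + l2 + 1)) := by rw [mul_assoc]
      _ = X1 * ((M * X2) ^ (l1 + l2 + 1)) := by
            rw [Commute.mul_pow (c2 : Commute M X2)]
      _ = X1 * (M * X2) := by rw [idem_pow idem2]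
      _ = X1 * M * X2 := by rw [mul_assoc]
  exact k1.trans k2.symm

lemma drz_L2 {F G FD : R} (h : isD F FD) (hFG : F * G = 0) (hGG : G * G = 0) :
    isD (F + G) (FD + G * (FD * FD)) := by
  obtain ⟨ha, hc, l0, hp0⟩ := h
  have hcom : Commute F FD := hc
  have hrepL : FD ^ (l0 + 1 + 1) * F ^ (l0 + 1) = FD := drz_pow_left hc ha (l0 + 1)
  have hFDG : FD * G = 0 := by
    calc FD * G = FD ^ (l0 + 1 + 1) * F ^ (l0 + 1) * G := by rw [hrepL]
      _ = FD ^ (l0 + 1 + 1) * (F ^ l0 * (F * G)) := by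
            rw [pow_succ F l0]; simp only [mul_assoc]
      _ = 0 := by rw [hFG, mul_zero, mul_zero]
  have hFG' : ∀ x : R, F * (G * x) = 0 := fun x => by rw [← mul_assoc, hFG, zero_mul]
  have hGG' : ∀ x : R, G * (G * x) = 0 := fun x => by rw [← mul_assoc, hGG, zero_mul]
  have hFDG' : ∀ x : R, FD * (G * x) = 0 := fun x => by rw [← mul_assoc, hFDG, zero_mul]
  have hFF : FD * (FD * F) = FD := by
    calc FD * (FD * F) = FD * (F * FD) := by rw [← hc]
      _ = FD := by rw [← mul_assoc, ha]
  have hSz : (F + G) * (FD + G * (FD * FD)) = F * FD + G * FD := by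
    rw [mul_add, add_mul, add_mul, hFG' (FD * FD), hGG' (FD * FD), add_zero, add_zero]
  have hzS : (FD + G * (FD * FD)) * (F + G) = FD * F + G * FD := by
    have e1 : G * (FD * FD) * F = G * FD := by
      rw [mul_assoc, mul_assoc, hFF]
    have e2 : G * (FD * FD) * G = 0 := by
      rw [mul_assoc, mul_assoc, hFDG, mul_zero, mul_zero]
    rw [add_mul, mul_add, mul_add, hFDG, e1, e2, add_zero, add_zero]
  refine ⟨?_, ?_, ⟨l0 + 1 + 1, ?_⟩⟩
  · -- z * S * z = z
    rw [hzS]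
    have e3 : FD * F * (G * (FD * FD)) = 0 := by
      rw [mul_assoc, hFG' (FD * FD), mul_zero]
    have e4 : G * FD * (G * (FD * FD)) = 0 := by
      rw [mul_assoc, hFDG' (FD * FD), mul_zero]
    have e5 : G * FD * FD = G * (FD * FD) := by rw [mul_assoc]
    rw [add_mul, mul_add, mul_add, ha, e3, e4, e5, add_zero, add_zero]
  · rw [hSz, hzS, hc]
  · -- index
    have hSpow2 : ∀ n, (F + G) ^ (n + 1) = F ^ (n + 1) + G * F ^ n := by
      intro n
      induction n with
      | zero => simp
      | succ n ih =>
          rw [pow_succ' (F + G), ih, mul_add, add_mul, add_mul, hGG' (F ^ n),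
            hFG' (F ^ n), ← pow_succ' F (n + 1), add_zero, add_zero]
    rw [hSpow2 (l0 + 1 + 1), hSpow2 (l0 + 1)]
    have hpt1 : F ^ (l0 + 1 + 1 + 1) * FD = F ^ (l0 + 1 + 1) := bump hp0 2
    have hpt0 : F ^ (l0 + 1 + 1) * FD = F ^ (l0 + 1) := bump hp0 1
    have e6 : F ^ (l0 + 1 + 1 + 1) * (G * (FD * FD)) = 0 := by
      rw [pow_succ F (l0 + 1 + 1), mul_assoc, hFG' (FD * FD), mul_zero]
    have e7 : G * F ^ (l0 + 1 + 1) * FD = G * F ^ (l0 + 1) := by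
      rw [mul_assoc, hpt0]
    have e8 : G * F ^ (l0 + 1 + 1) * (G * (FD * FD)) = 0 := by
      rw [pow_succ F (l0 + 1), mul_assoc, mul_assoc, hFG' (FD * FD), mul_zero, mul_zero]
    rw [add_mul, mul_add, mul_add, hpt1, e6, e7, e8, add_zero, add_zero]


lemma drz_Lsum {F G FD : R} (h : isD F FD) (hGF : G * F = 0) {m : ℕ} (hGm : G ^ m = 0) :
    isD (F + G) (∑ n ∈ Finset.range m, FD ^ (n + 1) * G ^ n) := by
  match m, hGm with
  | 0, hGm =>
    have h10 : (0 : R) = 1 := by simpa using hGm.symm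
    have : Subsingleton R := subsingleton_of_zero_eq_one h10
    exact ⟨Subsingleton.elim _ _, Subsingleton.elim _ _, 0, Subsingleton.elim _ _⟩
  | (m' + 1), hGm =>
  obtain ⟨ha, hc, l0, hp0⟩ := h
  have hcom : Commute F FD := hc
  have hGF' : ∀ x : R, G * (F * x) = 0 := fun x => by rw [← mul_assoc, hGF, zero_mul]
  have hGFD : G * FD = 0 := by
    have hrepR : F ^ (l0 + 1) * FD ^ (l0 + 1 + 1) = FD := drz_pow_right hc ha (l0 + 1)
    calc G * FD = G * (F ^ (l0 + 1) * FD ^ (l0 + 1 + 1)) := by rw [hrepR]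
      _ = G * (F * (F ^ l0 * FD ^ (l0 + 1 + 1))) := by
            rw [pow_succ' F l0]; simp only [mul_assoc]
      _ = 0 := hGF' _
  have hGFD' : ∀ x : R, G * (FD * x) = 0 := fun x => by rw [← mul_assoc, hGFD, zero_mul]
  have hGn1FD : ∀ n (x : R), G ^ (n + 1) * (FD * x) = 0 := fun n x => by
    rw [pow_succ, mul_assoc, hGFD' x, mul_zero]
  have hGn1F : ∀ n (x : R), G ^ (n + 1) * (F * x) = 0 := fun n x => by
    rw [pow_succ, mul_assoc, hGF' x, mul_zero]
  have hGn1Fbare : ∀ n, G ^ (n + 1) * F = 0 := fun n => by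
    rw [pow_succ, mul_assoc, hGF, mul_zero]
  have hFDF : ∀ i, FD ^ (i + 1 + 1) * F = FD ^ (i + 1) := by
    intro i
    calc FD ^ (i + 1 + 1) * F = FD ^ i * (FD * (FD * F)) := by
          rw [pow_succ, pow_succ]; simp only [mul_assoc]
      _ = FD ^ i * (FD * (F * FD)) := by rw [← hc]
      _ = FD ^ i * (FD * F * FD) := by rw [← mul_assoc FD F FD]
      _ = FD ^ i * FD := by rw [ha]
      _ = FD ^ (i + 1) := (pow_succ FD i).symm
  -- key sum computations
  have hFz : F * (∑ n ∈ Finset.range (m' + 1), FD ^ (n + 1) * G ^ n)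
      = (∑ i ∈ Finset.range m', FD ^ (i + 1) * G ^ (i + 1)) + F * FD := by
    rw [Finset.mul_sum, Finset.sum_range_succ']
    congr 1
    · refine Finset.sum_congr rfl fun i _ => ?_
      rw [← mul_assoc, (hcom.pow_right (i + 1 + 1)).eq, hFDF i]
    · simp
  have hGz : G * (∑ n ∈ Finset.range (m' + 1), FD ^ (n + 1) * G ^ n) = 0 := by
    rw [Finset.mul_sum]
    refine Finset.sum_eq_zero fun n _ => ?_
    rw [pow_succ' FD n, mul_assoc FD (FD ^ n) (G ^ n)]
    exact hGFD' _
  have hSz : (F + G) * (∑ n ∈ Finset.range (m' + 1), FD ^ (n + 1) * G ^ n)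
      = (∑ i ∈ Finset.range m', FD ^ (i + 1) * G ^ (i + 1)) + F * FD := by
    rw [add_mul, hFz, hGz, add_zero]
  have hzF : (∑ n ∈ Finset.range (m' + 1), FD ^ (n + 1) * G ^ n) * F = FD * F := by
    rw [Finset.sum_mul, Finset.sum_range_succ']
    have hz0 : (∑ i ∈ Finset.range m', FD ^ (i + 1 + 1) * G ^ (i + 1) * F) = 0 := by
      refine Finset.sum_eq_zero fun i _ => ?_
      rw [mul_assoc, hGn1Fbare, mul_zero]
    rw [hz0, zero_add]
    simp
  have hzG : (∑ n ∈ Finset.range (m' + 1), FD ^ (n + 1) * G ^ n) * G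
      = ∑ i ∈ Finset.range m', FD ^ (i + 1) * G ^ (i + 1) := by
    rw [Finset.sum_mul]
    have : ∀ n ∈ Finset.range (m' + 1),
        FD ^ (n + 1) * G ^ n * G = FD ^ (n + 1) * G ^ (n + 1) := fun n _ => by
      rw [mul_assoc, ← pow_succ]
    rw [Finset.sum_congr rfl this, Finset.sum_range_succ, hGm, mul_zero, add_zero]
  have hzS : (∑ n ∈ Finset.range (m' + 1), FD ^ (n + 1) * G ^ n) * (F + G)
      = FD * F + ∑ i ∈ Finset.range m', FD ^ (i + 1) * G ^ (i + 1) := by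
    rw [mul_add, hzF, hzG]
  refine ⟨?_, ?_, ⟨l0 + m' + 2, ?_⟩⟩
  · -- z S z = z
    rw [hzS, add_mul]
    have e5 : FD * F * (∑ n ∈ Finset.range (m' + 1), FD ^ (n + 1) * G ^ n)
        = ∑ n ∈ Finset.range (m' + 1), FD ^ (n + 1) * G ^ n := by
      rw [Finset.mul_sum]
      refine Finset.sum_congr rfl fun j _ => ?_
      calc FD * F * (FD ^ (j + 1) * G ^ j) = FD * F * FD * (FD ^ j * G ^ j) := by
            rw [pow_succ' FD j]; simp only [mul_assoc]
        _ = FD * (FD ^ j * G ^ j) := by rw [ha]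
        _ = FD ^ (j + 1) * G ^ j := by rw [← mul_assoc, ← pow_succ']
    have e6 : (∑ i ∈ Finset.range m', FD ^ (i + 1) * G ^ (i + 1))
        * (∑ n ∈ Finset.range (m' + 1), FD ^ (n + 1) * G ^ n) = 0 := by
      rw [Finset.sum_mul]
      refine Finset.sum_eq_zero fun i _ => ?_
      rw [mul_assoc]
      have hz : G ^ (i + 1) * (∑ n ∈ Finset.range (m' + 1), FD ^ (n + 1) * G ^ n) = 0 := by
        rw [Finset.mul_sum]
        refine Finset.sum_eq_zero fun j _ => ?_
        rw [pow_succ' FD j, mul_assoc FD (FD ^ j) (G ^ j)]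
        exact hGn1FD i _
      rw [hz, mul_zero]
    rw [e5, e6, add_zero]
  · rw [hSz, hzS, hc, add_comm]
  · -- index
    have hSpow : ∀ n, (F + G) ^ n = ∑ i ∈ Finset.range (n + 1), F ^ (n - i) * G ^ i := by
      intro n
      induction n with
      | zero => simp
      | succ n ih =>
          rw [pow_succ, ih, Finset.sum_mul]
          have expand : ∀ i ∈ Finset.range (n + 1),
              F ^ (n - i) * G ^ i * (F + G)
              = F ^ (n - i) * G ^ i * F + F ^ (n - i) * G ^ (i + 1) := fun i _ => by
            rw [mul_add, mul_assoc (F ^ (n - i)) (G ^ i) G, ← pow_succ]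
          rw [Finset.sum_congr rfl expand, Finset.sum_add_distrib]
          have first : (∑ i ∈ Finset.range (n + 1), F ^ (n - i) * G ^ i * F)
              = F ^ (n + 1) := by
            rw [Finset.sum_range_succ']
            have hz0 : (∑ i ∈ Finset.range n, F ^ (n - (i + 1)) * G ^ (i + 1) * F) = 0 := by
              refine Finset.sum_eq_zero fun i _ => ?_
              rw [mul_assoc, hGn1Fbare, mul_zero]
            rw [hz0, zero_add]
            simp [pow_succ]
          rw [first, Finset.sum_range_succ' (fun i => F ^ (n + 1 - i) * G ^ i) (n + 1)]
          have congr2 : (∑ i ∈ Finset.range (n + 1), F ^ (n + 1 - (i + 1)) * G ^ (i + 1))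
              = ∑ i ∈ Finset.range (n + 1), F ^ (n - i) * G ^ (i + 1) := by
            refine Finset.sum_congr rfl fun i _ => ?_
            rw [Nat.succ_sub_succ]
          rw [congr2]
          simp [add_comm]
    have hSt : (F + G) ^ (l0 + m' + 2)
        = ∑ i ∈ Finset.range (m' + 1), F ^ (l0 + m' + 2 - i) * G ^ i := by
      rw [hSpow (l0 + m' + 2)]
      refine (Finset.sum_subset (Finset.range_subset_range.2 (by omega)) fun i hi hni => ?_).symm
      have him : m' + 1 ≤ i := by
        by_contra hlt
        exact hni (Finset.mem_range.2 (by omega))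
      rw [show i = m' + 1 + (i - (m' + 1)) from by omega, pow_add, hGm, zero_mul, mul_zero]
    rw [pow_succ, mul_assoc, hSz, hSt, mul_add]
    have part2 : (∑ i ∈ Finset.range (m' + 1), F ^ (l0 + m' + 2 - i) * G ^ i) * (F * FD)
        = F ^ (l0 + m' + 2) := by
      rw [Finset.sum_mul, Finset.sum_range_succ']
      have hz0 : (∑ i ∈ Finset.range m',
          F ^ (l0 + m' + 2 - (i + 1)) * G ^ (i + 1) * (F * FD)) = 0 := by
        refine Finset.sum_eq_zero fun i _ => ?_
        rw [mul_assoc, hGn1F, mul_zero]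
      rw [hz0, zero_add]
      have : F ^ (l0 + m' + 2 - 0) * G ^ 0 * (F * FD) = F ^ (l0 + m' + 2) := by
        rw [pow_zero, mul_one, ← mul_assoc, ← pow_succ]
        have := bump hp0 (m' + 2)
        rwa [show l0 + (m' + 2) = l0 + m' + 2 from by omega] at this
      rw [this]
    have part1 : (∑ i ∈ Finset.range (m' + 1), F ^ (l0 + m' + 2 - i) * G ^ i)
        * (∑ i ∈ Finset.range m', FD ^ (i + 1) * G ^ (i + 1))
        = ∑ i ∈ Finset.range m', F ^ (l0 + m' + 2 - (i + 1)) * G ^ (i + 1) := by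
      rw [Finset.mul_sum]
      refine Finset.sum_congr rfl fun i hi => ?_
      rw [Finset.sum_mul, Finset.sum_range_succ']
      have hz0 : (∑ j ∈ Finset.range m',
          F ^ (l0 + m' + 2 - (j + 1)) * G ^ (j + 1) * (FD ^ (i + 1) * G ^ (i + 1))) = 0 := by
        refine Finset.sum_eq_zero fun j _ => ?_
        rw [pow_succ' FD i, mul_assoc (FD) (FD ^ i) (G ^ (i + 1)), mul_assoc, hGn1FD, mul_zero]
      rw [hz0, zero_add, pow_zero, mul_one]
      have him : i < m' := Finset.mem_range.1 hi
      have base : ∀ j u, F ^ (l0 + 1 + u + j) * FD ^ j = F ^ (l0 + 1 + u) := by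
        intro j
        induction j with
        | zero => intro u; simp
        | succ j ih =>
            intro u
            have hstep : F ^ (l0 + 1 + u + (j + 1)) * FD = F ^ (l0 + 1 + u + j) := by
              have := bump hp0 (u + j + 1)
              rwa [show l0 + (u + j + 1) + 1 = l0 + 1 + u + (j + 1) from by omega,
                show l0 + (u + j + 1) = l0 + 1 + u + j from by omega] at this
            rw [pow_succ' FD j, ← mul_assoc, hstep, ih u]
      have key : F ^ (l0 + m' + 2 - 0) * FD ^ (i + 1) = F ^ (l0 + m' + 2 - (i + 1)) := by
        have := base (i + 1) (m' - i)
        rwa [show l0 + 1 + (m' - i) + (i + 1) = l0 + m' + 2 - 0 from by omega,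
          show l0 + 1 + (m' - i) = l0 + m' + 2 - (i + 1) from by omega] at this
      rw [← mul_assoc, key]
    rw [part1, part2,
      Finset.sum_range_succ' (fun i => F ^ (l0 + m' + 2 - i) * G ^ i) m']
    simp

end Generic


theorem stmt4
    {p q : Type*} [Fintype p] [DecidableEq p] [Fintype q] [DecidableEq q]
    (A AD : Matrix p p ℂ) (D DD : Matrix q q ℂ)
    (B : Matrix q p ℂ) (C : Matrix p q ℂ)
    (hA : IsDrazinInverse A AD) (hD : IsDrazinInverse D DD)
    (Y S Ae Aπ SAe : Matrix p p ℂ)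
    (hY : Y = C * DD * B) (hS : S = A - Y)
    (hAe : Ae = A * AD) (hAπ : Aπ = 1 - A * AD)
    (hSAe : SAe = Ae * S * Ae)
    (X : Matrix p p ℂ) (hX : IsDrazinInverse SAe X)
    (k : ℕ) (hk : A ^ (k + 1) * AD = A ^ k)
    (hcond : S * Aπ * Y = 0) :
    IsDrazinInverse S
      (-(∑ i ∈ Finset.range k,
          (X ^ (i + 2) - Aπ * Y * X ^ (i + 3)) * Y * Aπ * A ^ i)
        + X - Aπ * Y * X ^ 2) := by
  have hADA : AD * A * AD = AD := hA.1
  have hcA : A * AD = AD * A := hA.2.1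
  have hP2 : Ae * Ae = Ae := by
    rw [hAe]
    calc A * AD * (A * AD) = A * (AD * A * AD) := by simp only [mul_assoc]
      _ = A * AD := by rw [hADA]
  have hPA : Ae * A = A * Ae := by rw [hAe, mul_assoc, ← hcA]
  have hQeq : Aπ = 1 - Ae := by rw [hAπ, hAe]
  have hPQ0 : Ae * Aπ = 0 := by rw [hQeq, mul_sub, mul_one, hP2, sub_self]
  have hQP0 : Aπ * Ae = 0 := by rw [hQeq, sub_mul, one_mul, hP2, sub_self]
  have hPQ1 : Ae + Aπ = 1 := by rw [hQeq]; abel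
  have hQA : Aπ * A = A * Aπ := by
    rw [hQeq, sub_mul, one_mul, mul_sub, mul_one, hPA]
  have hQ2 : Aπ * Aπ = Aπ := by
    nth_rewrite 1 [hQeq]
    rw [sub_mul, one_mul, hPQ0, sub_zero]
  have hQAP : Aπ * (A * Ae) = 0 := by rw [← hPA, ← mul_assoc, hQP0, zero_mul]
  have hcAQ : Commute A Aπ := hQA.symm
  have hcAP : Commute A Ae := hPA.symm
  have hAnQ : ∀ n, A ^ n * Aπ = Aπ * A ^ n := fun n => (hcAQ.pow_left n).eq
  have hAnP : ∀ n, Ae * A ^ n = A ^ n * Ae := fun n => (hcAP.pow_left n).eq.symm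
  have hAkQ : A ^ k * Aπ = 0 := by
    rw [hAπ, mul_sub, mul_one, ← mul_assoc, ← pow_succ, hk, sub_self]
  -- X = Ae * X * Ae
  have hPSAe : Ae * SAe = SAe := by rw [hSAe, ← mul_assoc, ← mul_assoc, hP2]
  have hSAeP : SAe * Ae = SAe := by rw [hSAe, mul_assoc, hP2]
  obtain ⟨xa, xc, lx, xp⟩ := (hX : isD SAe X)
  have hX' : isD SAe (Ae * X * Ae) := by
    refine ⟨?_, ?_, ⟨lx + 1, ?_⟩⟩
    · calc Ae * X * Ae * SAe * (Ae * X * Ae)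
          = Ae * X * (Ae * SAe) * (Ae * X * Ae) := by simp only [mul_assoc]
        _ = Ae * X * SAe * (Ae * X * Ae) := by rw [hPSAe]
        _ = Ae * X * (SAe * Ae) * (X * Ae) := by simp only [mul_assoc]
        _ = Ae * X * SAe * (X * Ae) := by rw [hSAeP]
        _ = Ae * (X * SAe * X) * Ae := by simp only [mul_assoc]
        _ = Ae * X * Ae := by rw [xa]
    · have h1 : SAe * (Ae * X * Ae) = X * SAe := by
        calc SAe * (Ae * X * Ae) = SAe * Ae * X * Ae := by simp only [mul_assoc]
          _ = SAe * X * Ae := by rw [hSAeP]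
          _ = X * SAe * Ae := by rw [xc]
          _ = X * SAe := by rw [mul_assoc, hSAeP]
      have h2 : Ae * X * Ae * SAe = X * SAe := by
        calc Ae * X * Ae * SAe = Ae * X * (Ae * SAe) := by rw [mul_assoc]
          _ = Ae * X * SAe := by rw [hPSAe]
          _ = Ae * (SAe * X) := by rw [mul_assoc, ← xc]
          _ = Ae * SAe * X := by rw [← mul_assoc]
          _ = SAe * X := by rw [hPSAe]
          _ = X * SAe := xc
      rw [h1, h2]
    · have hpow_base : ∀ n, SAe ^ (n + 1) * Ae = SAe ^ (n + 1) := fun n => by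
        rw [pow_succ, mul_assoc, hSAeP]
      calc SAe ^ (lx + 1 + 1) * (Ae * X * Ae)
          = SAe ^ (lx + 1 + 1) * Ae * X * Ae := by simp only [mul_assoc]
        _ = SAe ^ (lx + 1 + 1) * X * Ae := by rw [hpow_base]
        _ = SAe * (SAe ^ (lx + 1) * X) * Ae := by
              rw [pow_succ' SAe (lx + 1)]; simp only [mul_assoc]
        _ = SAe * SAe ^ lx * Ae := by rw [xp]
        _ = SAe ^ (lx + 1) * Ae := by rw [← pow_succ']
        _ = SAe ^ (lx + 1) := hpow_base lx
  have hXPXP : X = Ae * X * Ae := isD_unique ⟨xa, xc, lx, xp⟩ hX'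
  have hPX : Ae * X = X := by
    conv_lhs => rw [hXPXP]
    rw [← mul_assoc, ← mul_assoc, hP2, ← hXPXP]
  have hXP : X * Ae = X := by
    conv_lhs => rw [hXPXP]
    rw [mul_assoc, hP2, ← hXPXP]
  have hXQ : X * Aπ = 0 := by rw [← hXP, mul_assoc, hPQ0, mul_zero]
  have hQX : Aπ * X = 0 := by rw [← hPX, ← mul_assoc, hQP0, zero_mul]
  -- inner additive step
  have hUW : SAe * (Aπ * S * Ae) = 0 := by
    rw [hSAe]
    calc Ae * S * Ae * (Aπ * S * Ae) = Ae * S * (Ae * (Aπ * (S * Ae))) := by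
          simp only [mul_assoc]
      _ = 0 := by rw [← mul_assoc Ae Aπ (S * Ae), hPQ0, zero_mul, mul_zero]
  have hWW : (Aπ * S * Ae) * (Aπ * S * Ae) = 0 := by
    calc Aπ * S * Ae * (Aπ * S * Ae) = Aπ * S * (Ae * (Aπ * (S * Ae))) := by
          simp only [mul_assoc]
      _ = 0 := by rw [← mul_assoc Ae Aπ (S * Ae), hPQ0, zero_mul, mul_zero]
  have hFD1 : isD (SAe + Aπ * S * Ae) (X + (Aπ * S * Ae) * (X * X)) :=
    drz_L2 ⟨xa, xc, lx, xp⟩ hUW hWW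
  have hSP : SAe + Aπ * S * Ae = S * Ae := by
    rw [hSAe, mul_assoc, mul_assoc, ← add_mul, hPQ1, one_mul]
  rw [hSP] at hFD1
  -- nilpotent part
  have hSQS : S * Aπ * S = S * Aπ * A := by
    nth_rewrite 2 [hS]
    rw [mul_sub, hcond, sub_zero]
  have hGF : S * Aπ * (S * Ae) = 0 := by
    calc S * Aπ * (S * Ae) = S * Aπ * S * Ae := by rw [← mul_assoc]
      _ = S * Aπ * A * Ae := by rw [hSQS]
      _ = S * (Aπ * (A * Ae)) := by simp only [mul_assoc]
      _ = 0 := by rw [hQAP, mul_zero]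
  have hGpow : ∀ n, (S * Aπ) ^ (n + 1) = S * A ^ n * Aπ := by
    intro n
    induction n with
    | zero => rw [pow_one, pow_zero, mul_one]
    | succ n ih =>
        rw [pow_succ' (S * Aπ) (n + 1), ih]
        calc S * Aπ * (S * A ^ n * Aπ) = (S * Aπ * S) * (A ^ n * Aπ) := by
              simp only [mul_assoc]
          _ = (S * Aπ * A) * (A ^ n * Aπ) := by rw [hSQS]
          _ = S * (Aπ * (A * A ^ n) * Aπ) := by simp only [mul_assoc]
          _ = S * (Aπ * A ^ (n + 1) * Aπ) := by rw [← pow_succ']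
          _ = S * (A ^ (n + 1) * Aπ * Aπ) := by rw [← hAnQ]
          _ = S * (A ^ (n + 1) * Aπ) := by rw [mul_assoc, hQ2]
          _ = S * A ^ (n + 1) * Aπ := by rw [← mul_assoc]
  have hGm : (S * Aπ) ^ (k + 1) = 0 := by rw [hGpow k, mul_assoc, hAkQ, mul_zero]
  have hmain : isD (S * Ae + S * Aπ)
      (∑ n ∈ Finset.range (k + 1),
        (X + (Aπ * S * Ae) * (X * X)) ^ (n + 1) * (S * Aπ) ^ n) :=
    drz_Lsum hFD1 hGF hGm
  have hSsum : S * Ae + S * Aπ = S := by rw [← mul_add, hPQ1, mul_one]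
  rw [hSsum] at hmain
  -- transform the candidate
  have hXW : X * (Aπ * S * Ae) = 0 := by
    rw [← mul_assoc, ← mul_assoc, hXQ, zero_mul, zero_mul]
  have hFDpow : ∀ n, (X + (Aπ * S * Ae) * (X * X)) ^ (n + 1)
      = X ^ (n + 1) + (Aπ * S * Ae) * X ^ (n + 2) := by
    intro n
    induction n with
    | zero => rw [pow_one, pow_one, pow_two]
    | succ n ih =>
        rw [pow_succ (X + (Aπ * S * Ae) * (X * X)) (n + 1), ih]
        have e1 : X ^ (n + 1) * ((Aπ * S * Ae) * (X * X)) = 0 := by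
          rw [pow_succ, mul_assoc, ← mul_assoc X (Aπ * S * Ae) (X * X), hXW,
            zero_mul, mul_zero]
        have hzz : ∀ v : Matrix p p ℂ, X * (Aπ * v) = 0 := fun v => by
          rw [← mul_assoc, hXQ, zero_mul]
        have hXnQ : ∀ v : Matrix p p ℂ, X ^ (n + 2) * (Aπ * v) = 0 := fun v => by
          rw [show n + 2 = n + 1 + 1 from by omega, pow_succ, mul_assoc, hzz, mul_zero]
        have e2 : (Aπ * S * Ae) * X ^ (n + 2) * ((Aπ * S * Ae) * (X * X)) = 0 := by
          simp only [mul_assoc]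
          rw [hXnQ, mul_zero, mul_zero, mul_zero]
        have e3 : (Aπ * S * Ae) * X ^ (n + 2) * X = (Aπ * S * Ae) * X ^ (n + 2 + 1) := by
          rw [mul_assoc, ← pow_succ]
        rw [add_mul, mul_add, mul_add, e1, e2, e3, add_zero, add_zero, ← pow_succ,
          show n + 2 + 1 = n + 1 + 2 from by omega]
  have hWX : (Aπ * S * Ae) * X = -(Aπ * Y * X) := by
    rw [mul_assoc, hPX, hS, mul_sub, sub_mul]
    have hz : Aπ * A * X = 0 := by
      rw [← hPX, ← mul_assoc, mul_assoc Aπ A Ae, hQAP, zero_mul]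
    rw [hz, zero_sub]
  have hWXpow : ∀ j, (Aπ * S * Ae) * X ^ (j + 1) = -(Aπ * Y * X ^ (j + 1)) := by
    intro j
    calc (Aπ * S * Ae) * X ^ (j + 1) = ((Aπ * S * Ae) * X) * X ^ j := by
          rw [pow_succ' X j, ← mul_assoc]
      _ = -(Aπ * Y * X * X ^ j) := by rw [hWX, neg_mul]
      _ = -(Aπ * Y * X ^ (j + 1)) := by rw [mul_assoc (Aπ * Y) X (X ^ j), ← pow_succ' X j]
  have hXAn : ∀ n, X * (A ^ n * Aπ) = 0 := fun n => by
    rw [← hXP, mul_assoc, ← mul_assoc Ae (A ^ n) Aπ, hAnP, mul_assoc (A ^ n) Ae Aπ,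
      hPQ0, mul_zero, mul_zero]
  have hXpowAn : ∀ j n, X ^ (j + 1) * (A ^ n * Aπ) = 0 := fun j n => by
    rw [pow_succ, mul_assoc, hXAn, mul_zero]
  -- final sum identity
  have hfinal : (∑ n ∈ Finset.range (k + 1),
        (X + (Aπ * S * Ae) * (X * X)) ^ (n + 1) * (S * Aπ) ^ n)
      = -(∑ i ∈ Finset.range k,
          (X ^ (i + 2) - Aπ * Y * X ^ (i + 3)) * Y * Aπ * A ^ i)
        + X - Aπ * Y * X ^ 2 := by
    have hterm : ∀ n ∈ Finset.range (k + 1),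
        (X + (Aπ * S * Ae) * (X * X)) ^ (n + 1) * (S * Aπ) ^ n
        = (X ^ (n + 1) + (Aπ * S * Ae) * X ^ (n + 2)) * (S * Aπ) ^ n := fun n _ => by
      rw [hFDpow n]
    rw [Finset.sum_congr rfl hterm, Finset.sum_range_succ']
    have hzero_term : (X ^ (0 + 1) + (Aπ * S * Ae) * X ^ (0 + 2)) * (S * Aπ) ^ 0
        = X - Aπ * Y * X ^ 2 := by
      rw [pow_zero, mul_one, show (0:ℕ) + 1 = 1 from rfl, show (0:ℕ) + 2 = 2 from rfl,
        pow_one, show (2:ℕ) = 1 + 1 from rfl, hWXpow 1, ← sub_eq_add_neg]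
    rw [hzero_term]
    have hterm2 : ∀ i ∈ Finset.range k,
        (X ^ (i + 1 + 1) + (Aπ * S * Ae) * X ^ (i + 1 + 2)) * (S * Aπ) ^ (i + 1)
        = -((X ^ (i + 2) - Aπ * Y * X ^ (i + 3)) * Y * Aπ * A ^ i) := by
      intro i _
      rw [show i + 1 + 1 = i + 2 from by omega, show i + 1 + 2 = i + 3 from by omega,
        show i + 3 = (i + 2) + 1 from by omega, hWXpow (i + 2), ← sub_eq_add_neg,
        hGpow i]
      have hsplit : S * A ^ i * Aπ = A ^ (i + 1) * Aπ - Y * (A ^ i * Aπ) := by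
        rw [hS, sub_mul, sub_mul, ← pow_succ', mul_assoc]
      rw [hsplit, mul_sub]
      have e1 : X ^ (i + 2) * (A ^ (i + 1) * Aπ) = 0 := by
        have := hXpowAn (i + 1) (i + 1)
        rwa [show i + 1 + 1 = i + 2 from by omega] at this
      have e2 : Aπ * Y * X ^ (i + 2 + 1) * (A ^ (i + 1) * Aπ) = 0 := by
        rw [mul_assoc (Aπ * Y) (X ^ (i + 2 + 1)) (A ^ (i + 1) * Aπ),
          hXpowAn (i + 2) (i + 1), mul_zero]
      rw [sub_mul, e1, e2, sub_zero, zero_sub, hAnQ i]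
      simp only [mul_assoc]
    rw [Finset.sum_congr rfl hterm2, ← Finset.sum_neg_distrib]
    abel
  rw [hfinal] at hmain
  exact hmain
end

section
/- Suppose Y*A^π*S = 0 and let k be a natural number with A^(k+1)*A^D = A^k (so k is at least the index of A). Then S has a Drazin inverse, given by S^D = −Σ_{i=0}^{k−1} A^i*A^π*Y*(X^{i+2} − X^{i+3}*Y*A^π) + X − X^2*Y*A^π. -/
/-!
Put `e = A A^D` and `π = 1 - e`, and split `S = e S + π S`. The hypothesis `Y π S = 0` gives
`(e S)(π S) = 0` and `(π S)^(j+1) = A^j π S`, so `π S` is nilpotent because `A^k π = 0`.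
By Cline's formula `(a b)^D = a ((b a)^D)^2 b`, the element `e S` has Drazin inverse `X^2 S`,
and if `P Q = 0` with `Q^(n+1) = 0` then `(P + Q)^D = ∑_{i ≤ n} Q^i (P^D)^(i+1)`.
Expanding this sum gives the stated formula.
-/

open Matrix Finset

/-- `IsDrazinInverse`, in an arbitrary monoid. -/
def IsDrazinInv {M : Type*} [Monoid M] (a x : M) : Prop :=
  x * a * x = x ∧ a * x = x * a ∧ ∃ l : ℕ, a ^ (l + 1) * x = a ^ l

section Monoid

variable {M : Type*} [Monoid M] {a b e x : M}

theorem pow_succ_mul_of_le {l m : ℕ} (hl : a ^ (l + 1) * x = a ^ l) (hlm : l ≤ m) :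
    a ^ (m + 1) * x = a ^ m := by
  obtain ⟨d, rfl⟩ := Nat.exists_eq_add_of_le hlm
  rw [show l + d + 1 = d + (l + 1) by omega, pow_add, mul_assoc, hl, ← pow_add, add_comm]

theorem sq_mul_pow_succ (h : x * b * x = x) (n : ℕ) :
    (x ^ 2 * b) ^ (n + 1) = x ^ (n + 2) * b := by
  induction n with
  | zero => rw [pow_one]
  | succ n ih =>
    calc (x ^ 2 * b) ^ (n + 1 + 1) = x ^ (n + 1) * (x * b * x) * x * b := by
          rw [pow_succ, ih]; simp only [pow_succ, pow_zero, one_mul, mul_assoc]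
      _ = x ^ (n + 1 + 2) * b := by rw [h]; simp only [pow_succ, mul_assoc]

namespace IsDrazinInv

theorem mul_sq (h : IsDrazinInv a x) : a * x ^ 2 = x := by
  rw [sq, ← mul_assoc, h.2.1, h.1]

theorem sq_mul (h : IsDrazinInv a x) : x ^ 2 * a = x := by
  rw [sq, mul_assoc, ← h.2.1, ← mul_assoc, h.1]

theorem of_mul_swap (h : IsDrazinInv (b * a) x) : IsDrazinInv (a * b) (a * x ^ 2 * b) := by
  have hx : b * a * x ^ 2 = x := h.mul_sq
  have hx' : x ^ 2 * (b * a) = x := h.sq_mul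
  obtain ⟨-, -, l, hl⟩ := h
  refine ⟨?_, ?_, l + 1, ?_⟩
  · calc a * x ^ 2 * b * (a * b) * (a * x ^ 2 * b)
        = a * (x ^ 2 * (b * a)) * (b * a * x ^ 2) * b := by simp only [mul_assoc]
      _ = a * x ^ 2 * b := by rw [hx, hx', mul_assoc a x x, ← sq]
  · calc a * b * (a * x ^ 2 * b) = a * (b * a * x ^ 2) * b := by simp only [mul_assoc]
      _ = a * (x ^ 2 * (b * a)) * b := by rw [hx, hx']
      _ = a * x ^ 2 * b * (a * b) := by simp only [mul_assoc]
  · calc (a * b) ^ (l + 1 + 1) * (a * x ^ 2 * b) = (a * b) ^ (l + 1 + 1) * a * x ^ 2 * b := by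
          simp only [mul_assoc]
      _ = a * ((b * a) ^ (l + 1) * (b * a * x ^ 2)) * b := by
          rw [mul_pow_mul, pow_succ (b * a) (l + 1)]; simp only [mul_assoc]
      _ = (a * b) ^ (l + 1) := by rw [hx, hl, pow_succ, ← mul_assoc, mul_pow_mul, mul_assoc]

section Corner

variable {s : M}

theorem idempotent_mul_eq_self (he : IsIdempotentElem e) (h : IsDrazinInv (e * s * e) x) :
    e * x = x := by
  rw [← h.mul_sq, ← mul_assoc, ← mul_assoc, ← mul_assoc, he.eq]

theorem mul_idempotent_eq_self (he : IsIdempotentElem e) (h : IsDrazinInv (e * s * e) x) :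
    x * e = x := by
  rw [← h.sq_mul, mul_assoc, mul_assoc, he.eq]

theorem mul_mul_eq_self (he : IsIdempotentElem e) (h : IsDrazinInv (e * s * e) x) :
    x * s * x = x := by
  calc x * s * x = x * e * s * (e * x) := by
        rw [h.mul_idempotent_eq_self he, h.idempotent_mul_eq_self he]
    _ = x := by simpa only [mul_assoc] using h.1

theorem of_idempotent_mul_mul (he : IsIdempotentElem e) (h : IsDrazinInv (e * s * e) x) :
    IsDrazinInv (e * s) (x ^ 2 * s) := by
  have hcline := IsDrazinInv.of_mul_swap (a := e) (b := e * s) h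
  rwa [← mul_assoc e e, he.eq, sq, ← mul_assoc e, h.idempotent_mul_eq_self he,
    ← mul_assoc (x * x) e, mul_assoc x x e, h.mul_idempotent_eq_self he, ← sq] at hcline

end Corner

end IsDrazinInv

end Monoid

section Ring

variable {R : Type*} [Ring R]

theorem mul_add_pow_of_mul_eq_zero {P Q : R} (hPQ : P * Q = 0) (m : ℕ) :
    P * (P + Q) ^ m = P ^ (m + 1) := by
  induction m with
  | zero => simp
  | succ m ih => rw [pow_succ', ← mul_assoc, mul_add, hPQ, add_zero, mul_assoc, ih, ← pow_succ']

theorem add_pow_succ_of_mul_eq_zero {P Q : R} (hPQ : P * Q = 0) (m : ℕ) :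
    (P + Q) ^ (m + 1) = P ^ (m + 1) + Q * (P + Q) ^ m := by
  rw [pow_succ', add_mul, mul_add_pow_of_mul_eq_zero hPQ]

theorem add_pow_mul_eq_of_mul_eq_zero {P Q E : R} {l n : ℕ} (hPQ : P * Q = 0) (hQ : Q ^ n = 0)
    (hPE : ∀ m, l ≤ m → P ^ (m + 1) * E = P ^ (m + 1)) :
    (P + Q) ^ (l + n) * E = (P + Q) ^ (l + n) := by
  have key : ∀ r, (P + Q) ^ (l + r) * E - (P + Q) ^ (l + r)
      = Q ^ r * ((P + Q) ^ l * E - (P + Q) ^ l) := by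
    intro r
    induction r with
    | zero => simp
    | succ r ih =>
      calc (P + Q) ^ (l + r + 1) * E - (P + Q) ^ (l + r + 1)
          = P ^ (l + r + 1) * E - P ^ (l + r + 1)
            + Q * ((P + Q) ^ (l + r) * E - (P + Q) ^ (l + r)) := by
            rw [add_pow_succ_of_mul_eq_zero hPQ]; noncomm_ring
        _ = Q ^ (r + 1) * ((P + Q) ^ l * E - (P + Q) ^ l) := by
            rw [hPE _ (by omega), sub_self, zero_add, ih, ← mul_assoc, ← pow_succ']
  rw [← sub_eq_zero, key, hQ, zero_mul]

theorem IsDrazinInv.add_of_mul_eq_zero {P Q W : R} (hW : IsDrazinInv P W) (hPQ : P * Q = 0)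
    {n : ℕ} (hQ : Q ^ (n + 1) = 0) :
    IsDrazinInv (P + Q) (∑ i ∈ range (n + 1), Q ^ i * W ^ (i + 1)) := by
  set Z := ∑ i ∈ range (n + 1), Q ^ i * W ^ (i + 1) with hZ
  set E := P * W + ∑ i ∈ range n, Q ^ (i + 1) * W ^ (i + 1)
  have hWQ : W * Q = 0 := by rw [← hW.sq_mul, mul_assoc, hPQ, mul_zero]
  have hWP : ∀ i, W ^ (i + 2) * P = W ^ (i + 1) := fun i => by
    rw [pow_add, mul_assoc, hW.sq_mul, ← pow_succ]
  have hPQW : ∀ i (V : R), P * (Q ^ (i + 1) * V) = 0 := fun i V => by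
    rw [pow_succ', ← mul_assoc, ← mul_assoc, hPQ, zero_mul, zero_mul]
  have hZQ : Z * Q = 0 := by
    rw [sum_mul]
    exact sum_eq_zero fun i _ => by rw [mul_assoc, pow_succ, mul_assoc, hWQ, mul_zero, mul_zero]
  have hPZ : P * Z = P * W := by
    rw [mul_sum, sum_range_succ', sum_eq_zero fun i _ => hPQW i _, zero_add, pow_zero, one_mul,
      zero_add, pow_one]
  have hQZ : Q * Z = ∑ i ∈ range n, Q ^ (i + 1) * W ^ (i + 1) := by
    rw [mul_sum, sum_range_succ, ← mul_assoc, ← pow_succ', hQ, zero_mul, add_zero]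
    exact sum_congr rfl fun i _ => by rw [← mul_assoc, ← pow_succ']
  have hTZ : (P + Q) * Z = E := by rw [add_mul, hPZ, hQZ]
  have hZP : Z * P = E := by
    rw [sum_mul, sum_range_succ', add_comm]
    simp only [E, mul_assoc, hWP, pow_zero, one_mul, zero_add, pow_one, hW.2.1]
  have hZT : Z * (P + Q) = E := by rw [mul_add, hZP, hZQ, add_zero]
  have hEW : E * W = Z := by
    rw [add_mul, sum_mul, mul_assoc, ← sq, hW.mul_sq, hZ, sum_range_succ',
      pow_zero, one_mul, zero_add, pow_one, add_comm]
    exact congrArg (· + W) (sum_congr rfl fun i _ => by rw [mul_assoc, ← pow_succ])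
  have hZE : Z * E = Z := by
    rw [mul_add, mul_sum, ← mul_assoc, hZP, hEW, sum_eq_zero fun i _ => by
      rw [pow_succ', ← mul_assoc, ← mul_assoc, hZQ, zero_mul, zero_mul], add_zero]
  obtain ⟨-, -, l, hl⟩ := hW
  have hPE : ∀ m, l ≤ m → P ^ (m + 1) * E = P ^ (m + 1) := fun m hm => by
    rw [mul_add, ← mul_assoc, ← pow_succ, pow_succ_mul_of_le hl (by omega), mul_sum,
      sum_eq_zero fun i _ => by rw [pow_succ, mul_assoc, hPQW, mul_zero], add_zero]
  refine ⟨by rw [mul_assoc, hTZ, hZE], by rw [hTZ, hZT], l + (n + 1), ?_⟩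
  rw [pow_succ, mul_assoc, hTZ, add_pow_mul_eq_of_mul_eq_zero hPQ hQ hPE]

section Modified

variable {A Y e x : R}

theorem Commute.mul_mul_one_sub_eq_zero (hA : Commute A e) (he : IsIdempotentElem e) :
    e * A * (1 - e) = 0 := by
  rw [← hA.eq, mul_assoc, he.mul_one_sub_self, mul_zero]

theorem Commute.one_sub_mul_mul_eq_zero (hA : Commute A e) (he : IsIdempotentElem e) :
    (1 - e) * A * e = 0 := by
  rw [← ((Commute.one_right A).sub_right hA).eq, mul_assoc, he.one_sub_mul_self, mul_zero]

theorem IsIdempotentElem.mul_sub_pow_succ {p : R} (hp : IsIdempotentElem p) (hA : Commute A p)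
    (hY : Y * p * (A - Y) = 0) (j : ℕ) : (p * (A - Y)) ^ (j + 1) = A ^ j * (p * (A - Y)) := by
  induction j with
  | zero => rw [pow_one, pow_zero, one_mul]
  | succ j ih =>
    have hsq : p * (A - Y) * (p * (A - Y)) = A * (p * (A - Y)) :=
      calc p * (A - Y) * (p * (A - Y)) = p * A * p * (A - Y) - p * (Y * p * (A - Y)) := by
            noncomm_ring
        _ = A * (p * (A - Y)) := by
            rw [hY, mul_zero, sub_zero, ← hA.eq, mul_assoc A, hp.eq, mul_assoc]
    rw [pow_succ, ih, mul_assoc, hsq, ← mul_assoc, ← pow_succ]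

theorem isDrazinInv_sub_of_mul_mul_sub_eq_zero (he : IsIdempotentElem e) (hA : Commute A e)
    {k : ℕ} (hk : A ^ k * (1 - e) = 0) (hY : Y * (1 - e) * (A - Y) = 0)
    (hx : IsDrazinInv (e * (A - Y) * e) x) :
    IsDrazinInv (A - Y)
      (∑ i ∈ range (k + 1), ((1 - e) * (A - Y)) ^ i * (x ^ (i + 2) * (A - Y))) := by
  have hPQ : e * (A - Y) * ((1 - e) * (A - Y)) = 0 :=
    calc e * (A - Y) * ((1 - e) * (A - Y))
        = e * A * (1 - e) * (A - Y) - e * (Y * (1 - e) * (A - Y)) := by noncomm_ring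
      _ = 0 := by rw [hA.mul_mul_one_sub_eq_zero he, hY, zero_mul, mul_zero, sub_zero]
  have hQ : ((1 - e) * (A - Y)) ^ (k + 1) = 0 := by
    rw [he.one_sub.mul_sub_pow_succ ((Commute.one_right A).sub_right hA) hY, ← mul_assoc, hk,
      zero_mul]
  have hsum := (hx.of_idempotent_mul_mul he).add_of_mul_eq_zero hPQ hQ
  rw [← add_mul, add_sub_cancel, one_mul] at hsum
  simpa only [sq_mul_pow_succ (hx.mul_mul_eq_self he)] using hsum

theorem sum_one_sub_mul_sub_pow_mul_eq (he : IsIdempotentElem e) (hA : Commute A e)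
    (hY : Y * (1 - e) * (A - Y) = 0) (hx : IsDrazinInv (e * (A - Y) * e) x) (k : ℕ) :
    ∑ i ∈ range (k + 1), ((1 - e) * (A - Y)) ^ i * (x ^ (i + 2) * (A - Y))
      = -(∑ i ∈ range k, A ^ i * (1 - e) * Y * (x ^ (i + 2) - x ^ (i + 3) * Y * (1 - e)))
        + x - x ^ 2 * Y * (1 - e) := by
  have hex : ∀ n, n ≠ 0 → e * x ^ n = x ^ n := fun n hn => by
    obtain ⟨m, rfl⟩ := Nat.exists_eq_succ_of_ne_zero hn
    rw [pow_succ', ← mul_assoc, hx.idempotent_mul_eq_self he]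
  have hxe : ∀ n, n ≠ 0 → x ^ n * e = x ^ n := fun n hn => by
    obtain ⟨m, rfl⟩ := Nat.exists_eq_succ_of_ne_zero hn
    rw [pow_succ, mul_assoc, hx.mul_idempotent_eq_self he]
  have hxS : ∀ n, x ^ (n + 2) * (A - Y) = x ^ (n + 1) - x ^ (n + 2) * Y * (1 - e) := fun n =>
    calc x ^ (n + 2) * (A - Y) = x ^ n * (x ^ 2 * (e * (A - Y) * e))
          + x ^ (n + 2) * (e * A * (1 - e)) - x ^ (n + 2) * e * Y * (1 - e) := by
          rw [← mul_assoc, ← pow_add]; nth_rw 1 [← hxe (n + 2) (by omega)]; noncomm_ring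
      _ = x ^ (n + 1) - x ^ (n + 2) * Y * (1 - e) := by
          rw [hx.sq_mul, hA.mul_mul_one_sub_eq_zero he, mul_zero, add_zero, hxe _ (by omega),
            ← pow_succ]
  have hSx : ∀ n, n ≠ 0 → (1 - e) * (A - Y) * x ^ n = -((1 - e) * Y * x ^ n) := fun n hn =>
    calc (1 - e) * (A - Y) * x ^ n = (1 - e) * A * e * x ^ n - (1 - e) * Y * (e * x ^ n) := by
          nth_rw 1 [← hex n hn]; noncomm_ring
      _ = -((1 - e) * Y * x ^ n) := by
          rw [hA.one_sub_mul_mul_eq_zero he, hex n hn, zero_mul, zero_sub]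
  have hterm : ∀ i, ((1 - e) * (A - Y)) ^ (i + 1) * (x ^ (i + 1 + 2) * (A - Y))
      = -(A ^ i * (1 - e) * Y * (x ^ (i + 2) - x ^ (i + 3) * Y * (1 - e))) := fun i =>
    calc ((1 - e) * (A - Y)) ^ (i + 1) * (x ^ (i + 1 + 2) * (A - Y))
        = A ^ i * ((1 - e) * (A - Y) * x ^ (i + 2)
            - (1 - e) * (A - Y) * x ^ (i + 3) * Y * (1 - e)) := by
          rw [he.one_sub.mul_sub_pow_succ ((Commute.one_right A).sub_right hA) hY, hxS]
          noncomm_ring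
      _ = _ := by rw [hSx _ (by omega), hSx _ (by omega)]; noncomm_ring
  rw [sum_range_succ', sum_congr rfl fun i _ => hterm i, sum_neg_distrib, pow_zero, one_mul,
    zero_add, hxS 0, zero_add, pow_one]
  abel

end Modified

end Ring

theorem stmt5_general
    {p : Type*} [Fintype p] [DecidableEq p]
    (A AD : Matrix p p ℂ)
    (hA : IsDrazinInverse A AD)
    (Y S Ae Aπ SAe : Matrix p p ℂ)
    (hS : S = A - Y)
    (hAe : Ae = A * AD) (hAπ : Aπ = 1 - A * AD)
    (hSAe : SAe = Ae * S * Ae)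
    (X : Matrix p p ℂ) (hX : IsDrazinInverse SAe X)
    (k : ℕ) (hk : A ^ (k + 1) * AD = A ^ k)
    (hcond : Y * Aπ * S = 0) :
    IsDrazinInverse S
      (-(∑ i ∈ Finset.range k,
          A ^ i * Aπ * Y * (X ^ (i + 2) - X ^ (i + 3) * Y * Aπ))
        + X - X ^ 2 * Y * Aπ) := by
  subst hS hAe hAπ hSAe
  obtain ⟨hA₁, hA₂, -⟩ := hA
  have he : IsIdempotentElem (A * AD) := by
    rw [IsIdempotentElem, mul_assoc, ← mul_assoc AD, hA₁]
  have hAe : Commute A (A * AD) := by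
    rw [Commute, SemiconjBy, mul_assoc, hA₂]
  have hk' : A ^ k * (1 - A * AD) = 0 := by
    rw [mul_sub, mul_one, ← mul_assoc, ← pow_succ, hk, sub_self]
  rw [← sum_one_sub_mul_sub_pow_mul_eq he hAe hcond hX]
  exact isDrazinInv_sub_of_mul_mul_sub_eq_zero he hAe hk' hcond hX

theorem stmt5
    {p q : Type*} [Fintype p] [DecidableEq p] [Fintype q] [DecidableEq q]
    (A AD : Matrix p p ℂ) (D DD : Matrix q q ℂ)
    (B : Matrix q p ℂ) (C : Matrix p q ℂ)
    (hA : IsDrazinInverse A AD) (hD : IsDrazinInverse D DD)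
    (Y S Ae Aπ SAe : Matrix p p ℂ)
    (hY : Y = C * DD * B) (hS : S = A - Y)
    (hAe : Ae = A * AD) (hAπ : Aπ = 1 - A * AD)
    (hSAe : SAe = Ae * S * Ae)
    (X : Matrix p p ℂ) (hX : IsDrazinInverse SAe X)
    (k : ℕ) (hk : A ^ (k + 1) * AD = A ^ k)
    (hcond : Y * Aπ * S = 0) :
    IsDrazinInverse S
      (-(∑ i ∈ Finset.range k,
          A ^ i * Aπ * Y * (X ^ (i + 2) - X ^ (i + 3) * Y * Aπ))
        + X - X ^ 2 * Y * Aπ) :=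
  stmt5_general A AD hA Y S Ae Aπ SAe hS hAe hAπ hSAe X hX k hk hcond
end

section
/- The following four statements are equivalent: (1) K*D^π*Z^D*H = K*D^D*Z^π*H; (2) S_{A^e}*T = A*A^D; (3) T*S_{A^e} = A*A^D; (4) K*Z^π*D^D*H = K*Z^D*D^π*H. -/
open Matrix Finset

set_option linter.unusedSectionVars false

section aux
variable {n m : Type*} [Fintype n] [Fintype m]

lemma drz_comm {M X : Matrix n n ℂ} (h : M * X = X * M) (W : Matrix n m ℂ) :
    M * (X * W) = X * (M * W) := by
  rw [← Matrix.mul_assoc, h, Matrix.mul_assoc]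

lemma drz_can1 {M X : Matrix n n ℂ} (h1 : X * M * X = X) (W : Matrix n m ℂ) :
    X * (M * (X * W)) = X * W := by
  rw [← Matrix.mul_assoc, ← Matrix.mul_assoc, h1]

lemma drz_can1' {M X : Matrix n n ℂ} (h1 : X * M * X = X) :
    X * (M * X) = X := by rw [← Matrix.mul_assoc, h1]

lemma drz_can2 {M X : Matrix n n ℂ} (h1 : X * M * X = X) (h2 : M * X = X * M)
    (W : Matrix n m ℂ) : X * (X * (M * W)) = X * W := by
  rw [← Matrix.mul_assoc, ← Matrix.mul_assoc, Matrix.mul_assoc X X M, ← h2,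
    ← Matrix.mul_assoc, h1]

lemma drz_can2' {M X : Matrix n n ℂ} (h1 : X * M * X = X) (h2 : M * X = X * M) :
    X * (X * M) = X := by
  rw [← Matrix.mul_assoc, Matrix.mul_assoc X X M, ← h2, ← Matrix.mul_assoc, h1]

lemma corner_expand {e X Y : Matrix n n ℂ} [DecidableEq n] (hee : e * e = e)
    (hXe : X * e = X) (heY : e * Y = Y) :
    (X + (1 - e)) * (Y + (1 - e)) = X * Y + (1 - e) := by
  simp only [Matrix.mul_add, Matrix.add_mul, Matrix.mul_sub, Matrix.sub_mul,
    Matrix.mul_one, Matrix.one_mul, hee, hXe, heY]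
  abel

lemma corner_aux {e X Y : Matrix n n ℂ} [DecidableEq n] (hee : e * e = e)
    (heX : e * X = X) (hXe : X * e = X) (heY : e * Y = Y) (hYe : Y * e = Y)
    (h : X * Y = e) : Y * X = e := by
  have h1 : (X + (1 - e)) * (Y + (1 - e)) = 1 := by
    rw [corner_expand hee hXe heY, h]; abel
  have h2 := mul_eq_one_comm.mp h1
  rw [corner_expand hee hYe heX] at h2
  calc Y * X = Y * X + (1 - e) - (1 - e) := by abel
    _ = 1 - (1 - e) := by rw [h2]
    _ = e := by abel

end aux

theorem stmt7
    {p q : Type*} [Fintype p] [DecidableEq p] [Fintype q] [DecidableEq q]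
    (A AD : Matrix p p ℂ) (D DD : Matrix q q ℂ)
    (B : Matrix q p ℂ) (C : Matrix p q ℂ)
    (hA : IsDrazinInverse A AD) (hD : IsDrazinInverse D DD)
    (Y S Ae Aπ SAe : Matrix p p ℂ)
    (hY : Y = C * DD * B) (hS : S = A - Y)
    (hAe : Ae = A * AD) (hAπ : Aπ = 1 - A * AD)
    (hSAe : SAe = Ae * S * Ae)
    (Z ZD : Matrix q q ℂ) (hZdef : Z = D - B * AD * C)
    (hZ : IsDrazinInverse Z ZD)
    (K : Matrix p q ℂ) (H : Matrix q p ℂ)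
    (hK : K = AD * C) (hH : H = B * AD)
    (Dπ Zπ : Matrix q q ℂ) (hDπ : Dπ = 1 - D * DD) (hZπ : Zπ = 1 - Z * ZD)
    (T : Matrix p p ℂ) (hT : T = AD + K * ZD * H)
    :
    List.TFAE
      [K * Dπ * ZD * H = K * DD * Zπ * H,
       SAe * T = A * AD,
       T * SAe = A * AD,
       K * Zπ * DD * H = K * ZD * Dπ * H] := by
  obtain ⟨hA1, hA2, -⟩ := hA
  obtain ⟨hD1, hD2, -⟩ := hD
  obtain ⟨hZ1, hZ2, -⟩ := hZ
  have hBAC : B * (AD * C) = D - Z := by rw [hZdef, Matrix.mul_assoc]; abel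
  have hBAC2 : ∀ W : Matrix q p ℂ, B * (AD * (C * W)) = (D - Z) * W := by
    intro W
    rw [← Matrix.mul_assoc AD C W, ← Matrix.mul_assoc, hBAC]
  -- main computation 1
  have hST : SAe * T = A * AD + A * (AD * (C * ((Dπ * ZD - DD * Zπ) * H))) := by
    subst hY hS hAe hSAe hK hH hDπ hZπ hT
    simp only [mul_add, add_mul, mul_sub, sub_mul, Matrix.mul_add, Matrix.add_mul,
      Matrix.mul_sub, Matrix.sub_mul, Matrix.smul_mul, Matrix.mul_smul, mul_one, one_mul,
      Matrix.one_mul, Matrix.mul_one, Matrix.mul_assoc,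
      drz_comm hA2, drz_can1 hA1, drz_can1' hA1, drz_can2 hA1 hA2, drz_can2' hA1 hA2,
      drz_comm hD2, drz_can1 hD1, drz_can1' hD1, drz_can2 hD1 hD2, drz_can2' hD1 hD2,
      drz_comm hZ2, drz_can1 hZ1, drz_can1' hZ1, drz_can2 hZ1 hZ2, drz_can2' hZ1 hZ2,
      hBAC, hBAC2, hA2, hD2, hZ2, smul_mul_assoc, mul_smul_comm]
    abel
  -- main computation 2
  have hTS : T * SAe = A * AD + AD * (C * ((ZD * Dπ - Zπ * DD) * (B * (A * AD)))) := by
    subst hY hS hAe hSAe hK hH hDπ hZπ hT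
    simp only [mul_add, add_mul, mul_sub, sub_mul, Matrix.mul_add, Matrix.add_mul,
      Matrix.mul_sub, Matrix.sub_mul, Matrix.smul_mul, Matrix.mul_smul, mul_one, one_mul,
      Matrix.one_mul, Matrix.mul_one, Matrix.mul_assoc,
      drz_comm hA2, drz_can1 hA1, drz_can1' hA1, drz_can2 hA1 hA2, drz_can2' hA1 hA2,
      drz_comm hD2, drz_can1 hD1, drz_can1' hD1, drz_can2 hD1 hD2, drz_can2' hD1 hD2,
      drz_comm hZ2, drz_can1 hZ1, drz_can1' hZ1, drz_can2 hZ1 hZ2, drz_can2' hZ1 hZ2,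
      hBAC, hBAC2, hA2, hD2, hZ2, smul_mul_assoc, mul_smul_comm]
    abel
  -- corner facts
  have hee : (A * AD) * (A * AD) = A * AD := by
    rw [Matrix.mul_assoc, ← Matrix.mul_assoc AD A AD, hA1]
  have heT : (A * AD) * T = T := by
    subst hK hH hT
    simp only [Matrix.mul_add, Matrix.add_mul, Matrix.mul_assoc,
      drz_comm hA2, drz_can1 hA1, drz_can1' hA1, drz_can2 hA1 hA2, drz_can2' hA1 hA2, hA2]
  have hTe : T * (A * AD) = T := by
    subst hK hH hT
    simp only [Matrix.mul_add, Matrix.add_mul, Matrix.mul_assoc,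
      drz_comm hA2, drz_can1 hA1, drz_can1' hA1, drz_can2 hA1 hA2, drz_can2' hA1 hA2, hA2]
  have heS : (A * AD) * SAe = SAe := by
    subst hSAe hAe
    rw [← Matrix.mul_assoc (A * AD) (A * AD * S) (A * AD),
      ← Matrix.mul_assoc (A * AD) (A * AD) S, hee]
  have hSe : SAe * (A * AD) = SAe := by
    subst hSAe hAe
    rw [Matrix.mul_assoc (A * AD * S), hee]
  -- rearrangements
  have rearr1 : K * Dπ * ZD * H - K * DD * Zπ * H
      = AD * (C * ((Dπ * ZD - DD * Zπ) * H)) := by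
    rw [hK]
    simp only [Matrix.mul_sub, Matrix.sub_mul, Matrix.mul_assoc]
  have rearr4 : K * ZD * Dπ * H - K * Zπ * DD * H
      = AD * (C * ((ZD * Dπ - Zπ * DD) * H)) := by
    rw [hK]
    simp only [Matrix.mul_sub, Matrix.sub_mul, Matrix.mul_assoc]
  have hM3N : AD * (C * ((ZD * Dπ - Zπ * DD) * (B * (A * AD))))
      = AD * (C * ((ZD * Dπ - Zπ * DD) * H)) * A := by
    subst hH
    simp only [Matrix.mul_assoc, hA2]
  have hNM3 : AD * (C * ((ZD * Dπ - Zπ * DD) * H))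
      = AD * (C * ((ZD * Dπ - Zπ * DD) * (B * (A * AD)))) * AD := by
    subst hH
    simp only [Matrix.mul_assoc, drz_comm hA2, drz_can2' hA1 hA2, hA2]
  tfae_have 1 ↔ 2 := by
    rw [hST, add_eq_left, ← sub_eq_zero, rearr1]
    constructor
    · intro h; rw [h, Matrix.mul_zero]
    · intro h
      rw [← drz_can1 hA1 (C * ((Dπ * ZD - DD * Zπ) * H)), h, Matrix.mul_zero]
  tfae_have 2 ↔ 3 := by
    constructor
    · exact corner_aux hee heS hSe heT hTe
    · exact corner_aux hee heT hTe heS hSe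
  tfae_have 3 ↔ 4 := by
    constructor
    · intro h3
      have hM3 : AD * (C * ((ZD * Dπ - Zπ * DD) * (B * (A * AD)))) = 0 :=
        add_eq_left.mp (hTS.symm.trans h3)
      have hN : AD * (C * ((ZD * Dπ - Zπ * DD) * H)) = 0 := by
        rw [hNM3, hM3, Matrix.zero_mul]
      rw [eq_comm, ← sub_eq_zero, rearr4]
      exact hN
    · intro h4
      rw [eq_comm, ← sub_eq_zero, rearr4] at h4
      have hM3 : AD * (C * ((ZD * Dπ - Zπ * DD) * (B * (A * AD)))) = 0 := by
        rw [hM3N, h4, Matrix.zero_mul]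
      rw [hTS, hM3, add_zero]
  tfae_finish
end

section
/- If K*D^π*Z^D*H = K*D^D*Z^π*H, then T is the group inverse of S_{A^e}; that is, S_{A^e}*T*S_{A^e} = S_{A^e}, T*S_{A^e}*T = T, and S_{A^e}*T = T*S_{A^e}. -/
open Matrix Finset

set_option maxHeartbeats 1600000 in
theorem stmt8
    {p q : Type*} [Fintype p] [DecidableEq p] [Fintype q] [DecidableEq q]
    (A AD : Matrix p p ℂ) (D DD : Matrix q q ℂ)
    (B : Matrix q p ℂ) (C : Matrix p q ℂ)
    (hA : IsDrazinInverse A AD) (hD : IsDrazinInverse D DD)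
    (Y S Ae Aπ SAe : Matrix p p ℂ)
    (hY : Y = C * DD * B) (hS : S = A - Y)
    (hAe : Ae = A * AD) (hAπ : Aπ = 1 - A * AD)
    (hSAe : SAe = Ae * S * Ae)
    (Z ZD : Matrix q q ℂ) (hZdef : Z = D - B * AD * C)
    (hZ : IsDrazinInverse Z ZD)
    (K : Matrix p q ℂ) (H : Matrix q p ℂ)
    (hK : K = AD * C) (hH : H = B * AD)
    (Dπ Zπ : Matrix q q ℂ) (hDπ : Dπ = 1 - D * DD) (hZπ : Zπ = 1 - Z * ZD)
    (T : Matrix p p ℂ) (hT : T = AD + K * ZD * H)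
    (hcond : K * Dπ * ZD * H = K * DD * Zπ * H) :
    SAe * T * SAe = SAe ∧ T * SAe * T = T ∧ SAe * T = T * SAe := by
  obtain ⟨hA1, hA2, -⟩ := hA
  obtain ⟨-, hD2, -⟩ := hD
  subst hK hH hDπ hZπ hY hS hAe hSAe hT
  -- zero forms of the hypotheses
  have hu : AD * A * AD - AD = 0 := sub_eq_zero_of_eq hA1
  have hv : A * AD - AD * A = 0 := sub_eq_zero_of_eq hA2
  have hw : D * DD - DD * D = 0 := sub_eq_zero_of_eq hD2
  have hz0 : Z - (D - B * AD * C) = 0 := sub_eq_zero_of_eq hZdef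
  have hq0 : AD * C * (1 - D * DD) * ZD * (B * AD)
      - AD * C * DD * (1 - Z * ZD) * (B * AD) = 0 := sub_eq_zero_of_eq hcond
  have hPP0 : A * AD * (A * AD) - A * AD = 0 := by
    have h : A * AD * (A * AD) - A * AD = A * (AD * A * AD - AD) := by
        simp only [Matrix.mul_assoc, Matrix.mul_add, Matrix.add_mul, Matrix.mul_sub,
          Matrix.sub_mul, Matrix.mul_one, Matrix.one_mul]
        try abel
    rw [h, hu, mul_zero]
  -- the key identity : SAe * T = A * AD
  have hST : A * AD * (A - C * DD * B) * (A * AD) * (AD + AD * C * ZD * (B * AD))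
      = A * AD := by
    have key : A * AD * (A - C * DD * B) * (A * AD) * (AD + AD * C * ZD * (B * AD))
        - A * AD
        = A * AD * A * ((A * AD - AD * A) * AD + (AD * A * AD - AD))
          + A * (AD * A * AD - AD)
          + (A * AD * A * ((A * AD - AD * A) * AD + (AD * A * AD - AD))
              + A * (AD * A * AD - AD)) * (C * ZD * (B * AD))
          - A * AD * C * DD * B * ((A * AD - AD * A) * AD + (AD * A * AD - AD))
          - A * AD * C * DD * B * ((A * AD - AD * A) * AD + (AD * A * AD - AD))
              * (C * ZD * (B * AD))
          - A * AD * C * DD * (Z - (D - B * AD * C)) * ZD * (B * AD)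
          + A * (AD * C * (1 - D * DD) * ZD * (B * AD)
              - AD * C * DD * (1 - Z * ZD) * (B * AD))
          + A * AD * C * (D * DD - DD * D) * ZD * (B * AD) := by
        simp only [Matrix.mul_assoc, Matrix.mul_add, Matrix.add_mul, Matrix.mul_sub,
          Matrix.sub_mul, Matrix.mul_one, Matrix.one_mul]
        try abel
    rw [hu, hv, hw, hz0, hq0] at key
    simp only [Matrix.mul_zero, Matrix.zero_mul, zero_mul, mul_zero, add_zero, zero_add, sub_zero, zero_sub, neg_zero] at key
    exact sub_eq_zero.mp key
  have hES0 : A * AD * (A * AD * (A - C * DD * B) * (A * AD))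
      - A * AD * (A - C * DD * B) * (A * AD) = 0 := by
    have h : A * AD * (A * AD * (A - C * DD * B) * (A * AD))
        - A * AD * (A - C * DD * B) * (A * AD)
        = (A * AD * (A * AD) - A * AD) * ((A - C * DD * B) * (A * AD)) := by
      simp only [Matrix.mul_assoc, Matrix.mul_add, Matrix.add_mul, Matrix.mul_sub,
        Matrix.sub_mul, Matrix.mul_one, Matrix.one_mul]
      try abel
    rw [h, hPP0, zero_mul]
  have hSE0 : A * AD * (A - C * DD * B) * (A * AD) * (A * AD)
      - A * AD * (A - C * DD * B) * (A * AD) = 0 := by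
    have h : A * AD * (A - C * DD * B) * (A * AD) * (A * AD)
        - A * AD * (A - C * DD * B) * (A * AD)
        = (A * AD * (A - C * DD * B)) * (A * AD * (A * AD) - A * AD) := by
      simp only [Matrix.mul_assoc, Matrix.mul_add, Matrix.add_mul, Matrix.mul_sub,
        Matrix.sub_mul, Matrix.mul_one, Matrix.one_mul]
      try abel
    rw [h, hPP0, mul_zero]
  have hET0 : A * AD * (AD + AD * C * ZD * (B * AD))
      - (AD + AD * C * ZD * (B * AD)) = 0 := by
    have h : A * AD * (AD + AD * C * ZD * (B * AD)) - (AD + AD * C * ZD * (B * AD))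
        = ((A * AD - AD * A) * AD + (AD * A * AD - AD))
          + ((A * AD - AD * A) * AD + (AD * A * AD - AD)) * (C * ZD * (B * AD)) := by
      simp only [Matrix.mul_assoc, Matrix.mul_add, Matrix.add_mul, Matrix.mul_sub,
        Matrix.sub_mul, Matrix.mul_one, Matrix.one_mul]
      try abel
    rw [h, hu, hv]
    simp only [Matrix.mul_zero, Matrix.zero_mul, zero_mul, mul_zero, add_zero, zero_add]
  have hTE0 : (AD + AD * C * ZD * (B * AD)) * (A * AD)
      - (AD + AD * C * ZD * (B * AD)) = 0 := by
    have h : (AD + AD * C * ZD * (B * AD)) * (A * AD) - (AD + AD * C * ZD * (B * AD))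
        = (AD * A * AD - AD) + AD * C * ZD * (B * (AD * A * AD - AD)) := by
      simp only [Matrix.mul_assoc, Matrix.mul_add, Matrix.add_mul, Matrix.mul_sub,
        Matrix.sub_mul, Matrix.mul_one, Matrix.one_mul]
      try abel
    rw [h, hu]
    simp only [Matrix.mul_zero, Matrix.zero_mul, add_zero, zero_add]
  -- one-sided inverse trick on the full algebra
  have hMN : (A * AD * (A - C * DD * B) * (A * AD) + (1 - A * AD))
      * ((AD + AD * C * ZD * (B * AD)) + (1 - A * AD)) = 1 := by
    have h : (A * AD * (A - C * DD * B) * (A * AD) + (1 - A * AD))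
        * ((AD + AD * C * ZD * (B * AD)) + (1 - A * AD)) - 1
        = (A * AD * (A - C * DD * B) * (A * AD) * (AD + AD * C * ZD * (B * AD))
            - A * AD)
          - (A * AD * (A - C * DD * B) * (A * AD) * (A * AD)
              - A * AD * (A - C * DD * B) * (A * AD))
          - (A * AD * (AD + AD * C * ZD * (B * AD)) - (AD + AD * C * ZD * (B * AD)))
          + (A * AD * (A * AD) - A * AD) := by
        simp only [Matrix.mul_assoc, Matrix.mul_add, Matrix.add_mul, Matrix.mul_sub,
          Matrix.sub_mul, Matrix.mul_one, Matrix.one_mul]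
        try abel
    rw [sub_eq_zero_of_eq hST, hSE0, hET0, hPP0] at h
    simp only [Matrix.mul_zero, Matrix.zero_mul, sub_zero, add_zero, zero_sub, neg_zero, zero_add] at h
    exact sub_eq_zero.mp h
  have hNM : ((AD + AD * C * ZD * (B * AD)) + (1 - A * AD))
      * (A * AD * (A - C * DD * B) * (A * AD) + (1 - A * AD)) = 1 :=
    mul_eq_one_comm.mp hMN
  have hTS : (AD + AD * C * ZD * (B * AD)) * (A * AD * (A - C * DD * B) * (A * AD))
      = A * AD := by
    have h : (AD + AD * C * ZD * (B * AD)) * (A * AD * (A - C * DD * B) * (A * AD))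
        - A * AD
        = (((AD + AD * C * ZD * (B * AD)) + (1 - A * AD))
            * (A * AD * (A - C * DD * B) * (A * AD) + (1 - A * AD)) - 1)
          + ((AD + AD * C * ZD * (B * AD)) * (A * AD) - (AD + AD * C * ZD * (B * AD)))
          + (A * AD * (A * AD * (A - C * DD * B) * (A * AD))
              - A * AD * (A - C * DD * B) * (A * AD))
          - (A * AD * (A * AD) - A * AD) := by
        simp only [Matrix.mul_assoc, Matrix.mul_add, Matrix.add_mul, Matrix.mul_sub,
          Matrix.sub_mul, Matrix.mul_one, Matrix.one_mul]
        try abel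
    rw [sub_eq_zero_of_eq hNM, hTE0, hES0, hPP0] at h
    simp only [Matrix.mul_zero, Matrix.zero_mul, add_zero, zero_add, sub_zero] at h
    exact sub_eq_zero.mp h
  refine ⟨?_, ?_, ?_⟩
  · rw [hST]
    exact sub_eq_zero.mp hES0
  · rw [hTS]
    exact sub_eq_zero.mp hET0
  · rw [hST, hTS]
end

section
/- Suppose S_{A^e}*T = A*A^D, that S*A^π is t-nilpotent, i.e. (S*A^π)^t = 0, and that S*A^π*Y*A^e = 0. Then S has a Drazin inverse, given by S^D = −Σ_{i=0}^{t−2} (1 − A^π*Y*T)*T^{i+2}*Y*A^π*S^i + T − A^π*Y*T^2. -/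
open Matrix Finset

private lemma lemA_s9 {n : Type*} [Fintype n] [DecidableEq n]
    (P N X : Matrix n n ℂ) (t' m : ℕ)
    (h1 : X * P * X = X) (h2 : P * X = X * P) (h3 : P ^ (m + 1) * X = P ^ m)
    (hNP : N * P = 0) (hNX : N * X = 0) (hNt : N ^ (t' + 1) = 0) :
    IsDrazinInverse (P + N) (∑ i ∈ Finset.range (t' + 1), X ^ (i + 1) * N ^ i) := by
  set X' := ∑ i ∈ Finset.range (t' + 1), X ^ (i + 1) * N ^ i with hX'
  -- basic annihilation facts
  have hNaP : ∀ a, N ^ (a + 1) * P = 0 := by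
    intro a; rw [pow_succ, mul_assoc, hNP, mul_zero]
  have hNaX : ∀ a, N ^ (a + 1) * X = 0 := by
    intro a; rw [pow_succ, mul_assoc, hNX, mul_zero]
  have hNXk : ∀ k, N * X ^ (k + 1) = 0 := by
    intro k; rw [pow_succ' X k, ← mul_assoc, hNX, zero_mul]
  have hNaXk : ∀ a k, N ^ (a + 1) * X ^ (k + 1) = 0 := by
    intro a k; rw [pow_succ' X k, ← mul_assoc, hNaX, zero_mul]
  have hNPa : ∀ a, N * P ^ (a + 1) = 0 := by
    intro a; rw [pow_succ' P a, ← mul_assoc, hNP, zero_mul]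
  have hPXk : ∀ k, P * X ^ k = X ^ k * P := fun k => (Commute.pow_right h2 k)
  have hPX2 : ∀ i, P * X ^ (i + 1 + 1) = X ^ (i + 1) := by
    intro i
    calc P * X ^ (i + 1 + 1) = P * (X ^ (i + 1) * X) := by rw [pow_succ]
      _ = (P * X ^ (i + 1)) * X := by rw [mul_assoc]
      _ = (X ^ (i + 1) * P) * X := by rw [hPXk]
      _ = X ^ i * (X * P * X) := by rw [pow_succ]; noncomm_ring
      _ = X ^ i * X := by rw [h1]
      _ = X ^ (i + 1) := (pow_succ X i).symm
  -- common sum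
  have hcommon : ∑ i ∈ Finset.range t', X ^ (i + 1) * N ^ (i + 1)
      = ∑ i ∈ Finset.range (t' + 1), X ^ (i + 1) * N ^ (i + 1) := by
    rw [Finset.sum_range_succ, hNt, mul_zero, add_zero]
  -- (a) expressions for products
  have hLHS : (P + N) * X' = P * X + ∑ i ∈ Finset.range (t' + 1), X ^ (i + 1) * N ^ (i + 1) := by
    rw [hX', Finset.mul_sum, Finset.sum_range_succ', ← hcommon]
    have hA1 : ∑ k ∈ Finset.range t', (P + N) * (X ^ (k + 1 + 1) * N ^ (k + 1))
        = ∑ i ∈ Finset.range t', X ^ (i + 1) * N ^ (i + 1) := by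
      apply Finset.sum_congr rfl
      intro i _
      rw [add_mul]
      have hn : N * (X ^ (i + 1 + 1) * N ^ (i + 1)) = 0 := by
        rw [← mul_assoc, hNXk, zero_mul]
      have hp : P * (X ^ (i + 1 + 1) * N ^ (i + 1)) = X ^ (i + 1) * N ^ (i + 1) := by
        rw [← mul_assoc, hPX2]
      rw [hn, hp, add_zero]
    have hA2 : (P + N) * (X ^ (0 + 1) * N ^ 0) = P * X := by
      simp only [zero_add, pow_one, pow_zero, mul_one, add_mul, hNX, add_zero]
    rw [hA1, hA2, add_comm]
  have hRHS : X' * (P + N) = X * P + ∑ i ∈ Finset.range (t' + 1), X ^ (i + 1) * N ^ (i + 1) := by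
    rw [hX', Finset.sum_mul, Finset.sum_range_succ']
    have hterm : ∀ i ∈ Finset.range t',
        (X ^ (i + 1 + 1) * N ^ (i + 1)) * (P + N) = X ^ (i + 1 + 1) * N ^ (i + 1 + 1) := by
      intro i _
      rw [mul_add, mul_assoc, hNaP, mul_zero, zero_add, mul_assoc, ← pow_succ]
    rw [Finset.sum_congr rfl hterm]
    have hlast : (X ^ (0 + 1) * N ^ 0) * (P + N) = X * P + X * N := by
      simp only [zero_add, pow_one, pow_zero, mul_one, mul_add]
    rw [hlast]
    rw [Finset.sum_range_succ' (fun i => X ^ (i + 1) * N ^ (i + 1)) t']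
    simp only [zero_add, pow_one]
    abel
  have hcomm : (P + N) * X' = X' * (P + N) := by rw [hLHS, hRHS, h2]
  -- (b)
  have hX'Xk : ∀ k, X' * X ^ (k + 1) = X ^ (k + 1 + 1) := by
    intro k
    rw [hX', Finset.sum_mul]
    rw [Finset.sum_eq_single_of_mem 0 (by simp)]
    · simp only [zero_add, pow_one, pow_zero, mul_one, ← pow_succ']
    · intro j hj hj0
      obtain ⟨a, rfl⟩ : ∃ a, j = a + 1 := ⟨j - 1, by omega⟩
      rw [mul_assoc, hNaXk, mul_zero]
  have hX'PX : X' * (P * X) = X := by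
    rw [hX', Finset.sum_mul]
    rw [Finset.sum_eq_single_of_mem 0 (by simp)]
    · simp only [zero_add, pow_one, pow_zero, mul_one, ← mul_assoc, h1]
    · intro j hj hj0
      obtain ⟨a, rfl⟩ : ∃ a, j = a + 1 := ⟨j - 1, by omega⟩
      rw [mul_assoc, ← mul_assoc (N ^ (a + 1)), hNaP, zero_mul, mul_zero]
  have hb : X' * (P + N) * X' = X' := by
    rw [mul_assoc, hLHS, mul_add, hX'PX, Finset.mul_sum]
    have hterm2 : ∀ i ∈ Finset.range (t' + 1),
        X' * (X ^ (i + 1) * N ^ (i + 1)) = X ^ (i + 1 + 1) * N ^ (i + 1) := by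
      intro i _; rw [← mul_assoc, hX'Xk]
    rw [Finset.sum_congr rfl hterm2]
    rw [Finset.sum_range_succ, hNt, mul_zero, add_zero]
    conv_rhs => rw [hX', Finset.sum_range_succ']
    simp only [zero_add, pow_one, pow_zero, mul_one]
    abel
  -- (c)
  have hF : ∀ k, (P + N) ^ (k + 1) = ∑ j ∈ Finset.range (k + 2), P ^ (k + 1 - j) * N ^ j := by
    intro k; induction k with
    | zero =>
      rw [Finset.sum_range_succ, Finset.sum_range_succ, Finset.sum_range_zero]
      norm_num
    | succ k ih =>
      rw [pow_succ' (P + N) (k + 1), ih, Finset.mul_sum]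
      have hsplit : ∀ j ∈ Finset.range (k + 2), (P + N) * (P ^ (k + 1 - j) * N ^ j)
          = P ^ (k + 1 + 1 - j) * N ^ j + N * (P ^ (k + 1 - j) * N ^ j) := by
        intro j hj
        rw [add_mul]
        have hj2 : j < k + 2 := Finset.mem_range.mp hj
        have hpp : P * (P ^ (k + 1 - j) * N ^ j) = P ^ (k + 1 + 1 - j) * N ^ j := by
          rw [← mul_assoc, ← pow_succ', show k + 1 - j + 1 = k + 1 + 1 - j from by omega]
        rw [hpp]
      rw [Finset.sum_congr rfl hsplit, Finset.sum_add_distrib]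
      have h2nd : ∑ j ∈ Finset.range (k + 2), N * (P ^ (k + 1 - j) * N ^ j) = N ^ (k + 1 + 1) := by
        rw [Finset.sum_eq_single_of_mem (k + 1) (by simp)]
        · rw [Nat.sub_self, pow_zero, one_mul, ← pow_succ']
        · intro j hj hne
          have hj2 : j < k + 2 := Finset.mem_range.mp hj
          have : k + 1 - j = (k - j) + 1 := by omega
          rw [this, ← mul_assoc, hNPa, zero_mul]
      rw [h2nd]
      rw [Finset.sum_range_succ (fun j => P ^ (k + 1 + 1 - j) * N ^ j) (k + 2)]
      rw [Nat.sub_self, pow_zero, one_mul]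
  have hPaX : ∀ a, P ^ (m + a + 1) * X = P ^ (m + a) := by
    intro a; induction a with
    | zero => simpa using h3
    | succ a ih =>
      rw [show m + (a + 1) + 1 = (m + a + 1) + 1 from by omega]
      rw [pow_succ' P (m + a + 1), mul_assoc, ih, ← pow_succ']
      congr 1
  have hPlXk : ∀ i a, P ^ (m + a + i + 1) * X ^ (i + 1) = P ^ (m + a) := by
    intro i; induction i with
    | zero => intro a; simpa using hPaX a
    | succ i ih =>
      intro a
      rw [show m + a + (i + 1) + 1 = m + (a + i + 1) + 1 + 0 from by omega]
      rw [pow_succ' X (i + 1), add_zero, ← mul_assoc, hPaX (a + i + 1)]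
      rw [show m + (a + i + 1) = m + a + i + 1 from by omega]
      exact ih a
  refine ⟨hb, hcomm, m + t' + 1, ?_⟩
  have hstep : ∀ i, i ≤ t' → (P + N) ^ (m + t' + 1 + 1) * X ^ (i + 1) = P ^ (m + t' + 1 - i) := by
    intro i hi
    rw [hF (m + t' + 1), Finset.sum_mul]
    rw [Finset.sum_eq_single_of_mem 0 (by simp)]
    · simp only [pow_zero, mul_one, Nat.sub_zero]
      have h := hPlXk i (t' + 1 - i)
      rw [show m + (t' + 1 - i) + i + 1 = m + t' + 1 + 1 from by omega] at h
      rw [h]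
      congr 1
      omega
    · intro j hj hj0
      obtain ⟨a, rfl⟩ : ∃ a, j = a + 1 := ⟨j - 1, by omega⟩
      rw [mul_assoc, hNaXk, mul_zero]
  have hc1 : (P + N) ^ (m + t' + 1 + 1) * X' = ∑ i ∈ Finset.range (t' + 1), P ^ (m + t' + 1 - i) * N ^ i := by
    rw [hX', Finset.mul_sum]
    apply Finset.sum_congr rfl
    intro i hi
    rw [← mul_assoc, hstep i (by have := Finset.mem_range.mp hi; omega)]
  have hc2 : (P + N) ^ (m + t' + 1) = ∑ i ∈ Finset.range (t' + 1), P ^ (m + t' + 1 - i) * N ^ i := by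
    have h := hF (m + t')
    rw [show m + t' + 1 = m + t' + 1 from rfl] at h
    rw [h]
    refine (Finset.sum_subset (Finset.range_subset_range.mpr (by omega)) ?_).symm
    intro j hj hjn
    have hj1 : j < m + t' + 2 := Finset.mem_range.mp hj
    have hj2 : ¬ j < t' + 1 := fun hh => hjn (Finset.mem_range.mpr hh)
    obtain ⟨a, rfl⟩ : ∃ a, j = (t' + 1) + a := ⟨j - (t' + 1), by omega⟩
    rw [pow_add, hNt, zero_mul, mul_zero]
  rw [hc1, hc2]

private lemma absMain {p : Type*} [Fintype p] [DecidableEq p]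
    (S Y T e π : Matrix p p ℂ) (t' : ℕ)
    (hπ : π = 1 - e)
    (hee : e * e = e)
    (heT : e * T = T) (hTe : T * e = T)
    (heSeT : e * S * e * T = e)
    (hπSe : π * (S * e) = -(π * (Y * e)))
    (hTSπ : T * (S * π) = -(T * (Y * π)))
    (hTYπYe : T * (Y * (π * (Y * e))) = 0)
    (hSπYe : S * (π * (Y * e)) = 0)
    (hnil : (S * π) ^ (t' + 1) = 0) :
    IsDrazinInverse S
      (-(∑ i ∈ Finset.range t', (1 - π * Y * T) * T ^ (i + 2) * Y * π * S ^ i)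
        + T - π * Y * T ^ 2) := by
  have hσ : e + π = 1 := by rw [hπ]; abel
  have heπ2 : e * π = 0 := by rw [hπ, mul_sub, mul_one, hee, sub_self]
  have hπe2 : π * e = 0 := by rw [hπ, sub_mul, one_mul, hee, sub_self]
  have hππ2 : π * π = π := by
    rw [hπ, sub_mul, one_mul, mul_sub, mul_one, hee, sub_self, sub_zero]
  have hTπ2 : T * π = 0 := by rw [hπ, mul_sub, mul_one, hTe, sub_self]
  have hπT2 : π * T = 0 := by rw [hπ, sub_mul, one_mul, heT, sub_self]
  -- unit trick : T is a left inverse of e*S*e in the corner ring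
  have huv : (1 - e + e * S * e) * (1 - e + T) = 1 := by
    have hexp : (1 - e + e * S * e) * (1 - e + T)
        = (1 - e - e + e * e) + (T - e * T) + (e * S * e - e * S * (e * e)) + e * S * e * T := by
      noncomm_ring
    rw [hexp, hee, heT, heSeT]
    abel
  have hTeSe : T * (e * S * e) = e := by
    have h1 : (1 - e + T) * (1 - e + e * S * e) = 1 := mul_eq_one_comm.mp huv
    have h4 : T * (e * S * e) = (1 - e + T) * (1 - e + e * S * e) - (1 - e) + (e - e * e)
        + (e * e * S * e - e * S * e) + (T * e - T) := by noncomm_ring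
    rw [h1, hee, hTe] at h4
    rw [h4]
    abel
  -- right-assoc rewrite rules
  have heTX : ∀ x : Matrix p p ℂ, e * (T * x) = T * x := fun x => by rw [← mul_assoc, heT]
  have hTeX : ∀ x : Matrix p p ℂ, T * (e * x) = T * x := fun x => by rw [← mul_assoc, hTe]
  have heeX : ∀ x : Matrix p p ℂ, e * (e * x) = e * x := fun x => by rw [← mul_assoc, hee]
  have heπX : ∀ x : Matrix p p ℂ, e * (π * x) = 0 := fun x => by rw [← mul_assoc, heπ2, zero_mul]
  have hπeX : ∀ x : Matrix p p ℂ, π * (e * x) = 0 := fun x => by rw [← mul_assoc, hπe2, zero_mul]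
  have hππX : ∀ x : Matrix p p ℂ, π * (π * x) = π * x := fun x => by rw [← mul_assoc, hππ2]
  have hTπX : ∀ x : Matrix p p ℂ, T * (π * x) = 0 := fun x => by rw [← mul_assoc, hTπ2, zero_mul]
  have hπTX : ∀ x : Matrix p p ℂ, π * (T * x) = 0 := fun x => by rw [← mul_assoc, hπT2, zero_mul]
  have hTSe : T * (S * e) = e := by
    have h5 : T * (S * e) = T * (e * (S * e)) + T * (π * (S * e)) := by
      rw [← mul_add, ← add_mul, hσ, one_mul]
    rw [h5, hπSe, mul_neg, ← mul_assoc T π, hTπ2, zero_mul, neg_zero, add_zero,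
      ← mul_assoc e S e, hTeSe]
  have hTSeX : ∀ x : Matrix p p ℂ, T * (S * (e * x)) = e * x := fun x => by
    rw [← mul_assoc S e x, ← mul_assoc T (S * e) x, hTSe]
  have hST2 : S * T = e - π * (Y * T) := by
    have h5 : S * T = e * (S * T) + π * (S * T) := by rw [← add_mul, hσ, one_mul]
    have h6 : e * (S * T) = e := by
      conv_lhs => rw [show T = e * T from heT.symm]
      rw [← mul_assoc S e T, ← mul_assoc e (S * e) T, ← mul_assoc e S e, heSeT]
    have h7 : π * (S * T) = -(π * (Y * T)) := by
      conv_lhs => rw [show T = e * T from heT.symm]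
      rw [← mul_assoc S e T, ← mul_assoc π (S * e) T, hπSe, neg_mul,
        mul_assoc π (Y * e) T, mul_assoc Y e T, heT]
    rw [h5, h6, h7, sub_eq_add_neg]
  have hSTX : ∀ x : Matrix p p ℂ, S * (T * x) = e * x - π * (Y * (T * x)) := fun x => by
    rw [← mul_assoc S T x, hST2, sub_mul, mul_assoc π (Y * T) x, mul_assoc Y T x]
  have hπSeX : ∀ x : Matrix p p ℂ, π * (S * (e * x)) = -(π * (Y * (e * x))) := fun x => by
    rw [← mul_assoc S e x, ← mul_assoc π (S * e) x, hπSe, neg_mul,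
      mul_assoc π (Y * e) x, mul_assoc Y e x]
  have hTSπX : ∀ x : Matrix p p ℂ, T * (S * (π * x)) = -(T * (Y * (π * x))) := fun x => by
    rw [← mul_assoc S π x, ← mul_assoc T (S * π) x, hTSπ, neg_mul,
      mul_assoc T (Y * π) x, mul_assoc Y π x]
  have hSπYeX : ∀ x : Matrix p p ℂ, S * (π * (Y * (e * x))) = 0 := fun x => by
    rw [← mul_assoc Y e x, ← mul_assoc π (Y * e) x, ← mul_assoc S (π * (Y * e)) x, hSπYe, zero_mul]
  have hTYπYeX : ∀ x : Matrix p p ℂ, T * (Y * (π * (Y * (e * x)))) = 0 := fun x => by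
    rw [← mul_assoc Y e x, ← mul_assoc π (Y * e) x, ← mul_assoc Y (π * (Y * e)) x,
      ← mul_assoc T (Y * (π * (Y * e))) x, hTYπYe, zero_mul]
  have hSπYT : S * (π * (Y * T)) = 0 := by
    conv_lhs => rw [show T = e * T from heT.symm]
    exact hSπYeX T
  have hSπYTX : ∀ x : Matrix p p ℂ, S * (π * (Y * (T * x))) = 0 := fun x => by
    rw [← mul_assoc Y T x, ← mul_assoc π (Y * T) x, ← mul_assoc S (π * (Y * T)) x, hSπYT, zero_mul]
  -- Drazin data for P = S*e with candidate X = (1 - π*Y*T)*T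
  have hI2 : (S * e) * ((1 - π * Y * T) * T) = ((1 - π * Y * T) * T) * (S * e) := by
    simp only [mul_sub, sub_mul, mul_add, add_mul, mul_one, one_mul, mul_zero, zero_mul,
      mul_neg, neg_mul, neg_neg, neg_zero, sub_zero, zero_sub, add_zero, zero_add, mul_assoc,
      heeX, heπX, hπeX, hππX, hTeX, heTX, hTπX, hπTX, hTSeX, hSTX, hπSeX, hTSπX, hSπYeX,
      hTYπYeX, hSπYTX, hee, heπ2, hπe2, hππ2, hTe, heT, hTπ2, hπT2, hTSe, hST2, hπSe, hTSπ,
      hSπYe, hTYπYe, hSπYT]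
  have hI1 : ((1 - π * Y * T) * T) * (S * e) * ((1 - π * Y * T) * T) = (1 - π * Y * T) * T := by
    simp only [mul_sub, sub_mul, mul_add, add_mul, mul_one, one_mul, mul_zero, zero_mul,
      mul_neg, neg_mul, neg_neg, neg_zero, sub_zero, zero_sub, add_zero, zero_add, mul_assoc,
      heeX, heπX, hπeX, hππX, hTeX, heTX, hTπX, hπTX, hTSeX, hSTX, hπSeX, hTSπX, hSπYeX,
      hTYπYeX, hSπYTX, hee, heπ2, hπe2, hππ2, hTe, heT, hTπ2, hπT2, hTSe, hST2, hπSe, hTSπ,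
      hSπYe, hTYπYe, hSπYT]
  have hI3 : (S * e) ^ (1 + 1) * ((1 - π * Y * T) * T) = (S * e) ^ 1 := by
    rw [pow_succ, pow_one]
    simp only [mul_sub, sub_mul, mul_add, add_mul, mul_one, one_mul, mul_zero, zero_mul,
      mul_neg, neg_mul, neg_neg, neg_zero, sub_zero, zero_sub, add_zero, zero_add, mul_assoc,
      heeX, heπX, hπeX, hππX, hTeX, heTX, hTπX, hπTX, hTSeX, hSTX, hπSeX, hTSπX, hSπYeX,
      hTYπYeX, hSπYTX, hee, heπ2, hπe2, hππ2, hTe, heT, hTπ2, hπT2, hTSe, hST2, hπSe, hTSπ,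
      hSπYe, hTYπYe, hSπYT]
  have hI4 : (S * π) * (S * e) = 0 := by
    rw [mul_assoc S π (S * e), hπSe, mul_neg, hSπYe, neg_zero]
  have hI5 : (S * π) * ((1 - π * Y * T) * T) = 0 := by
    simp only [mul_sub, sub_mul, mul_add, add_mul, mul_one, one_mul, mul_zero, zero_mul,
      mul_neg, neg_mul, neg_neg, neg_zero, sub_zero, zero_sub, add_zero, zero_add, mul_assoc,
      heeX, heπX, hπeX, hππX, hTeX, heTX, hTπX, hπTX, hTSeX, hSTX, hπSeX, hTSπX, hSπYeX,
      hTYπYeX, hSπYTX, hee, heπ2, hπe2, hππ2, hTe, heT, hTπ2, hπT2, hTSe, hST2, hπSe, hTSπ,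
      hSπYe, hTYπYe, hSπYT]
  have hPN : S * e + S * π = S := by rw [← mul_add, hσ, mul_one]
  have hD := lemA_s9 (S * e) (S * π) ((1 - π * Y * T) * T) t' 1 hI1 hI2 hI3 hI4 hI5 hnil
  rw [hPN] at hD
  -- now rewrite the sum into the required form
  have hTW : ∀ k, T ^ (k + 1) * (1 - π * Y * T) = T ^ (k + 1) := by
    intro k
    have hz : T ^ (k + 1) * (π * Y * T) = 0 := by
      rw [pow_succ, mul_assoc, mul_assoc π Y T, hTπX, mul_zero]
    rw [mul_sub, mul_one, hz, sub_zero]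
  have Xpow : ∀ i, ((1 - π * Y * T) * T) ^ (i + 1) = (1 - π * Y * T) * T ^ (i + 1) := by
    intro i; induction i with
    | zero => rw [pow_one, pow_one]
    | succ i ih =>
      rw [pow_succ, ih, mul_assoc, ← mul_assoc (T ^ (i + 1)) (1 - π * Y * T) T, hTW,
        ← pow_succ]
  have auxSe : ∀ k, S ^ (k + 1) * e = (S * e) ^ (k + 1) := by
    intro k; induction k with
    | zero => rw [pow_one, pow_one]
    | succ k ih =>
      have h10 : S * (S * e) ^ (k + 1) = (S * e) * (S * e) ^ (k + 1) := by
        have h9 : (S - S * e) * (S * e) ^ (k + 1) = 0 := by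
          have h8 : S - S * e = S * π := by rw [hπ, mul_sub, mul_one]
          rw [h8, pow_succ' (S * e) k, ← mul_assoc, hI4, zero_mul]
        rw [sub_mul] at h9
        exact sub_eq_zero.mp h9
      rw [pow_succ' S (k + 1), mul_assoc, ih, h10, ← pow_succ']
  have auxTY : ∀ j k, T ^ (j + 1) * (Y * (π * (S ^ (k + 1) * e))) = 0 := by
    intro j k
    rw [auxSe k, pow_succ' (S * e) k, mul_assoc S e ((S * e) ^ k), hπSeX, mul_neg, mul_neg,
      pow_succ T j, mul_assoc, hTYπYeX, mul_zero, neg_zero]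
  have key : ∀ k, T ^ (k + 2) * (S * π) ^ (k + 1) = -(T ^ (k + 2) * (Y * (π * S ^ k))) := by
    intro k; induction k with
    | zero =>
      rw [pow_one, pow_zero, mul_one, pow_two, mul_assoc, hTSπ, mul_neg, mul_assoc]
    | succ k ih =>
      rw [pow_succ (S * π) (k + 1), pow_succ' T (k + 2), mul_assoc T (T ^ (k + 2)),
        ← mul_assoc (T ^ (k + 2)) ((S * π) ^ (k + 1)) (S * π), ih, neg_mul, mul_neg,
        mul_assoc (T ^ (k + 2)) (Y * (π * S ^ k)) (S * π),
        mul_assoc Y (π * S ^ k) (S * π), mul_assoc π (S ^ k) (S * π),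
        ← mul_assoc (S ^ k) S π, ← pow_succ]
      -- now : -(T * (T^(k+2) * (Y * (π * (S^(k+1) * π))))) = -(T^(k+3) * (Y * (π * S^(k+1))))
      have hsplit : S ^ (k + 1) * π = S ^ (k + 1) - S ^ (k + 1) * e := by
        rw [hπ, mul_sub, mul_one]
      rw [hsplit, mul_sub, mul_sub, mul_sub, mul_sub]
      -- kill the correction term
      have hkill : T * (T ^ (k + 2) * (Y * (π * (S ^ (k + 1) * e)))) = 0 := by
        rw [← mul_assoc T (T ^ (k + 2)), ← pow_succ']
        have h := auxTY (k + 2) k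
        rw [show k + 2 + 1 = k + 1 + 2 from by omega] at h
        exact h
      rw [hkill, sub_zero, ← mul_assoc T (T ^ (k + 2)), ← pow_succ']
  have hXf : (∑ i ∈ Finset.range (t' + 1), ((1 - π * Y * T) * T) ^ (i + 1) * (S * π) ^ i)
      = -(∑ i ∈ Finset.range t', (1 - π * Y * T) * T ^ (i + 2) * Y * π * S ^ i)
        + T - π * Y * T ^ 2 := by
    rw [Finset.sum_range_succ']
    have hterm : ∀ i ∈ Finset.range t',
        ((1 - π * Y * T) * T) ^ (i + 1 + 1) * (S * π) ^ (i + 1)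
          = -((1 - π * Y * T) * T ^ (i + 2) * Y * π * S ^ i) := by
      intro i _
      rw [Xpow (i + 1), mul_assoc (1 - π * Y * T) (T ^ (i + 1 + 1)) ((S * π) ^ (i + 1))]
      rw [show i + 1 + 1 = i + 2 from rfl, key i, mul_neg]
      simp only [mul_assoc]
    rw [Finset.sum_congr rfl hterm, Finset.sum_neg_distrib]
    have hlast : ((1 - π * Y * T) * T) ^ (0 + 1) * (S * π) ^ 0 = T - π * Y * T ^ 2 := by
      rw [zero_add, pow_one, pow_zero, mul_one, sub_mul, one_mul, pow_two,
        ← mul_assoc (π * Y) T T]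
    rw [hlast]
    abel
  rw [hXf] at hD
  exact hD


theorem stmt9
    {p q : Type*} [Fintype p] [DecidableEq p] [Fintype q] [DecidableEq q]
    (A AD : Matrix p p ℂ) (D DD : Matrix q q ℂ)
    (B : Matrix q p ℂ) (C : Matrix p q ℂ)
    (hA : IsDrazinInverse A AD) (hD : IsDrazinInverse D DD)
    (Y S Ae Aπ SAe : Matrix p p ℂ)
    (hY : Y = C * DD * B) (hS : S = A - Y)
    (hAe : Ae = A * AD) (hAπ : Aπ = 1 - A * AD)
    (hSAe : SAe = Ae * S * Ae)
    (Z ZD : Matrix q q ℂ) (hZdef : Z = D - B * AD * C)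
    (hZ : IsDrazinInverse Z ZD)
    (K : Matrix p q ℂ) (H : Matrix q p ℂ)
    (hK : K = AD * C) (hH : H = B * AD)
    (T : Matrix p p ℂ) (hT : T = AD + K * ZD * H)
    (hST : SAe * T = A * AD)
    (t : ℕ) (hnil : (S * Aπ) ^ t = 0)
    (hcond : S * Aπ * Y * Ae = 0) :
    IsDrazinInverse S
      (-(∑ i ∈ Finset.range (t - 1),
          (1 - Aπ * Y * T) * T ^ (i + 2) * Y * Aπ * S ^ i)
        + T - Aπ * Y * T ^ 2) := by
  rcases Nat.eq_zero_or_pos t with ht0 | htpos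
  · -- degenerate case : 1 = 0, the ring is trivial
    subst ht0
    have h10 : (1 : Matrix p p ℂ) = 0 := by simpa using hnil
    have hz : ∀ M : Matrix p p ℂ, M = 0 := fun M => by
      calc M = M * 1 := (mul_one M).symm
        _ = M * 0 := by rw [h10]
        _ = 0 := mul_zero M
    exact ⟨(hz _).trans (hz _).symm, (hz _).trans (hz _).symm, 0, (hz _).trans (hz _).symm⟩
  obtain ⟨t', rfl⟩ : ∃ t', t = t' + 1 := ⟨t - 1, by omega⟩
  obtain ⟨hA1, hA2, -⟩ := hA
  -- hA1 : AD * A * AD = AD, hA2 : A * AD = AD * A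
  have hee : (A * AD) * (A * AD) = A * AD := by
    rw [mul_assoc, ← mul_assoc AD A AD, hA1]
  have heAD : (A * AD) * AD = AD := by rw [hA2]; exact hA1
  have hADe : AD * (A * AD) = AD := by rw [← mul_assoc]; exact hA1
  have heA : (A * AD) * A = A * (A * AD) := by rw [mul_assoc, ← hA2]
  have hT' : T = AD + AD * (C * (ZD * (B * AD))) := by
    rw [hT, hK, hH]; simp only [Matrix.mul_assoc]
  have heT : (A * AD) * T = T := by
    rw [hT', mul_add, ← mul_assoc (A * AD) AD (C * (ZD * (B * AD))), heAD]
  have hTe : T * (A * AD) = T := by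
    rw [hT', add_mul]
    simp only [Matrix.mul_assoc]
    rw [hADe]
  have heSeT : (A * AD) * S * (A * AD) * T = A * AD := by
    have h := hST
    rw [hSAe, hAe] at h
    exact h
  have heAπ : (A * AD) * Aπ = 0 := by rw [hAπ, mul_sub, mul_one, hee, sub_self]
  have hπAe : Aπ * (A * (A * AD)) = 0 := by
    rw [hAπ, sub_mul, one_mul, ← mul_assoc (A * AD) A (A * AD), heA,
      mul_assoc A (A * AD) (A * AD), hee, sub_self]
  have hπSe : Aπ * (S * (A * AD)) = -(Aπ * (Y * (A * AD))) := by
    rw [hS, sub_mul, mul_sub, hπAe, zero_sub]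
  have heAAπ : (A * AD) * (A * Aπ) = 0 := by
    rw [← mul_assoc (A * AD) A Aπ, heA, mul_assoc A (A * AD) Aπ, heAπ, mul_zero]
  have hTAπ : T * (A * Aπ) = 0 := by
    rw [← hTe, mul_assoc, heAAπ, mul_zero]
  have hTSπ : T * (S * Aπ) = -(T * (Y * Aπ)) := by
    rw [hS, sub_mul, mul_sub, hTAπ, zero_sub]
  have hSπYe : S * (Aπ * (Y * (A * AD))) = 0 := by
    have h := hcond
    rw [hAe, mul_assoc, mul_assoc] at h
    exact h
  have hADAπ : AD * (A * Aπ) = 0 := by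
    rw [← mul_assoc AD A Aπ, ← hA2, heAπ]
  have hADYw : AD * (Y * (Aπ * (Y * (A * AD)))) = 0 := by
    have h0 : AD * (S * (Aπ * (Y * (A * AD)))) = 0 := by rw [hSπYe, mul_zero]
    rw [hS, sub_mul, mul_sub] at h0
    have h1 : AD * (A * (Aπ * (Y * (A * AD)))) = 0 := by
      rw [← mul_assoc A Aπ (Y * (A * AD)), ← mul_assoc AD (A * Aπ) (Y * (A * AD)),
        hADAπ, zero_mul]
    rw [h1, zero_sub, neg_eq_zero] at h0
    exact h0
  have hTYπYe : T * (Y * (Aπ * (Y * (A * AD)))) = 0 := by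
    rw [← hTe, mul_assoc, mul_assoc A AD (Y * (Aπ * (Y * (A * AD)))), hADYw, mul_zero, mul_zero]
  have hmain := absMain S Y T (A * AD) Aπ t' hAπ hee heT hTe heSeT hπSe hTSπ hTYπYe hSπYe hnil
  simpa using hmain
end

section
/- Suppose S_{A^e}*T = A*A^D, that S*A^π is t-nilpotent, i.e. (S*A^π)^t = 0, and that S*A^e*Y*A^π = 0. Then S has a Drazin inverse, given by S^D = −Σ_{i=0}^{t−1} S^i*A^π*Y*T^{i+2} + T. -/
open Matrix Finset

theorem stmt10
    {p q : Type*} [Fintype p] [DecidableEq p] [Fintype q] [DecidableEq q]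
    (A AD : Matrix p p ℂ) (D DD : Matrix q q ℂ)
    (B : Matrix q p ℂ) (C : Matrix p q ℂ)
    (hA : IsDrazinInverse A AD) (hD : IsDrazinInverse D DD)
    (Y S Ae Aπ SAe : Matrix p p ℂ)
    (hY : Y = C * DD * B) (hS : S = A - Y)
    (hAe : Ae = A * AD) (hAπ : Aπ = 1 - A * AD)
    (hSAe : SAe = Ae * S * Ae)
    (Z ZD : Matrix q q ℂ) (hZdef : Z = D - B * AD * C)
    (hZ : IsDrazinInverse Z ZD)
    (K : Matrix p q ℂ) (H : Matrix q p ℂ)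
    (hK : K = AD * C) (hH : H = B * AD)
    (T : Matrix p p ℂ) (hT : T = AD + K * ZD * H)
    (hST : SAe * T = A * AD)
    (t : ℕ) (hnil : (S * Aπ) ^ t = 0)
    (hcond : S * Ae * Y * Aπ = 0) :
    IsDrazinInverse S
      (-(∑ i ∈ Finset.range t, S ^ i * Aπ * Y * T ^ (i + 2)) + T) := by
  obtain ⟨hA1, hA2, -⟩ := hA
  have hA1' : AD * (A * AD) = AD := by rw [← mul_assoc, hA1]
  have hPP : Ae * Ae = Ae := by rw [hAe, mul_assoc, hA1']
  have hPAD : Ae * AD = AD := by rw [hAe, hA2]; exact hA1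
  have hADP : AD * Ae = AD := by rw [hAe]; exact hA1'
  have hπ : Aπ = 1 - Ae := by rw [hAπ, hAe]
  have hsum : Ae + Aπ = 1 := by rw [hπ]; abel
  have hAeπ : Ae * Aπ = 0 := by rw [hπ, mul_sub, mul_one, hPP, sub_self]
  have hπAe : Aπ * Ae = 0 := by rw [hπ, sub_mul, one_mul, hPP, sub_self]
  have hππ : Aπ * Aπ = Aπ := by
    nth_rewrite 1 [hπ]
    rw [sub_mul, one_mul, hAeπ, sub_zero]
  have hAP : A * Ae = Ae * A := by rw [hAe, hA2, ← mul_assoc, hA2]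
  have hPAπ : Ae * (A * Aπ) = 0 := by rw [← mul_assoc, ← hAP, mul_assoc, hAeπ, mul_zero]
  have hπAP : Aπ * (A * Ae) = 0 := by rw [hAP, ← mul_assoc, hπAe, zero_mul]
  have hPT : Ae * T = T := by simp only [hT, hK, hH, mul_add, ← Matrix.mul_assoc, hPAD]
  have hTP : T * Ae = T := by simp only [hT, hK, hH, add_mul, Matrix.mul_assoc, hADP]
  have hπT : Aπ * T = 0 := by rw [hπ, sub_mul, one_mul, hPT, sub_self]
  have hTπ : T * Aπ = 0 := by rw [hπ, mul_sub, mul_one, hTP, sub_self]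
  have hPSPT : Ae * S * Ae * T = Ae := by rw [← hSAe, hST, hAe]
  have hST' : Ae * (S * T) = Ae := by
    rw [mul_assoc (Ae * S), hPT, mul_assoc] at hPSPT
    exact hPSPT
  have hUV : (Ae * S * Ae + Aπ) * (T + Aπ) = 1 := by
    have h1 : Ae * S * Ae * T = Ae := by rw [mul_assoc (Ae * S), hPT, mul_assoc]; exact hST'
    have h2 : Ae * S * Ae * Aπ = 0 := by rw [mul_assoc, hAeπ, mul_zero]
    rw [add_mul, mul_add, mul_add, h1, h2, hπT, hππ, add_zero, zero_add, hsum]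
  have hVU : (T + Aπ) * (Ae * S * Ae + Aπ) = 1 := mul_eq_one_comm.mp hUV
  have hTSP : T * (S * Ae) = Ae := by
    rw [add_mul, mul_add, mul_add, hTπ, hππ, mul_assoc Ae S Ae, ← mul_assoc T Ae, hTP,
      ← mul_assoc Aπ Ae, hπAe, zero_mul, add_zero, zero_add] at hVU
    have h2 : T * (S * Ae) = 1 - Aπ := eq_sub_of_add_eq hVU
    rw [hπ, sub_sub_cancel] at h2
    exact h2
  have hPYπ : Ae * (Y * Aπ) = 0 := by
    calc Ae * (Y * Aπ) = T * (S * Ae) * (Y * Aπ) := by rw [hTSP]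
      _ = T * (S * Ae * Y * Aπ) := by rw [mul_assoc T, mul_assoc (S * Ae)]
      _ = 0 := by rw [hcond, mul_zero]
  have hPSπ : Ae * (S * Aπ) = 0 := by rw [hS, sub_mul, mul_sub, hPAπ, hPYπ, sub_zero]
  set E := S * Aπ with hEdef
  set G := Aπ * (S * Ae) with hGdef
  have hπE : Aπ * E = E := by
    nth_rewrite 1 [hπ]
    rw [sub_mul, one_mul, hPSπ, sub_zero]
  have hEπ : E * Aπ = E := by rw [hEdef, mul_assoc, hππ]
  have hπG : Aπ * G = G := by rw [hGdef, ← mul_assoc, hππ]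
  have hGP : G * Ae = G := by rw [hGdef, mul_assoc Aπ, mul_assoc S, hPP]
  have hπYP : Aπ * (Y * Ae) = -G := by
    have h0 : Aπ * (A * Ae) = 0 := hπAP
    have hA' : A = S + Y := by rw [hS]; abel
    rw [hA', add_mul, mul_add, ← hGdef] at h0
    exact eq_neg_of_add_eq_zero_right h0
  have hTE : T * E = 0 := by rw [← hπE, ← mul_assoc, hTπ, zero_mul]
  have hTS : T * S = Ae := by
    calc T * S = T * (S * Ae + S * Aπ) := by rw [← mul_add, hsum, mul_one]
      _ = T * (S * Ae) + T * E := by rw [mul_add, ← hEdef]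
      _ = Ae := by rw [hTSP, hTE, add_zero]
  have hGT : G * T = Aπ * (S * T) := by rw [hGdef, mul_assoc, mul_assoc, hPT]
  have hSTfull : S * T = Ae + G * T := by
    calc S * T = Ae * (S * T) + Aπ * (S * T) := by rw [← add_mul, hsum, one_mul]
      _ = Ae + G * T := by rw [hST', hGT]
  -- key lemma: left-multiplication by S on π-invariant matrices equals mult. by E
  have key : ∀ (i : ℕ) (Q : Matrix p p ℂ), Aπ * Q = Q → S ^ i * Q = E ^ i * Q := by
    intro i
    induction i with
    | zero => intro Q hQ; simp
    | succ n ih =>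
      intro Q hQ
      have hSQ : S * Q = E * Q := by
        calc S * Q = S * (Aπ * Q) := by rw [hQ]
          _ = S * Aπ * Q := (mul_assoc S Aπ Q).symm
          _ = E * Q := by rw [← hEdef]
      calc S ^ (n + 1) * Q = S ^ n * (S * Q) := by rw [pow_succ S n, mul_assoc (S ^ n) S Q]
        _ = S ^ n * (E * Q) := by rw [hSQ]
        _ = E ^ n * (E * Q) := ih (E * Q) (by rw [← mul_assoc Aπ E Q, hπE])
        _ = E ^ (n + 1) * Q := by rw [pow_succ E n, mul_assoc (E ^ n) E Q]
  have hπterm : ∀ (i : ℕ) (R : Matrix p p ℂ), Aπ * (E ^ i * (G * R)) = E ^ i * (G * R) := by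
    intro i R
    induction i with
    | zero => rw [pow_zero, one_mul, ← mul_assoc, hπG]
    | succ n ih =>
      rw [pow_succ' E n, mul_assoc E, ← mul_assoc Aπ E, hπE]
  have hterm : ∀ i : ℕ, S ^ i * Aπ * Y * T ^ (i + 2) = -(E ^ i * (G * T ^ (i + 2))) := by
    intro i
    have e2 : T ^ (i + 2) = T * T ^ (i + 1) := pow_succ' T (i + 1)
    have hAeT : Ae * T ^ (i + 2) = T ^ (i + 2) := by rw [e2, ← mul_assoc, hPT]
    have h2 : Aπ * (Y * T ^ (i + 2)) = -(G * T ^ (i + 2)) := by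
      rw [← hAeT, ← mul_assoc Y, ← mul_assoc Aπ, hπYP, ← mul_assoc G, hGP, neg_mul]
    rw [key i Aπ hππ, mul_assoc, mul_assoc, h2, mul_neg]
  have hXeq : -(∑ i ∈ Finset.range t, S ^ i * Aπ * Y * T ^ (i + 2)) + T
      = T + ∑ i ∈ Finset.range t, E ^ i * (G * T ^ (i + 2)) := by
    have h1 : ∑ i ∈ Finset.range t, S ^ i * Aπ * Y * T ^ (i + 2)
        = -∑ i ∈ Finset.range t, E ^ i * (G * T ^ (i + 2)) := by
      rw [← Finset.sum_neg_distrib]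
      exact Finset.sum_congr rfl fun i _ => hterm i
    rw [h1, neg_neg, add_comm]
  have hSX : S * (T + ∑ i ∈ Finset.range t, E ^ i * (G * T ^ (i + 2)))
      = Ae + ∑ i ∈ Finset.range t, E ^ i * (G * T ^ (i + 1)) := by
    rw [mul_add, hSTfull, Finset.mul_sum]
    have hterm2 : ∀ i : ℕ, S * (E ^ i * (G * T ^ (i + 2))) = E ^ (i + 1) * (G * T ^ (i + 2)) := by
      intro i
      have h := key 1 (E ^ i * (G * T ^ (i + 2))) (hπterm i _)
      rw [pow_one, pow_one] at h
      rw [h, ← mul_assoc, ← pow_succ']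
    rw [Finset.sum_congr rfl fun i _ => hterm2 i]
    have h1 : ∑ i ∈ Finset.range (t + 1), E ^ i * (G * T ^ (i + 1))
        = (∑ i ∈ Finset.range t, E ^ (i + 1) * (G * T ^ (i + 2))) + G * T := by
      have h := Finset.sum_range_succ' (fun i => E ^ i * (G * T ^ (i + 1))) t
      simpa using h
    have h2 : ∑ i ∈ Finset.range (t + 1), E ^ i * (G * T ^ (i + 1))
        = ∑ i ∈ Finset.range t, E ^ i * (G * T ^ (i + 1)) := by
      rw [Finset.sum_range_succ, hnil, zero_mul, add_zero]
    have h3 : (∑ i ∈ Finset.range t, E ^ (i + 1) * (G * T ^ (i + 2))) + G * T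
        = ∑ i ∈ Finset.range t, E ^ i * (G * T ^ (i + 1)) := by rw [← h1, h2]
    rw [← h3]
    abel
  have hXS : (T + ∑ i ∈ Finset.range t, E ^ i * (G * T ^ (i + 2))) * S
      = Ae + ∑ i ∈ Finset.range t, E ^ i * (G * T ^ (i + 1)) := by
    rw [add_mul, hTS, Finset.sum_mul]
    have hterm3 : ∀ i : ℕ, E ^ i * (G * T ^ (i + 2)) * S = E ^ i * (G * T ^ (i + 1)) := by
      intro i
      have e2 : T ^ (i + 2) = T ^ (i + 1) * T := pow_succ T (i + 1)
      have e1 : T ^ (i + 1) = T ^ i * T := pow_succ T i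
      have hTpow : T ^ (i + 1) * Ae = T ^ (i + 1) := by rw [e1, mul_assoc, hTP]
      rw [mul_assoc (E ^ i) (G * T ^ (i + 2)) S, mul_assoc G (T ^ (i + 2)) S, e2,
        mul_assoc (T ^ (i + 1)) T S, hTS, hTpow]
    rw [Finset.sum_congr rfl fun i _ => hterm3 i]
  have hπW : ∀ R : Matrix p p ℂ,
      Aπ * (∑ i ∈ Finset.range t, E ^ i * (G * (T * R) ^ (i + 1))) = 0 → True := fun _ _ => trivial
  -- components of the Drazin inverse property
  have hcomm : S * (T + ∑ i ∈ Finset.range t, E ^ i * (G * T ^ (i + 2)))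
      = (T + ∑ i ∈ Finset.range t, E ^ i * (G * T ^ (i + 2))) * S := by rw [hSX, hXS]
  have hTW : T * (∑ i ∈ Finset.range t, E ^ i * (G * T ^ (i + 2))) = 0 := by
    rw [Finset.mul_sum]
    have : ∀ i : ℕ, T * (E ^ i * (G * T ^ (i + 2))) = 0 := by
      intro i
      rw [← hπterm i, ← mul_assoc, hTπ, zero_mul]
    rw [Finset.sum_congr rfl fun i _ => this i, Finset.sum_const_zero]
  have hAeW : Ae * (∑ i ∈ Finset.range t, E ^ i * (G * T ^ (i + 2))) = 0 := by
    rw [Finset.mul_sum]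
    have : ∀ i : ℕ, Ae * (E ^ i * (G * T ^ (i + 2))) = 0 := by
      intro i
      rw [← hπterm i, ← mul_assoc, hAeπ, zero_mul]
    rw [Finset.sum_congr rfl fun i _ => this i, Finset.sum_const_zero]
  have hMT : (∑ i ∈ Finset.range t, E ^ i * (G * T ^ (i + 1))) * T
      = ∑ i ∈ Finset.range t, E ^ i * (G * T ^ (i + 2)) := by
    rw [Finset.sum_mul]
    have : ∀ i : ℕ, E ^ i * (G * T ^ (i + 1)) * T = E ^ i * (G * T ^ (i + 2)) := by
      intro i
      have e2 : T ^ (i + 2) = T ^ (i + 1) * T := pow_succ T (i + 1)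
      rw [mul_assoc, mul_assoc G, ← e2]
    rw [Finset.sum_congr rfl fun i _ => this i]
  have hMW : (∑ i ∈ Finset.range t, E ^ i * (G * T ^ (i + 1)))
      * (∑ i ∈ Finset.range t, E ^ i * (G * T ^ (i + 2))) = 0 := by
    rw [Finset.sum_mul]
    have : ∀ i : ℕ, E ^ i * (G * T ^ (i + 1))
        * (∑ j ∈ Finset.range t, E ^ j * (G * T ^ (j + 2))) = 0 := by
      intro i
      have e1 : T ^ (i + 1) = T ^ i * T := pow_succ T i
      rw [mul_assoc (E ^ i) (G * T ^ (i + 1)) _, mul_assoc G (T ^ (i + 1)) _, e1,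
        mul_assoc (T ^ i) T _, hTW, mul_zero, mul_zero, mul_zero]
    rw [Finset.sum_congr rfl fun i _ => this i, Finset.sum_const_zero]
  have hπM : Aπ * (∑ i ∈ Finset.range t, E ^ i * (G * T ^ (i + 1)))
      = ∑ i ∈ Finset.range t, E ^ i * (G * T ^ (i + 1)) := by
    rw [Finset.mul_sum]
    exact Finset.sum_congr rfl fun i _ => hπterm i _
  rw [hXeq]
  refine ⟨?_, hcomm, t, ?_⟩
  · -- X * S * X = X
    rw [hXS, add_mul, mul_add, mul_add, hPT, hAeW, hMT, hMW, add_zero, add_zero]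
  · -- S ^ (t+1) * X = S ^ t
    have e : S ^ (t + 1) = S ^ t * S := pow_succ S t
    rw [e, mul_assoc, hSX, mul_add]
    have hSM : S ^ t * (∑ i ∈ Finset.range t, E ^ i * (G * T ^ (i + 1))) = 0 := by
      rw [key t _ hπM, hnil, zero_mul]
    have hSπ0 : S ^ t * Aπ = 0 := by rw [key t Aπ hππ, hnil, zero_mul]
    have hSP : S ^ t * Ae = S ^ t := by
      have h := congrArg (fun X => S ^ t * X) hsum
      simp only [mul_add, mul_one] at h
      rw [hSπ0, add_zero] at h
      exact h
    rw [hSM, add_zero, hSP]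
end
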